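/- arXiv:2509.22531 — 8 statements merged into one kernel-verified Lean document; each statement's English description precedes it below -/
import Mathlib

section
/- Fix x̄ ∈ {0,1}. Then E[ξ_x̄(Z,X,C)·Y] = E[π_x̄(X,C)·r(Z,C)] = E[s_x̄(X,C)] = E[τ_x̄(C)], i.e. all three reweighted expectations equal the expectation of the conditional front-door functional τ_x̄(C). -/
/-!
Once `Y` is replaced by `m(Z, X, C)` (possible because `ξ(Z, X, C)` is `σ(Z, X, C)`-measurable),
every identity reduces to the tower property over a binary variable: if `Z ∈ {0,1}` and
`p(z, T)` is a version of `P(Z = z | T)`, then `E[φ(Z, T)] = E[φ(0, T) p(0, T) + φ(1, T) p(1, T)]`.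
Applying it to `Z` given `(X, C)` and then to `X` given `C` turns each reweighted expectation into
`E[τ(C)]`: the weights `ξ` and `π` cancel exactly the propensities `q(z, X, C)` and `e(x, C)`
that these steps produce. Positivity keeps `ξ` and `π` bounded and, read backwards through the
same tower step, makes every `m(z, x, C)` integrable, which the exchange of sums and integrals
requires.
-/

open MeasureTheory
open scoped ENNReal

noncomputable section

variable {𝒞 : Type*}

/-- ξ_x̄(z,x,c) = q(z,x̄,c)/q(z,x,c). -/
def fdXi (q : ℝ → ℝ → 𝒞 → ℝ) (xb z x : ℝ) (c : 𝒞) : ℝ := q z xb c / q z x c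

/-- π_x̄(x,c) = 1{x = x̄}/e(x,c). -/
def fdPi (e : ℝ → 𝒞 → ℝ) (xb x : ℝ) (c : 𝒞) : ℝ := (if x = xb then (1 : ℝ) else 0) / e x c

/-- r(z,c) = Σ_{x∈{0,1}} m(z,x,c)·e(x,c). -/
def fdR (m : ℝ → ℝ → 𝒞 → ℝ) (e : ℝ → 𝒞 → ℝ) (z : ℝ) (c : 𝒞) : ℝ :=
  m z 0 c * e 0 c + m z 1 c * e 1 c

/-- ν_{m q e}(x,c) = Σ_{z∈{0,1}} r(z,c)·q(z,x,c). -/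
def fdNu (m : ℝ → ℝ → 𝒞 → ℝ) (q : ℝ → ℝ → 𝒞 → ℝ) (e : ℝ → 𝒞 → ℝ) (x : ℝ) (c : 𝒞) : ℝ :=
  fdR m e 0 c * q 0 x c + fdR m e 1 c * q 1 x c

/-- s_x̄(x,c) = Σ_{z∈{0,1}} m(z,x,c)·q(z,x̄,c). -/
def fdS (m q : ℝ → ℝ → 𝒞 → ℝ) (xb x : ℝ) (c : 𝒞) : ℝ :=
  m 0 x c * q 0 xb c + m 1 x c * q 1 xb c

/-- τ_x̄(c) = Σ_{z,x∈{0,1}} m(z,x,c)·q(z,x̄,c)·e(x,c). -/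
def fdTau (m q : ℝ → ℝ → 𝒞 → ℝ) (e : ℝ → 𝒞 → ℝ) (xb : ℝ) (c : 𝒞) : ℝ :=
  m 0 0 c * q 0 xb c * e 0 c + m 0 1 c * q 0 xb c * e 1 c +
    m 1 0 c * q 1 xb c * e 0 c + m 1 1 c * q 1 xb c * e 1 c

/-- Front-door pseudo-outcome φ_x̄ built from a nuisance triple (m,e,q). -/
def fdPhi (m : ℝ → ℝ → 𝒞 → ℝ) (e : ℝ → 𝒞 → ℝ) (q : ℝ → ℝ → 𝒞 → ℝ) (xb : ℝ)
    (z x : ℝ) (c : 𝒞) (y : ℝ) : ℝ :=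
  fdXi q xb z x c * (y - m z x c) + fdPi e xb x c * (fdR m e z c - fdNu m q e x c) +
    fdS m q xb x c

theorem fdXi_mul_q {q : ℝ → ℝ → 𝒞 → ℝ} {xb z x : ℝ} {c : 𝒞} (hq : q z x c ≠ 0) :
    fdXi q xb z x c * q z x c = q z xb c :=
  div_mul_cancel₀ _ hq

theorem fdPi_mul_e {e : ℝ → 𝒞 → ℝ} {xb x : ℝ} {c : 𝒞} (he : e x c ≠ 0) :
    fdPi e xb x c * e x c = if x = xb then 1 else 0 :=
  div_mul_cancel₀ _ he

theorem fdNu_self (m q : ℝ → ℝ → 𝒞 → ℝ) (e : ℝ → 𝒞 → ℝ) (xb : ℝ) (c : 𝒞) :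
    fdNu m q e xb c = fdTau m q e xb c := by
  simp only [fdNu, fdR, fdTau]
  ring

section TowerProperty

variable {Ω β : Type*} {mΩ : MeasurableSpace Ω} {P : Measure Ω}

theorem integrable_of_integrable_mul_of_le {f g : Ω → ℝ} {δ : ℝ} (hδ : 0 < δ)
    (hf : AEStronglyMeasurable f P) (hfg : Integrable (fun ω => f ω * g ω) P)
    (hg : ∀ ω, δ ≤ g ω) : Integrable f P := by
  refine (hfg.norm.const_mul δ⁻¹).mono' hf (ae_of_all _ fun ω => ?_)
  have hgω : |g ω| = g ω := abs_of_pos (hδ.trans_le (hg ω))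
  rw [Real.norm_eq_abs, Real.norm_eq_abs, abs_mul, hgω, le_inv_mul_iff₀ hδ, mul_comm]
  exact mul_le_mul_of_nonneg_left (hg ω) (abs_nonneg _)

theorem integrable_comp_of_binary {Z : Ω → ℝ} {F : ℝ → Ω → ℝ} (hZ : Measurable Z)
    (hZ01 : ∀ ω, Z ω = 0 ∨ Z ω = 1) (hF0 : Integrable (F 0) P) (hF1 : Integrable (F 1) P) :
    Integrable (fun ω => F (Z ω) ω) P := by
  have hbdd : ∀ ω, ‖Z ω‖ ≤ 1 ∧ ‖1 - Z ω‖ ≤ 1 := fun ω => by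
    rcases hZ01 ω with h | h <;> simp [h]
  refine ((hF0.mul_bdd (measurable_const.sub hZ).aestronglyMeasurable
    (ae_of_all _ fun ω => (hbdd ω).2)).add (hF1.mul_bdd hZ.aestronglyMeasurable
    (ae_of_all _ fun ω => (hbdd ω).1))).congr (ae_of_all _ fun ω => ?_)
  rcases hZ01 ω with h | h <;> simp [h]

variable [IsFiniteMeasure P]

theorem integrable_mul_and_integral_mul_eq_of_ae_eq_condExp {G : MeasurableSpace Ω}
    (hG : G ≤ mΩ) {f g h : Ω → ℝ} (hf : StronglyMeasurable[G] f)
    (hfg : Integrable (fun ω => f ω * g ω) P) (hg : Integrable g P) (hh : h =ᵐ[P] P[g|G]) :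
    Integrable (fun ω => f ω * h ω) P ∧ ∫ ω, f ω * g ω ∂P = ∫ ω, f ω * h ω ∂P := by
  have key : P[fun ω => f ω * g ω|G] =ᵐ[P] fun ω => f ω * h ω := by
    filter_upwards [condExp_mul_of_stronglyMeasurable_left hf hfg hg, hh] with ω hfgω hω
    rw [hω]
    exact hfgω
  exact ⟨integrable_condExp.congr key, (integral_condExp hG).symm.trans (integral_congr_ae key)⟩

variable [mβ : MeasurableSpace β] {T : Ω → β}

theorem integral_comp_eq_sum_of_ae_eq_condExp_indicator {α : Type*} [MeasurableSpace α]
    [MeasurableSingletonClass α] {Z : Ω → α} {p φ : α → β → ℝ} (hZ : Measurable Z)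
    (hT : Measurable T) {S : Finset α} (hZS : ∀ ω, Z ω ∈ S) (hφ : ∀ z ∈ S, Measurable (φ z))
    (hφZ : Integrable (fun ω => φ (Z ω) (T ω)) P)
    (hp : ∀ z ∈ S, (fun ω => p z (T ω)) =ᵐ[P] P[(Z ⁻¹' {z}).indicator 1 | mβ.comap T]) :
    (∀ z ∈ S, Integrable (fun ω => φ z (T ω) * p z (T ω)) P) ∧
      ∫ ω, φ (Z ω) (T ω) ∂P = ∑ z ∈ S, ∫ ω, φ z (T ω) * p z (T ω) ∂P := by
  have hslice : ∀ z, (fun ω => φ z (T ω) * (Z ⁻¹' {z}).indicator 1 ω)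
      = (Z ⁻¹' {z}).indicator fun ω => φ (Z ω) (T ω) := by
    intro z; ext ω
    by_cases hω : Z ω = z <;> simp [hω]
  have hslice_int : ∀ z, Integrable (fun ω => φ z (T ω) * (Z ⁻¹' {z}).indicator 1 ω) P :=
    fun z => hslice z ▸ hφZ.indicator (hZ (measurableSet_singleton z))
  have hpull : ∀ z ∈ S, Integrable (fun ω => φ z (T ω) * p z (T ω)) P ∧
      ∫ ω, φ z (T ω) * (Z ⁻¹' {z}).indicator 1 ω ∂P = ∫ ω, φ z (T ω) * p z (T ω) ∂P :=
    fun z hz => integrable_mul_and_integral_mul_eq_of_ae_eq_condExp hT.comap_le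
      ((hφ z hz).comp (comap_measurable T)).stronglyMeasurable (hslice_int z)
      ((integrable_const 1).indicator (hZ (measurableSet_singleton z))) (hp z hz)
  refine ⟨fun z hz => (hpull z hz).1, ?_⟩
  calc ∫ ω, φ (Z ω) (T ω) ∂P
      = ∫ ω, ∑ z ∈ S, φ z (T ω) * (Z ⁻¹' {z}).indicator 1 ω ∂P := by
        refine integral_congr_ae (ae_of_all _ fun ω => ?_)
        dsimp only
        rw [Finset.sum_eq_single_of_mem (Z ω) (hZS ω) fun z _ hz => by simp [Ne.symm hz]]
        simp
    _ = ∑ z ∈ S, ∫ ω, φ z (T ω) * (Z ⁻¹' {z}).indicator 1 ω ∂P :=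
        integral_finsetSum S fun z _ => hslice_int z
    _ = ∑ z ∈ S, ∫ ω, φ z (T ω) * p z (T ω) ∂P :=
        Finset.sum_congr rfl fun z hz => (hpull z hz).2

variable {Z : Ω → ℝ} {p φ : ℝ → β → ℝ}

theorem ae_eq_condExp_indicator_of_binary (hT : Measurable T) (hZ : Measurable Z)
    (hZ01 : ∀ ω, Z ω = 0 ∨ Z ω = 1) (hp1 : (fun ω => p 1 (T ω)) =ᵐ[P] P[Z | mβ.comap T])
    (hp0 : ∀ t, p 0 t = 1 - p 1 t) {z : ℝ} (hz : z = 0 ∨ z = 1) :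
    (fun ω => p z (T ω)) =ᵐ[P] P[(Z ⁻¹' {z}).indicator 1 | mβ.comap T] := by
  have hind1 : (Z ⁻¹' {1}).indicator 1 = Z := by
    ext ω; rcases hZ01 ω with h | h <;> simp [h]
  rcases hz with rfl | rfl
  · have hind0 : (Z ⁻¹' {0}).indicator 1 = (fun _ => (1 : ℝ)) - Z := by
      ext ω; rcases hZ01 ω with h | h <;> simp [h]
    have hZint : Integrable Z P :=
      hind1 ▸ (integrable_const 1).indicator (hZ (measurableSet_singleton 1))
    rw [hind0]
    filter_upwards [condExp_sub (integrable_const 1) hZint (mβ.comap T), hp1] with ω hsub h1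
    rw [hsub, Pi.sub_apply, condExp_const hT.comap_le, hp0, h1]
  · rwa [hind1]

theorem integral_comp_eq_of_binary (hT : Measurable T) (hZ : Measurable Z)
    (hZ01 : ∀ ω, Z ω = 0 ∨ Z ω = 1) (hp1 : (fun ω => p 1 (T ω)) =ᵐ[P] P[Z | mβ.comap T])
    (hp0 : ∀ t, p 0 t = 1 - p 1 t) (hφ : ∀ z, Measurable (φ z))
    (hφZ : Integrable (fun ω => φ (Z ω) (T ω)) P) :
    (∀ z, z = 0 ∨ z = 1 → Integrable (fun ω => φ z (T ω) * p z (T ω)) P) ∧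
      ∫ ω, φ (Z ω) (T ω) ∂P = ∫ ω, (φ 0 (T ω) * p 0 (T ω) + φ 1 (T ω) * p 1 (T ω)) ∂P := by
  have hmem : ∀ z : ℝ, z ∈ ({0, 1} : Finset ℝ) ↔ z = 0 ∨ z = 1 := by simp
  obtain ⟨hint, hsum⟩ := integral_comp_eq_sum_of_ae_eq_condExp_indicator hZ hT
    (fun ω => (hmem _).2 (hZ01 ω)) (fun z _ => hφ z) hφZ
    fun z hz => ae_eq_condExp_indicator_of_binary hT hZ hZ01 hp1 hp0 ((hmem z).1 hz)
  have hint' : ∀ z, z = 0 ∨ z = 1 → Integrable (fun ω => φ z (T ω) * p z (T ω)) P :=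
    fun z hz => hint z ((hmem z).2 hz)
  refine ⟨hint', ?_⟩
  rw [hsum, Finset.sum_pair zero_ne_one, integral_add (hint' 0 (.inl rfl)) (hint' 1 (.inr rfl))]

end TowerProperty

structure IsFrontDoorNuisance {Ω : Type*} [MeasurableSpace Ω] [MeasurableSpace 𝒞]
    (P : Measure Ω) (C : Ω → 𝒞) (X Z Y : Ω → ℝ) (m : ℝ → ℝ → 𝒞 → ℝ) (e : ℝ → 𝒞 → ℝ)
    (q : ℝ → ℝ → 𝒞 → ℝ) (δ : ℝ) : Prop where
  measurable_C : Measurable C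
  measurable_X : Measurable X
  measurable_Z : Measurable Z
  X_binary : ∀ ω, X ω = 0 ∨ X ω = 1
  Z_binary : ∀ ω, Z ω = 0 ∨ Z ω = 1
  integrable_Y : Integrable Y P
  measurable_m : Measurable fun p : ℝ × ℝ × 𝒞 => m p.1 p.2.1 p.2.2
  measurable_e : Measurable fun p : ℝ × 𝒞 => e p.1 p.2
  measurable_q : Measurable fun p : ℝ × ℝ × 𝒞 => q p.1 p.2.1 p.2.2
  m_ae_eq : (fun ω => m (Z ω) (X ω) (C ω))
    =ᵐ[P] P[Y | MeasurableSpace.comap (fun ω => (Z ω, X ω, C ω)) inferInstance]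
  e_ae_eq : (fun ω => e 1 (C ω)) =ᵐ[P] P[X | MeasurableSpace.comap C inferInstance]
  e_zero : ∀ c, e 0 c = 1 - e 1 c
  q_ae_eq : (fun ω => q 1 (X ω) (C ω))
    =ᵐ[P] P[Z | MeasurableSpace.comap (fun ω => (X ω, C ω)) inferInstance]
  q_zero : ∀ x c, q 0 x c = 1 - q 1 x c
  pos : 0 < δ
  e_bounds : ∀ x c, (x = 0 ∨ x = 1) → δ ≤ e x c ∧ e x c ≤ 1 - δ
  q_bounds : ∀ z x c, (z = 0 ∨ z = 1) → (x = 0 ∨ x = 1) → δ ≤ q z x c ∧ q z x c ≤ 1 - δ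

namespace IsFrontDoorNuisance

variable {Ω : Type*} [MeasurableSpace Ω] [MeasurableSpace 𝒞] {P : Measure Ω} {C : Ω → 𝒞}
  {X Z Y : Ω → ℝ} {m q : ℝ → ℝ → 𝒞 → ℝ} {e : ℝ → 𝒞 → ℝ} {δ xb : ℝ}
  (h : IsFrontDoorNuisance P C X Z Y m e q δ)
include h

theorem q_pos {z x : ℝ} (hz : z = 0 ∨ z = 1) (hx : x = 0 ∨ x = 1) (c : 𝒞) : 0 < q z x c :=
  h.pos.trans_le (h.q_bounds z x c hz hx).1

theorem norm_e_le_one {x : ℝ} (hx : x = 0 ∨ x = 1) (c : 𝒞) : ‖e x c‖ ≤ 1 := by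
  have hb := h.e_bounds x c hx
  rw [Real.norm_of_nonneg (h.pos.le.trans hb.1)]
  linarith [h.pos]

theorem norm_fdXi_le (hxb : xb = 0 ∨ xb = 1) {z x : ℝ} (hz : z = 0 ∨ z = 1)
    (hx : x = 0 ∨ x = 1) (c : 𝒞) : ‖fdXi q xb z x c‖ ≤ δ⁻¹ := by
  have hnum := h.q_bounds z xb c hz hxb
  rw [fdXi, norm_div, Real.norm_of_nonneg (h.q_pos hz hxb c).le,
    Real.norm_of_nonneg (h.q_pos hz hx c).le, ← one_div]
  exact div_le_div₀ zero_le_one (by linarith [h.pos]) h.pos (h.q_bounds z x c hz hx).1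

theorem norm_fdPi_le {x : ℝ} (hx : x = 0 ∨ x = 1) (c : 𝒞) : ‖fdPi e xb x c‖ ≤ δ⁻¹ := by
  have he := h.e_bounds x c hx
  rw [fdPi, norm_div, Real.norm_of_nonneg (h.pos.le.trans he.1), ← one_div]
  exact div_le_div₀ zero_le_one (by split_ifs <;> simp) h.pos he.1

theorem measurable_fdPi (xb : ℝ) : Measurable fun t : ℝ × 𝒞 => fdPi e xb t.1 t.2 :=
  (Measurable.ite (measurable_fst (measurableSet_singleton xb)) measurable_const
    measurable_const).div h.measurable_e

variable [IsFiniteMeasure P]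

theorem integrable_m {z x : ℝ} (hz : z = 0 ∨ z = 1) (hx : x = 0 ∨ x = 1) :
    Integrable (fun ω => m z x (C ω)) P := by
  have := h.measurable_m
  have := h.measurable_X
  have := h.measurable_C
  have hmz : Integrable (fun ω => m z (X ω) (C ω)) P := by
    obtain ⟨hint, -⟩ := integral_comp_eq_of_binary (T := fun ω => (X ω, C ω))
      (p := fun z t => q z t.1 t.2) (φ := fun z t => m z t.1 t.2)
      (h.measurable_X.prodMk h.measurable_C) h.measurable_Z h.Z_binary h.q_ae_eq
      (fun t => h.q_zero t.1 t.2) (fun z => by fun_prop)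
      (integrable_condExp.congr h.m_ae_eq.symm)
    exact integrable_of_integrable_mul_of_le h.pos (by fun_prop : Measurable _).aestronglyMeasurable
      (hint z hz) fun ω => (h.q_bounds z _ _ hz (h.X_binary ω)).1
  obtain ⟨hint, -⟩ := integral_comp_eq_of_binary (T := C) (p := e) (φ := fun x c => m z x c)
    h.measurable_C h.measurable_X h.X_binary h.e_ae_eq h.e_zero (fun x => by fun_prop) hmz
  exact integrable_of_integrable_mul_of_le h.pos (by fun_prop : Measurable _).aestronglyMeasurable
    (hint x hx) fun ω => (h.e_bounds x _ hx).1

theorem integrable_fdR {z : ℝ} (hz : z = 0 ∨ z = 1) :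
    Integrable (fun ω => fdR m e z (C ω)) P := by
  have := h.measurable_e
  have := h.measurable_C
  exact ((h.integrable_m hz (.inl rfl)).mul_bdd (by fun_prop : Measurable _).aestronglyMeasurable
    (ae_of_all _ fun ω => h.norm_e_le_one (.inl rfl) (C ω))).add
    ((h.integrable_m hz (.inr rfl)).mul_bdd (by fun_prop : Measurable _).aestronglyMeasurable
    (ae_of_all _ fun ω => h.norm_e_le_one (.inr rfl) (C ω)))

theorem integral_fdXi_mul_eq_integral_fdS (hxb : xb = 0 ∨ xb = 1) :
    Integrable (fun ω => fdS m q xb (X ω) (C ω)) P ∧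
      ∫ ω, fdXi q xb (Z ω) (X ω) (C ω) * Y ω ∂P = ∫ ω, fdS m q xb (X ω) (C ω) ∂P := by
  have := h.measurable_m
  have := h.measurable_q
  have hξ : Measurable fun p : ℝ × ℝ × 𝒞 => fdXi q xb p.1 p.2.1 p.2.2 := by
    unfold fdXi; fun_prop
  have hZXC : Measurable fun ω => (Z ω, X ω, C ω) :=
    h.measurable_Z.prodMk (h.measurable_X.prodMk h.measurable_C)
  have hξ_ae : AEStronglyMeasurable (fun ω => fdXi q xb (Z ω) (X ω) (C ω)) P :=
    (hξ.comp hZXC).aestronglyMeasurable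
  have hξ_le : ∀ᵐ ω ∂P, ‖fdXi q xb (Z ω) (X ω) (C ω)‖ ≤ δ⁻¹ :=
    ae_of_all _ fun ω => h.norm_fdXi_le hxb (h.Z_binary ω) (h.X_binary ω) _
  have hY_to_m := (integrable_mul_and_integral_mul_eq_of_ae_eq_condExp hZXC.comap_le
    (hξ.comp (comap_measurable _)).stronglyMeasurable (h.integrable_Y.bdd_mul hξ_ae hξ_le)
    h.integrable_Y h.m_ae_eq).2
  obtain ⟨hint, htower⟩ := integral_comp_eq_of_binary (T := fun ω => (X ω, C ω))
    (p := fun z t => q z t.1 t.2) (φ := fun z t => fdXi q xb z t.1 t.2 * m z t.1 t.2)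
    (h.measurable_X.prodMk h.measurable_C) h.measurable_Z h.Z_binary h.q_ae_eq
    (fun t => h.q_zero t.1 t.2) (fun z => by unfold fdXi; fun_prop)
    ((integrable_condExp.congr h.m_ae_eq.symm).bdd_mul hξ_ae hξ_le)
  have hpt : ∀ ω, fdXi q xb 0 (X ω) (C ω) * m 0 (X ω) (C ω) * q 0 (X ω) (C ω)
      + fdXi q xb 1 (X ω) (C ω) * m 1 (X ω) (C ω) * q 1 (X ω) (C ω)
      = fdS m q xb (X ω) (C ω) := fun ω => by
    rw [mul_right_comm, fdXi_mul_q (h.q_pos (.inl rfl) (h.X_binary ω) _).ne', mul_right_comm,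
      fdXi_mul_q (h.q_pos (.inr rfl) (h.X_binary ω) _).ne', fdS]
    ring
  exact ⟨((hint 0 (.inl rfl)).add (hint 1 (.inr rfl))).congr (ae_of_all _ hpt),
    hY_to_m.trans (htower.trans (integral_congr_ae (ae_of_all _ hpt)))⟩

theorem integral_fdS_eq_integral_fdTau (hxb : xb = 0 ∨ xb = 1) :
    ∫ ω, fdS m q xb (X ω) (C ω) ∂P = ∫ ω, fdTau m q e xb (C ω) ∂P := by
  have := h.measurable_m
  have := h.measurable_q
  obtain ⟨-, htower⟩ := integral_comp_eq_of_binary (T := C) (p := e) (φ := fdS m q xb)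
    h.measurable_C h.measurable_X h.X_binary h.e_ae_eq h.e_zero (fun x => by unfold fdS; fun_prop)
    (h.integral_fdXi_mul_eq_integral_fdS hxb).1
  rw [htower]
  congr 1 with ω
  simp only [fdS, fdTau]
  ring

theorem integral_fdPi_mul_fdR_eq_integral_fdPi_mul_fdNu :
    Integrable (fun ω => fdPi e xb (X ω) (C ω) * fdNu m q e (X ω) (C ω)) P ∧
      ∫ ω, fdPi e xb (X ω) (C ω) * fdR m e (Z ω) (C ω) ∂P
        = ∫ ω, fdPi e xb (X ω) (C ω) * fdNu m q e (X ω) (C ω) ∂P := by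
  have := h.measurable_m
  have := h.measurable_e
  have hπ := h.measurable_fdPi xb
  have hXC : Measurable fun ω => (X ω, C ω) := h.measurable_X.prodMk h.measurable_C
  have hπr : ∀ z, z = 0 ∨ z = 1 →
      Integrable (fun ω => fdPi e xb (X ω) (C ω) * fdR m e z (C ω)) P := fun z hz =>
    (h.integrable_fdR hz).bdd_mul (hπ.comp hXC).aestronglyMeasurable
      (ae_of_all _ fun ω => h.norm_fdPi_le (h.X_binary ω) _)
  obtain ⟨hint, htower⟩ := integral_comp_eq_of_binary (T := fun ω => (X ω, C ω))
    (p := fun z t => q z t.1 t.2) (φ := fun z t => fdPi e xb t.1 t.2 * fdR m e z t.2)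
    hXC h.measurable_Z h.Z_binary h.q_ae_eq (fun t => h.q_zero t.1 t.2)
    (fun z => by unfold fdR; fun_prop)
    (integrable_comp_of_binary (F := fun z ω => fdPi e xb (X ω) (C ω) * fdR m e z (C ω))
      h.measurable_Z h.Z_binary (hπr 0 (.inl rfl)) (hπr 1 (.inr rfl)))
  have hpt : ∀ ω, fdPi e xb (X ω) (C ω) * fdR m e 0 (C ω) * q 0 (X ω) (C ω)
      + fdPi e xb (X ω) (C ω) * fdR m e 1 (C ω) * q 1 (X ω) (C ω)
      = fdPi e xb (X ω) (C ω) * fdNu m q e (X ω) (C ω) := fun ω => by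
    rw [fdNu]
    ring
  exact ⟨((hint 0 (.inl rfl)).add (hint 1 (.inr rfl))).congr (ae_of_all _ hpt),
    htower.trans (integral_congr_ae (ae_of_all _ hpt))⟩

theorem integral_fdPi_mul_fdNu_eq_integral_fdTau (hxb : xb = 0 ∨ xb = 1)
    (hint : Integrable (fun ω => fdPi e xb (X ω) (C ω) * fdNu m q e (X ω) (C ω)) P) :
    ∫ ω, fdPi e xb (X ω) (C ω) * fdNu m q e (X ω) (C ω) ∂P = ∫ ω, fdTau m q e xb (C ω) ∂P := by
  have := h.measurable_m
  have := h.measurable_e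
  have := h.measurable_q
  have hπ := h.measurable_fdPi xb
  obtain ⟨-, htower⟩ := integral_comp_eq_of_binary (T := C) (p := e)
    (φ := fun x c => fdPi e xb x c * fdNu m q e x c) h.measurable_C h.measurable_X h.X_binary
    h.e_ae_eq h.e_zero (fun x => by unfold fdNu fdR; fun_prop) hint
  rw [htower]
  congr 1 with ω
  have he : ∀ x, x = 0 ∨ x = 1 → fdPi e xb x (C ω) * fdNu m q e x (C ω) * e x (C ω)
      = (if x = xb then 1 else 0) * fdNu m q e x (C ω) := fun x hx => by
    rw [mul_right_comm, fdPi_mul_e (h.pos.trans_le (h.e_bounds x _ hx).1).ne']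
  rw [he 0 (.inl rfl), he 1 (.inr rfl)]
  rcases hxb with rfl | rfl <;> simp [fdNu_self]

end IsFrontDoorNuisance

theorem fd_expressiveness_general
    {Ω : Type*} [MeasurableSpace Ω] [MeasurableSpace 𝒞]
    (P : Measure Ω) [IsProbabilityMeasure P]
    (C : Ω → 𝒞) (X Z Y : Ω → ℝ)
    (hC : Measurable C) (hX : Measurable X) (hZ : Measurable Z)
    (hX01 : ∀ ω, X ω = 0 ∨ X ω = 1) (hZ01 : ∀ ω, Z ω = 0 ∨ Z ω = 1)
    (hY2 : MemLp Y 2 P)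
    (m : ℝ → ℝ → 𝒞 → ℝ) (e : ℝ → 𝒞 → ℝ) (q : ℝ → ℝ → 𝒞 → ℝ)
    (hm_meas : Measurable fun p : ℝ × ℝ × 𝒞 => m p.1 p.2.1 p.2.2)
    (he_meas : Measurable fun p : ℝ × 𝒞 => e p.1 p.2)
    (hq_meas : Measurable fun p : ℝ × ℝ × 𝒞 => q p.1 p.2.1 p.2.2)
    (hm : (fun ω => m (Z ω) (X ω) (C ω))
        =ᵐ[P] P[Y | MeasurableSpace.comap (fun ω => (Z ω, X ω, C ω)) inferInstance])
    (he1 : (fun ω => e 1 (C ω)) =ᵐ[P] P[X | MeasurableSpace.comap C inferInstance])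
    (he0 : ∀ c, e 0 c = 1 - e 1 c)
    (hq1 : (fun ω => q 1 (X ω) (C ω))
        =ᵐ[P] P[Z | MeasurableSpace.comap (fun ω => (X ω, C ω)) inferInstance])
    (hq0 : ∀ x c, q 0 x c = 1 - q 1 x c)
    (δ : ℝ) (hδ0 : 0 < δ)
    (he_pos : ∀ x c, (x = 0 ∨ x = 1) → δ ≤ e x c ∧ e x c ≤ 1 - δ)
    (hq_pos : ∀ z x c, (z = 0 ∨ z = 1) → (x = 0 ∨ x = 1) → δ ≤ q z x c ∧ q z x c ≤ 1 - δ)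
    (xb : ℝ) (hxb : xb = 0 ∨ xb = 1) :
    (∫ ω, fdXi q xb (Z ω) (X ω) (C ω) * Y ω ∂P)
        = (∫ ω, fdPi e xb (X ω) (C ω) * fdR m e (Z ω) (C ω) ∂P) ∧
      (∫ ω, fdPi e xb (X ω) (C ω) * fdR m e (Z ω) (C ω) ∂P)
        = (∫ ω, fdS m q xb (X ω) (C ω) ∂P) ∧
      (∫ ω, fdS m q xb (X ω) (C ω) ∂P) = (∫ ω, fdTau m q e xb (C ω) ∂P) := by
  have h : IsFrontDoorNuisance P C X Z Y m e q δ := ⟨hC, hX, hZ, hX01, hZ01,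
    hY2.integrable one_le_two, hm_meas, he_meas, hq_meas, hm, he1, he0, hq1, hq0, hδ0, he_pos,
    hq_pos⟩
  have hξ := (h.integral_fdXi_mul_eq_integral_fdS hxb).2
  have hs := h.integral_fdS_eq_integral_fdTau hxb
  obtain ⟨hπν, hπr⟩ := h.integral_fdPi_mul_fdR_eq_integral_fdPi_mul_fdNu (xb := xb)
  have hπ := hπr.trans (h.integral_fdPi_mul_fdNu_eq_integral_fdTau hxb hπν)
  exact ⟨hξ.trans (hs.trans hπ.symm), hπ.trans hs.symm, hs⟩

/-- **Expressiveness of nuisances.** For x̄ ∈ {0,1},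
E[ξ_x̄(Z,X,C)·Y] = E[π_x̄(X,C)·r(Z,C)] = E[s_x̄(X,C)] = E[τ_x̄(C)]. -/
theorem fd_expressiveness
    {Ω : Type*} [MeasurableSpace Ω] [MeasurableSpace 𝒞]
    (P : Measure Ω) [IsProbabilityMeasure P]
    (C : Ω → 𝒞) (X Z Y : Ω → ℝ)
    (hC : Measurable C) (hX : Measurable X) (hZ : Measurable Z) (hY : Measurable Y)
    (hX01 : ∀ ω, X ω = 0 ∨ X ω = 1) (hZ01 : ∀ ω, Z ω = 0 ∨ Z ω = 1)
    (hY2 : MemLp Y 2 P)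
    (m : ℝ → ℝ → 𝒞 → ℝ) (e : ℝ → 𝒞 → ℝ) (q : ℝ → ℝ → 𝒞 → ℝ)
    (hm_meas : Measurable fun p : ℝ × ℝ × 𝒞 => m p.1 p.2.1 p.2.2)
    (he_meas : Measurable fun p : ℝ × 𝒞 => e p.1 p.2)
    (hq_meas : Measurable fun p : ℝ × ℝ × 𝒞 => q p.1 p.2.1 p.2.2)
    (hm : (fun ω => m (Z ω) (X ω) (C ω))
        =ᵐ[P] P[Y | MeasurableSpace.comap (fun ω => (Z ω, X ω, C ω)) inferInstance])
    (he1 : (fun ω => e 1 (C ω)) =ᵐ[P] P[X | MeasurableSpace.comap C inferInstance])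
    (he0 : ∀ c, e 0 c = 1 - e 1 c)
    (hq1 : (fun ω => q 1 (X ω) (C ω))
        =ᵐ[P] P[Z | MeasurableSpace.comap (fun ω => (X ω, C ω)) inferInstance])
    (hq0 : ∀ x c, q 0 x c = 1 - q 1 x c)
    (δ : ℝ) (hδ0 : 0 < δ) (hδ2 : δ < 1 / 2)
    (he_pos : ∀ x c, (x = 0 ∨ x = 1) → δ ≤ e x c ∧ e x c ≤ 1 - δ)
    (hq_pos : ∀ z x c, (z = 0 ∨ z = 1) → (x = 0 ∨ x = 1) → δ ≤ q z x c ∧ q z x c ≤ 1 - δ)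
    (xb : ℝ) (hxb : xb = 0 ∨ xb = 1) :
    (∫ ω, fdXi q xb (Z ω) (X ω) (C ω) * Y ω ∂P)
        = (∫ ω, fdPi e xb (X ω) (C ω) * fdR m e (Z ω) (C ω) ∂P) ∧
      (∫ ω, fdPi e xb (X ω) (C ω) * fdR m e (Z ω) (C ω) ∂P)
        = (∫ ω, fdS m q xb (X ω) (C ω) ∂P) ∧
      (∫ ω, fdS m q xb (X ω) (C ω) ∂P) = (∫ ω, fdTau m q e xb (C ω) ∂P) :=
  fd_expressiveness_general P C X Z Y hC hX hZ hX01 hZ01 hY2 m e q hm_meas he_meas hq_meas hm he1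
    he0 hq1 hq0 δ hδ0 he_pos hq_pos xb hxb
end
end

section
/- Fix x̄ ∈ {0,1} and let φ_x̄(V;η) = ξ_x̄(Z,X,C)·(Y − m(Z,X,C)) + π_x̄(X,C)·(r(Z,C) − ν(X,C)) + s_x̄(X,C) be the front-door pseudo-outcome evaluated at the true nuisances. Then E[φ_x̄(V;η) | σ(C)] = τ_x̄(C) almost surely. -/
open MeasureTheory
open scoped ENNReal

noncomputable section

variable {𝒞 : Type*}

/-!
Split `φ` into `ξ·(Y − m) + π·(r(Z,C) − ν(X,C)) + s(X,C)`. The first term has conditional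
mean zero given `(Z,X,C)`, since `m` is the regression of `Y` and `ξ` is a bounded function of
`(Z,X,C)`. The second has conditional mean zero given `(X,C)`: `Z` is binary with
`E[Z | X,C] = q(1,X,C)`, so `E[r(Z,C) | X,C] = Σ_z r(z,C) q(z,X,C) = ν(X,C)`. The tower property
moves both to `σ(C)`. The last term is a function of the binary `X`, so its conditional mean
given `C` is `Σ_x s(x,C) e(x,C) = τ(C)`.

Positivity bounds `ξ` and `π` by `δ⁻¹`, and it is also what makes `m(z,x,C)` integrable for fixed
`z, x`: conditioning on `1{Z = z}` and `1{X = x}` gives `E|m(z,x,C)| ≤ δ⁻² E|m(Z,X,C)|`.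
-/

local notation "σ[" f "]" => MeasurableSpace.comap f inferInstance

lemma comap_le_comap_prodMk {Ω α β : Type*} [MeasurableSpace α] [MeasurableSpace β]
    (f : Ω → α) (g : Ω → β) : σ[g] ≤ σ[fun ω => (f ω, g ω)] :=
  le_sup_right.trans (MeasurableSpace.comap_prodMk f g).ge

lemma norm_div_le_inv_of_norm_le_one {a b δ : ℝ} (ha : ‖a‖ ≤ 1) (hδ : 0 < δ) (hb : δ ≤ b) :
    ‖a / b‖ ≤ δ⁻¹ := by
  rw [norm_div, Real.norm_of_nonneg (hδ.le.trans hb), ← one_div]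
  exact div_le_div₀ zero_le_one ha hδ hb

lemma comp_eq_add_mul_of_binary {Ω : Type*} {W : Ω → ℝ} (hW01 : ∀ ω, W ω = 0 ∨ W ω = 1)
    (F : ℝ → Ω → ℝ) : (fun ω => F (W ω) ω) = F 0 + (F 1 - F 0) * W := by
  funext ω
  rcases hW01 ω with h | h <;> simp [h]

lemma norm_le_one_of_binary {Ω : Type*} {W : Ω → ℝ} (hW01 : ∀ ω, W ω = 0 ∨ W ω = 1) (ω : Ω) :
    ‖W ω‖ ≤ 1 := by
  rcases hW01 ω with h | h <;> simp [h]

section CondExp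

variable {Ω : Type*} {m mΩ : MeasurableSpace Ω} {μ : Measure Ω}

lemma integrable_comp_of_binary_s1 {W : Ω → ℝ} (hW : AEStronglyMeasurable W μ)
    (hW01 : ∀ ω, W ω = 0 ∨ W ω = 1) {F : ℝ → Ω → ℝ} (hF0 : Integrable (F 0) μ)
    (hF1 : Integrable (F 1) μ) : Integrable (fun ω => F (W ω) ω) μ := by
  rw [comp_eq_add_mul_of_binary hW01]
  exact hF0.add ((hF1.sub hF0).mul_bdd hW (ae_of_all _ (norm_le_one_of_binary hW01)))

lemma condExp_comp_of_binary [IsFiniteMeasure μ] (hm : m ≤ mΩ) {W : Ω → ℝ}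
    (hW : AEStronglyMeasurable W μ) (hW01 : ∀ ω, W ω = 0 ∨ W ω = 1) {F : ℝ → Ω → ℝ}
    (hF0m : StronglyMeasurable[m] (F 0)) (hF1m : StronglyMeasurable[m] (F 1))
    (hF0 : Integrable (F 0) μ) (hF1 : Integrable (F 1) μ) :
    μ[fun ω => F (W ω) ω|m] =ᵐ[μ] fun ω => F 0 ω * (1 - μ[W|m] ω) + F 1 ω * μ[W|m] ω := by
  have hWi : Integrable W μ := .of_bound hW 1 (ae_of_all _ (norm_le_one_of_binary hW01))
  have hslope : Integrable ((F 1 - F 0) * W) μ :=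
    (hF1.sub hF0).mul_bdd hW (ae_of_all _ (norm_le_one_of_binary hW01))
  rw [comp_eq_add_mul_of_binary hW01]
  filter_upwards [condExp_add hF0 hslope m,
    condExp_mul_of_stronglyMeasurable_left (hF1m.sub hF0m) hslope hWi] with ω hadd hmul
  rw [hadd, Pi.add_apply, hmul, condExp_of_stronglyMeasurable hm hF0m hF0]
  simp only [Pi.mul_apply, Pi.sub_apply]
  ring

lemma condExp_ite_eq_of_binary [IsFiniteMeasure μ] (hm : m ≤ mΩ) {W : Ω → ℝ}
    (hW : AEStronglyMeasurable W μ) (hW01 : ∀ ω, W ω = 0 ∨ W ω = 1) {p : ℝ → Ω → ℝ}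
    (hp1 : p 1 =ᵐ[μ] μ[W|m]) (hp0 : ∀ ω, p 0 ω = 1 - p 1 ω) {w : ℝ} (hw : w = 0 ∨ w = 1) :
    μ[fun ω => if W ω = w then (1 : ℝ) else 0|m] =ᵐ[μ] p w := by
  filter_upwards [condExp_comp_of_binary hm hW hW01 (F := fun v _ => if v = w then (1 : ℝ) else 0)
    stronglyMeasurable_const stronglyMeasurable_const (integrable_const _) (integrable_const _),
    hp1] with ω hω hp1ω
  rw [hω, ← hp1ω]
  rcases hw with rfl | rfl <;> simp [hp0]

lemma condExp_mul_eq_zero_of_condExp_eq_zero [IsFiniteMeasure μ] {m' : MeasurableSpace Ω}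
    (hm' : m' ≤ m) (hm : m ≤ mΩ) {g f : Ω → ℝ} {B : ℝ} (hg : StronglyMeasurable[m] g)
    (hgB : ∀ ω, ‖g ω‖ ≤ B) (hf : Integrable f μ) (hf0 : μ[f|m] =ᵐ[μ] 0) :
    Integrable (fun ω => g ω * f ω) μ ∧ μ[fun ω => g ω * f ω|m'] =ᵐ[μ] 0 := by
  have hgf : Integrable (fun ω => g ω * f ω) μ :=
    hf.bdd_mul (hg.mono hm).aestronglyMeasurable (ae_of_all _ hgB)
  refine ⟨hgf, ?_⟩
  calc μ[fun ω => g ω * f ω|m'] =ᵐ[μ] μ[μ[fun ω => g ω * f ω|m]|m'] :=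
        (condExp_condExp_of_le hm' hm).symm
    _ =ᵐ[μ] μ[g * μ[f|m]|m'] := condExp_congr_ae (condExp_mul_of_stronglyMeasurable_left hg hgf hf)
    _ =ᵐ[μ] μ[0|m'] := condExp_congr_ae (by filter_upwards [hf0] with ω h; simp [h])
    _ = 0 := condExp_zero

lemma lintegral_ofReal_mul_eq_condExp [IsFiniteMeasure μ] (hm : m ≤ mΩ) {w : Ω → ℝ}
    (hw : Integrable w μ) (hw0 : 0 ≤ᵐ[μ] w) {g : Ω → ℝ≥0∞} (hg : Measurable[m] g) :
    ∫⁻ ω, ENNReal.ofReal (w ω) * g ω ∂μ = ∫⁻ ω, ENNReal.ofReal (μ[w|m] ω) * g ω ∂μ := by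
  -- The measures with densities `w` and `μ[w|m]` agree on `m`, and `g` is `m`-measurable.
  have hagree : (μ.withDensity fun ω => ENNReal.ofReal (w ω)).trim hm
      = (μ.withDensity fun ω => ENNReal.ofReal (μ[w|m] ω)).trim hm := by
    refine @Measure.ext _ m _ _ fun s hs => ?_
    rw [trim_measurableSet_eq hm hs, trim_measurableSet_eq hm hs,
      withDensity_apply _ (hm s hs), withDensity_apply _ (hm s hs),
      ← ofReal_integral_eq_lintegral_ofReal hw.integrableOn (ae_restrict_of_ae hw0),
      ← ofReal_integral_eq_lintegral_ofReal integrable_condExp.integrableOn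
        (ae_restrict_of_ae (condExp_nonneg hw0)), setIntegral_condExp hm hw hs]
  have hg' : AEMeasurable g μ := (hg.mono hm le_rfl).aemeasurable
  calc ∫⁻ ω, ENNReal.ofReal (w ω) * g ω ∂μ
      = ∫⁻ ω, g ω ∂(μ.withDensity fun ω => ENNReal.ofReal (w ω)).trim hm := by
        rw [lintegral_trim hm hg]
        exact (lintegral_withDensity_eq_lintegral_mul₀ hw.1.aemeasurable.ennreal_ofReal hg').symm
    _ = ∫⁻ ω, ENNReal.ofReal (μ[w|m] ω) * g ω ∂μ := by
        rw [hagree, lintegral_trim hm hg]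
        exact lintegral_withDensity_eq_lintegral_mul₀
          integrable_condExp.1.aemeasurable.ennreal_ofReal hg'

lemma integrable_of_integrable_mul_of_le_condExp [IsFiniteMeasure μ] (hm : m ≤ mΩ)
    {g w : Ω → ℝ} {δ : ℝ} (hδ : 0 < δ) (hg : StronglyMeasurable[m] g) (hw : Integrable w μ)
    (hw0 : 0 ≤ᵐ[μ] w) (hwδ : ∀ᵐ ω ∂μ, δ ≤ μ[w|m] ω)
    (hgw : Integrable (fun ω => w ω * g ω) μ) : Integrable g μ := by
  refine ⟨(hg.mono hm).aestronglyMeasurable, ?_⟩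
  have hbound : ENNReal.ofReal δ * ∫⁻ ω, ‖g ω‖ₑ ∂μ ≤ ∫⁻ ω, ‖w ω * g ω‖ₑ ∂μ :=
    calc ENNReal.ofReal δ * ∫⁻ ω, ‖g ω‖ₑ ∂μ
        = ∫⁻ ω, ENNReal.ofReal δ * ‖g ω‖ₑ ∂μ :=
          (lintegral_const_mul' _ _ ENNReal.ofReal_ne_top).symm
      _ ≤ ∫⁻ ω, ENNReal.ofReal (μ[w|m] ω) * ‖g ω‖ₑ ∂μ :=
        lintegral_mono_ae (hwδ.mono fun ω h => by gcongr)
      _ = ∫⁻ ω, ENNReal.ofReal (w ω) * ‖g ω‖ₑ ∂μ :=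
        (lintegral_ofReal_mul_eq_condExp hm hw hw0 (measurable_enorm.comp hg.measurable)).symm
      _ = ∫⁻ ω, ‖w ω * g ω‖ₑ ∂μ :=
        lintegral_congr_ae (hw0.mono fun ω h => by simp only [enorm_mul, Real.enorm_eq_ofReal h])
  exact ENNReal.lt_top_of_mul_ne_top_right (hbound.trans_lt hgw.2).ne
    (ENNReal.ofReal_pos.mpr hδ).ne'

lemma integrable_of_integrable_ite_mul_of_binary [IsFiniteMeasure μ] (hm : m ≤ mΩ)
    {W : Ω → ℝ} (hW : Measurable W) (hW01 : ∀ ω, W ω = 0 ∨ W ω = 1) {p : ℝ → Ω → ℝ}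
    (hp1 : p 1 =ᵐ[μ] μ[W|m]) (hp0 : ∀ ω, p 0 ω = 1 - p 1 ω) {w δ : ℝ} (hw : w = 0 ∨ w = 1)
    (hδ : 0 < δ) (hpδ : ∀ ω, δ ≤ p w ω) {g : Ω → ℝ} (hg : StronglyMeasurable[m] g)
    (hgW : Integrable (fun ω => (if W ω = w then 1 else 0) * g ω) μ) : Integrable g μ := by
  have hind : Measurable fun ω => if W ω = w then (1 : ℝ) else 0 :=
    Measurable.ite (hW (measurableSet_singleton w)) measurable_const measurable_const
  refine integrable_of_integrable_mul_of_le_condExp hm hδ hg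
    (.of_bound hind.aestronglyMeasurable 1 (ae_of_all _ fun ω => by split_ifs <;> simp))
    (ae_of_all _ fun ω => by dsimp only; split_ifs <;> simp) ?_ hgW
  filter_upwards [condExp_ite_eq_of_binary hm hW.aestronglyMeasurable hW01 hp1 hp0 hw] with ω hω
  exact hω ▸ hpδ ω

end CondExp

structure FrontDoorModel {Ω : Type*} [MeasurableSpace Ω] [MeasurableSpace 𝒞] (P : Measure Ω)
    (C : Ω → 𝒞) (X Z Y : Ω → ℝ) (m : ℝ → ℝ → 𝒞 → ℝ) (e : ℝ → 𝒞 → ℝ)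
    (q : ℝ → ℝ → 𝒞 → ℝ) (δ : ℝ) : Prop where
  measurable_C : Measurable C
  measurable_X : Measurable X
  measurable_Z : Measurable Z
  binary_X : ∀ ω, X ω = 0 ∨ X ω = 1
  binary_Z : ∀ ω, Z ω = 0 ∨ Z ω = 1
  integrable_Y : Integrable Y P
  measurable_m : Measurable fun p : ℝ × ℝ × 𝒞 => m p.1 p.2.1 p.2.2
  measurable_e : Measurable fun p : ℝ × 𝒞 => e p.1 p.2
  measurable_q : Measurable fun p : ℝ × ℝ × 𝒞 => q p.1 p.2.1 p.2.2
  condExp_Y : (fun ω => m (Z ω) (X ω) (C ω)) =ᵐ[P] P[Y|σ[fun ω => (Z ω, X ω, C ω)]]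
  condExp_X : (fun ω => e 1 (C ω)) =ᵐ[P] P[X|σ[C]]
  e_zero : ∀ c, e 0 c = 1 - e 1 c
  condExp_Z : (fun ω => q 1 (X ω) (C ω)) =ᵐ[P] P[Z|σ[fun ω => (X ω, C ω)]]
  q_zero : ∀ x c, q 0 x c = 1 - q 1 x c
  delta_pos : 0 < δ
  e_mem : ∀ x c, (x = 0 ∨ x = 1) → δ ≤ e x c ∧ e x c ≤ 1 - δ
  q_mem : ∀ z x c, (z = 0 ∨ z = 1) → (x = 0 ∨ x = 1) → δ ≤ q z x c ∧ q z x c ≤ 1 - δ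

namespace FrontDoorModel

variable {Ω : Type*} [MeasurableSpace Ω] [MeasurableSpace 𝒞] {P : Measure Ω} {C : Ω → 𝒞}
  {X Z Y : Ω → ℝ} {m : ℝ → ℝ → 𝒞 → ℝ} {e : ℝ → 𝒞 → ℝ} {q : ℝ → ℝ → 𝒞 → ℝ} {δ : ℝ}

lemma comap_C_le (h : FrontDoorModel P C X Z Y m e q δ) : σ[C] ≤ ‹MeasurableSpace Ω› :=
  h.measurable_C.comap_le

lemma comap_XC_le (h : FrontDoorModel P C X Z Y m e q δ) :
    σ[fun ω => (X ω, C ω)] ≤ ‹MeasurableSpace Ω› :=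
  (h.measurable_X.prodMk h.measurable_C).comap_le

lemma comap_ZXC_le (h : FrontDoorModel P C X Z Y m e q δ) :
    σ[fun ω => (Z ω, X ω, C ω)] ≤ ‹MeasurableSpace Ω› :=
  (h.measurable_Z.prodMk (h.measurable_X.prodMk h.measurable_C)).comap_le

lemma measurable_m_apply (h : FrontDoorModel P C X Z Y m e q δ) (z x : ℝ) :
    Measurable (m z x) := by
  have := h.measurable_m; fun_prop

lemma measurable_e_apply (h : FrontDoorModel P C X Z Y m e q δ) (x : ℝ) : Measurable (e x) := by
  have := h.measurable_e; fun_prop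

lemma measurable_q_apply (h : FrontDoorModel P C X Z Y m e q δ) (z x : ℝ) :
    Measurable (q z x) := by
  have := h.measurable_q; fun_prop

lemma measurable_fdR (h : FrontDoorModel P C X Z Y m e q δ) (z : ℝ) : Measurable (fdR m e z) := by
  have := h.measurable_m; have := h.measurable_e; unfold fdR; fun_prop

lemma measurable_fdNu (h : FrontDoorModel P C X Z Y m e q δ) :
    Measurable fun p : ℝ × 𝒞 => fdNu m q e p.1 p.2 := by
  have := h.measurable_fdR 0; have := h.measurable_fdR 1; have := h.measurable_q; unfold fdNu
  fun_prop

lemma measurable_fdS (h : FrontDoorModel P C X Z Y m e q δ) (xb x : ℝ) :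
    Measurable (fdS m q xb x) := by
  have := h.measurable_m; have := h.measurable_q; unfold fdS; fun_prop

lemma norm_e_le_one (h : FrontDoorModel P C X Z Y m e q δ) {x : ℝ} (hx : x = 0 ∨ x = 1)
    (c : 𝒞) : ‖e x c‖ ≤ 1 := by
  have := h.e_mem x c hx
  exact abs_le.mpr ⟨by linarith [h.delta_pos], by linarith [h.delta_pos]⟩

lemma norm_q_le_one (h : FrontDoorModel P C X Z Y m e q δ) {z x : ℝ} (hz : z = 0 ∨ z = 1)
    (hx : x = 0 ∨ x = 1) (c : 𝒞) : ‖q z x c‖ ≤ 1 := by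
  have := h.q_mem z x c hz hx
  exact abs_le.mpr ⟨by linarith [h.delta_pos], by linarith [h.delta_pos]⟩

lemma integrable_m_comp (h : FrontDoorModel P C X Z Y m e q δ) :
    Integrable (fun ω => m (Z ω) (X ω) (C ω)) P :=
  integrable_condExp.congr h.condExp_Y.symm

lemma integrable_m_apply [IsFiniteMeasure P] (h : FrontDoorModel P C X Z Y m e q δ) {z x : ℝ}
    (hz : z = 0 ∨ z = 1) (hx : x = 0 ∨ x = 1) : Integrable (fun ω => m z x (C ω)) P := by
  have hind {W : Ω → ℝ} (hW : Measurable W) (w : ℝ) :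
      Measurable fun ω => if W ω = w then (1 : ℝ) else 0 :=
    Measurable.ite (hW (measurableSet_singleton w)) measurable_const measurable_const
  have hgXC : Measurable fun p : ℝ × 𝒞 => (if p.1 = x then (1 : ℝ) else 0) * m z x p.2 :=
    (Measurable.ite (measurableSet_eq_fun measurable_fst measurable_const) measurable_const
      measurable_const).mul ((h.measurable_m_apply z x).comp measurable_snd)
  refine integrable_of_integrable_ite_mul_of_binary h.comap_C_le h.measurable_X h.binary_X
    (p := fun x ω => e x (C ω)) h.condExp_X (fun _ => h.e_zero _) hx h.delta_pos
    (fun ω => (h.e_mem x (C ω) hx).1)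
    ((h.measurable_m_apply z x).comp (comap_measurable C)).stronglyMeasurable ?_
  refine integrable_of_integrable_ite_mul_of_binary h.comap_XC_le h.measurable_Z h.binary_Z
    (p := fun z ω => q z (X ω) (C ω)) h.condExp_Z (fun _ => h.q_zero _ _) hz h.delta_pos
    (fun ω => (h.q_mem z _ _ hz (h.binary_X ω)).1)
    (hgXC.comp (comap_measurable _)).stronglyMeasurable ?_
  refine (h.integrable_m_comp.bdd_mul ((hind h.measurable_Z z).mul
    (hind h.measurable_X x)).aestronglyMeasurable (c := 1) (ae_of_all _ fun ω => ?_)).congr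
    (ae_of_all _ fun ω => ?_)
  · simp only [Pi.mul_apply]; split_ifs <;> simp
  · simp only [Pi.mul_apply]; split_ifs <;> simp_all

lemma integrable_fdR [IsFiniteMeasure P] (h : FrontDoorModel P C X Z Y m e q δ) {z : ℝ}
    (hz : z = 0 ∨ z = 1) : Integrable (fun ω => fdR m e z (C ω)) P := by
  refine .add ?_ ?_ <;>
  refine (h.integrable_m_apply hz (by simp)).mul_bdd
    ((h.measurable_e_apply _).comp h.measurable_C).aestronglyMeasurable
    (ae_of_all _ fun ω => h.norm_e_le_one (by simp) _)

lemma integrable_fdNu [IsFiniteMeasure P] (h : FrontDoorModel P C X Z Y m e q δ) {x : ℝ}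
    (hx : x = 0 ∨ x = 1) : Integrable (fun ω => fdNu m q e x (C ω)) P := by
  refine .add ?_ ?_ <;>
  refine (h.integrable_fdR (by simp)).mul_bdd
    ((h.measurable_q_apply _ _).comp h.measurable_C).aestronglyMeasurable
    (ae_of_all _ fun ω => h.norm_q_le_one (by simp) hx _)

lemma integrable_fdS [IsFiniteMeasure P] (h : FrontDoorModel P C X Z Y m e q δ) {xb x : ℝ}
    (hxb : xb = 0 ∨ xb = 1) (hx : x = 0 ∨ x = 1) :
    Integrable (fun ω => fdS m q xb x (C ω)) P := by
  refine .add ?_ ?_ <;>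
  refine (h.integrable_m_apply (by simp) hx).mul_bdd
    ((h.measurable_q_apply _ _).comp h.measurable_C).aestronglyMeasurable
    (ae_of_all _ fun ω => h.norm_q_le_one (by simp) hxb _)

lemma condExp_fdR_eq_fdNu [IsFiniteMeasure P] (h : FrontDoorModel P C X Z Y m e q δ) :
    P[fun ω => fdR m e (Z ω) (C ω)|σ[fun ω => (X ω, C ω)]]
      =ᵐ[P] fun ω => fdNu m q e (X ω) (C ω) := by
  have hC : Measurable[σ[fun ω => (X ω, C ω)]] C := (comap_measurable _).snd
  filter_upwards [condExp_comp_of_binary h.comap_XC_le h.measurable_Z.aestronglyMeasurable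
    h.binary_Z (F := fun z ω => fdR m e z (C ω))
    ((h.measurable_fdR 0).comp hC).stronglyMeasurable
    ((h.measurable_fdR 1).comp hC).stronglyMeasurable
    (h.integrable_fdR (by simp)) (h.integrable_fdR (by simp)), h.condExp_Z] with ω hω hZω
  rw [hω, ← hZω, fdNu, h.q_zero]

lemma condExp_fdS_eq_fdTau [IsFiniteMeasure P] (h : FrontDoorModel P C X Z Y m e q δ) {xb : ℝ}
    (hxb : xb = 0 ∨ xb = 1) :
    Integrable (fun ω => fdS m q xb (X ω) (C ω)) P ∧
      P[fun ω => fdS m q xb (X ω) (C ω)|σ[C]] =ᵐ[P] fun ω => fdTau m q e xb (C ω) := by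
  have hC : Measurable[σ[C]] C := comap_measurable _
  refine ⟨integrable_comp_of_binary_s1 h.measurable_X.aestronglyMeasurable h.binary_X
    (F := fun x ω => fdS m q xb x (C ω)) (h.integrable_fdS hxb (by simp))
    (h.integrable_fdS hxb (by simp)), ?_⟩
  filter_upwards [condExp_comp_of_binary h.comap_C_le h.measurable_X.aestronglyMeasurable
    h.binary_X (F := fun x ω => fdS m q xb x (C ω))
    ((h.measurable_fdS xb 0).comp hC).stronglyMeasurable
    ((h.measurable_fdS xb 1).comp hC).stronglyMeasurable
    (h.integrable_fdS hxb (by simp)) (h.integrable_fdS hxb (by simp)), h.condExp_X] with ω hω hXω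
  rw [hω, ← hXω, fdS, fdS, fdTau, h.e_zero]
  ring

lemma condExp_fdPi_mul_eq_zero [IsFiniteMeasure P] (h : FrontDoorModel P C X Z Y m e q δ)
    (xb : ℝ) :
    Integrable (fun ω => fdPi e xb (X ω) (C ω) *
        (fdR m e (Z ω) (C ω) - fdNu m q e (X ω) (C ω))) P ∧
      P[fun ω => fdPi e xb (X ω) (C ω) * (fdR m e (Z ω) (C ω) - fdNu m q e (X ω) (C ω))|σ[C]]
        =ᵐ[P] 0 := by
  have hr := integrable_comp_of_binary_s1 h.measurable_Z.aestronglyMeasurable h.binary_Z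
    (F := fun z ω => fdR m e z (C ω)) (h.integrable_fdR (by simp)) (h.integrable_fdR (by simp))
  have hν := integrable_comp_of_binary_s1 h.measurable_X.aestronglyMeasurable h.binary_X
    (F := fun x ω => fdNu m q e x (C ω)) (h.integrable_fdNu (by simp)) (h.integrable_fdNu (by simp))
  have hπ : Measurable fun p : ℝ × 𝒞 => fdPi e xb p.1 p.2 :=
    (Measurable.ite (measurableSet_eq_fun measurable_fst measurable_const) measurable_const
      measurable_const).div h.measurable_e
  refine condExp_mul_eq_zero_of_condExp_eq_zero (comap_le_comap_prodMk X C) h.comap_XC_le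
    (hπ.comp (comap_measurable _)).stronglyMeasurable (fun ω => norm_div_le_inv_of_norm_le_one
      (by split_ifs <;> simp) h.delta_pos (h.e_mem _ _ (h.binary_X ω)).1) (hr.sub hν) ?_
  have hνXC : P[fun ω => fdNu m q e (X ω) (C ω)|σ[fun ω => (X ω, C ω)]] =
      fun ω => fdNu m q e (X ω) (C ω) :=
    condExp_of_stronglyMeasurable h.comap_XC_le
      (h.measurable_fdNu.comp (comap_measurable _)).stronglyMeasurable hν
  refine (condExp_sub hr hν _).trans ?_
  filter_upwards [h.condExp_fdR_eq_fdNu] with ω hrω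
  rw [Pi.sub_apply, hrω, hνXC, sub_self, Pi.zero_apply]

lemma condExp_fdXi_mul_residual_eq_zero [IsFiniteMeasure P]
    (h : FrontDoorModel P C X Z Y m e q δ) {xb : ℝ} (hxb : xb = 0 ∨ xb = 1) :
    Integrable (fun ω => fdXi q xb (Z ω) (X ω) (C ω) * (Y ω - m (Z ω) (X ω) (C ω))) P ∧
      P[fun ω => fdXi q xb (Z ω) (X ω) (C ω) * (Y ω - m (Z ω) (X ω) (C ω))|σ[C]] =ᵐ[P] 0 := by
  have hξ : Measurable fun p : ℝ × ℝ × 𝒞 => fdXi q xb p.1 p.2.1 p.2.2 := by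
    have := h.measurable_q; unfold fdXi; fun_prop
  have hmZXC : P[fun ω => m (Z ω) (X ω) (C ω)|σ[fun ω => (Z ω, X ω, C ω)]] =
      fun ω => m (Z ω) (X ω) (C ω) :=
    condExp_of_stronglyMeasurable h.comap_ZXC_le
      (h.measurable_m.comp (comap_measurable _)).stronglyMeasurable h.integrable_m_comp
  refine condExp_mul_eq_zero_of_condExp_eq_zero
    ((comap_le_comap_prodMk X C).trans (comap_le_comap_prodMk Z _)) h.comap_ZXC_le
    (hξ.comp (comap_measurable _)).stronglyMeasurable (fun ω => norm_div_le_inv_of_norm_le_one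
      (h.norm_q_le_one (h.binary_Z ω) hxb _) h.delta_pos
      (h.q_mem _ _ _ (h.binary_Z ω) (h.binary_X ω)).1) (h.integrable_Y.sub h.integrable_m_comp) ?_
  refine (condExp_sub h.integrable_Y h.integrable_m_comp _).trans ?_
  filter_upwards [h.condExp_Y] with ω hYω
  rw [Pi.sub_apply, hmZXC, ← hYω, sub_self, Pi.zero_apply]

end FrontDoorModel

theorem fd_pseudo_outcome_consistency_general
    {Ω : Type*} [MeasurableSpace Ω] [MeasurableSpace 𝒞]
    (P : Measure Ω) [IsProbabilityMeasure P]
    (C : Ω → 𝒞) (X Z Y : Ω → ℝ)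
    (hC : Measurable C) (hX : Measurable X) (hZ : Measurable Z)
    (hX01 : ∀ ω, X ω = 0 ∨ X ω = 1) (hZ01 : ∀ ω, Z ω = 0 ∨ Z ω = 1)
    (hY2 : MemLp Y 2 P)
    (m : ℝ → ℝ → 𝒞 → ℝ) (e : ℝ → 𝒞 → ℝ) (q : ℝ → ℝ → 𝒞 → ℝ)
    (hm_meas : Measurable fun p : ℝ × ℝ × 𝒞 => m p.1 p.2.1 p.2.2)
    (he_meas : Measurable fun p : ℝ × 𝒞 => e p.1 p.2)
    (hq_meas : Measurable fun p : ℝ × ℝ × 𝒞 => q p.1 p.2.1 p.2.2)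
    (hm : (fun ω => m (Z ω) (X ω) (C ω))
        =ᵐ[P] P[Y | MeasurableSpace.comap (fun ω => (Z ω, X ω, C ω)) inferInstance])
    (he1 : (fun ω => e 1 (C ω)) =ᵐ[P] P[X | MeasurableSpace.comap C inferInstance])
    (he0 : ∀ c, e 0 c = 1 - e 1 c)
    (hq1 : (fun ω => q 1 (X ω) (C ω))
        =ᵐ[P] P[Z | MeasurableSpace.comap (fun ω => (X ω, C ω)) inferInstance])
    (hq0 : ∀ x c, q 0 x c = 1 - q 1 x c)
    (δ : ℝ) (hδ0 : 0 < δ)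
    (he_pos : ∀ x c, (x = 0 ∨ x = 1) → δ ≤ e x c ∧ e x c ≤ 1 - δ)
    (hq_pos : ∀ z x c, (z = 0 ∨ z = 1) → (x = 0 ∨ x = 1) → δ ≤ q z x c ∧ q z x c ≤ 1 - δ)
    (xb : ℝ) (hxb : xb = 0 ∨ xb = 1) :
    P[(fun ω => fdPhi m e q xb (Z ω) (X ω) (C ω) (Y ω))
        | MeasurableSpace.comap C inferInstance]
      =ᵐ[P] fun ω => fdTau m q e xb (C ω) := by
  have h : FrontDoorModel P C X Z Y m e q δ := ⟨hC, hX, hZ, hX01, hZ01, hY2.integrable one_le_two,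
    hm_meas, he_meas, hq_meas, hm, he1, he0, hq1, hq0, hδ0, he_pos, hq_pos⟩
  obtain ⟨hT1, hT1C⟩ := h.condExp_fdXi_mul_residual_eq_zero hxb
  obtain ⟨hT2, hT2C⟩ := h.condExp_fdPi_mul_eq_zero xb
  obtain ⟨hT3, hT3C⟩ := h.condExp_fdS_eq_fdTau hxb
  refine (condExp_add (hT1.add hT2) hT3 _).trans ?_
  filter_upwards [condExp_add hT1 hT2 (MeasurableSpace.comap C inferInstance), hT1C, hT2C, hT3C]
    with ω h12 h1 h2 h3
  rw [Pi.add_apply, h12, Pi.add_apply, h1, h2, h3, Pi.zero_apply, zero_add, zero_add]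

/-- **FDPO consistency.** For x̄ ∈ {0,1}, the front-door pseudo-outcome at the
true nuisances satisfies E[φ_x̄(V;η) | σ(C)] = τ_x̄(C) almost surely. -/
theorem fd_pseudo_outcome_consistency
    {Ω : Type*} [MeasurableSpace Ω] [MeasurableSpace 𝒞]
    (P : Measure Ω) [IsProbabilityMeasure P]
    (C : Ω → 𝒞) (X Z Y : Ω → ℝ)
    (hC : Measurable C) (hX : Measurable X) (hZ : Measurable Z) (hY : Measurable Y)
    (hX01 : ∀ ω, X ω = 0 ∨ X ω = 1) (hZ01 : ∀ ω, Z ω = 0 ∨ Z ω = 1)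
    (hY2 : MemLp Y 2 P)
    (m : ℝ → ℝ → 𝒞 → ℝ) (e : ℝ → 𝒞 → ℝ) (q : ℝ → ℝ → 𝒞 → ℝ)
    (hm_meas : Measurable fun p : ℝ × ℝ × 𝒞 => m p.1 p.2.1 p.2.2)
    (he_meas : Measurable fun p : ℝ × 𝒞 => e p.1 p.2)
    (hq_meas : Measurable fun p : ℝ × ℝ × 𝒞 => q p.1 p.2.1 p.2.2)
    (hm : (fun ω => m (Z ω) (X ω) (C ω))
        =ᵐ[P] P[Y | MeasurableSpace.comap (fun ω => (Z ω, X ω, C ω)) inferInstance])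
    (he1 : (fun ω => e 1 (C ω)) =ᵐ[P] P[X | MeasurableSpace.comap C inferInstance])
    (he0 : ∀ c, e 0 c = 1 - e 1 c)
    (hq1 : (fun ω => q 1 (X ω) (C ω))
        =ᵐ[P] P[Z | MeasurableSpace.comap (fun ω => (X ω, C ω)) inferInstance])
    (hq0 : ∀ x c, q 0 x c = 1 - q 1 x c)
    (δ : ℝ) (hδ0 : 0 < δ) (hδ2 : δ < 1 / 2)
    (he_pos : ∀ x c, (x = 0 ∨ x = 1) → δ ≤ e x c ∧ e x c ≤ 1 - δ)
    (hq_pos : ∀ z x c, (z = 0 ∨ z = 1) → (x = 0 ∨ x = 1) → δ ≤ q z x c ∧ q z x c ≤ 1 - δ)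
    (xb : ℝ) (hxb : xb = 0 ∨ xb = 1) :
    P[(fun ω => fdPhi m e q xb (Z ω) (X ω) (C ω) (Y ω))
        | MeasurableSpace.comap C inferInstance]
      =ᵐ[P] fun ω => fdTau m q e xb (C ω) :=
  fd_pseudo_outcome_consistency_general P C X Z Y hC hX hZ hX01 hZ01 hY2 m e q hm_meas he_meas
    hq_meas hm he1 he0 hq1 hq0 δ hδ0 he_pos hq_pos xb hxb
end
end

section
/- Fix x̄ ∈ {0,1}. Let m̂, ê, q̂ be arbitrary bounded measurable estimates of m, e, q with δ ≤ ê(x,c), q̂(z,x,c) ≤ 1−δ, and let φ_x̄(V;η̂) denote the front-door pseudo-outcome built from (m̂,ê,q̂). Then the bias decomposes exactly into second-order products: E[φ_x̄(V;η̂)] − E[φ_x̄(V;η)] = E[(m̂−m)(Z,X,C)·(ξ_x̄−ξ̂_x̄)(Z,X,C)] + E[(π̂_x̄−π_x̄)(X,C)·(ν_{m̂qê}−ν_{m̂q̂ê})(X,C)] + Σ_{z,x∈{0,1}} E[m̂(z,x,C)·(q(z,x̄,C)−q̂(z,x̄,C))·(ê(x,C)−e(x,C))]. -/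
open MeasureTheory
open scoped ENNReal

noncomputable section

variable {𝒞 : Type*}

/-!
Conditioning on `σ(Z, X, C)` replaces the outcome `Y` by the regression `m(Z, X, C)`, because the
pseudo-outcome is affine in `Y` with a `σ(Z, X, C)`-measurable slope `ξ̂`. Every remaining integrand
is then a function of `(Z, X, C)`, and the tower property through `σ(X, C)` and `σ(C)` turns its
expectation into that of its four binary slices averaged against the true `q` and `e`. After this
averaging the bias is an identity between finitely many reals in which the first-order error terms
cancel. Strict overlap gives every cell `{Z = z, X = x}` conditional probability at least `δ²`,
which makes the slices `m(z, x, C)` integrable.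
-/

open Filter Topology

section

variable {Ω : Type*} {𝔪 mΩ : MeasurableSpace Ω} {P : Measure Ω}

theorem integrable_comp_of_binary_s2 {W : Ω → ℝ} (hW : ∀ ω, W ω = 0 ∨ W ω = 1) {G : ℝ → Ω → ℝ}
    (hG : AEStronglyMeasurable (fun ω => G (W ω) ω) P) (hG₀ : Integrable (G 0) P)
    (hG₁ : Integrable (G 1) P) : Integrable (fun ω => G (W ω) ω) P :=
  (hG₀.norm.add hG₁.norm).mono' hG <| ae_of_all _ fun ω => by
    rcases hW ω with h | h <;> simp [h]

variable [IsFiniteMeasure P]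

theorem integrable_of_integral_min_abs_le {f : Ω → ℝ} (hf : AEStronglyMeasurable f P) (K : ℝ)
    (hK : ∀ n : ℕ, ∫ ω, min |f ω| n ∂P ≤ K) : Integrable f P := by
  have hmin : ∀ n : ℕ, Integrable (fun ω => min |f ω| n) P := fun n =>
    .of_bound (hf.norm.inf aestronglyMeasurable_const) n <| ae_of_all _ fun ω => by
      rw [Real.norm_eq_abs, abs_of_nonneg (by positivity)]
      exact min_le_right _ _
  have hlim : Tendsto (fun n : ℕ => ∫⁻ ω, ENNReal.ofReal (min |f ω| n) ∂P) atTop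
      (𝓝 (∫⁻ ω, ‖f ω‖ₑ ∂P)) := by
    refine lintegral_tendsto_of_tendsto_of_monotone
      (fun n => (hmin n).aemeasurable.ennreal_ofReal)
      (ae_of_all _ fun ω i j hij =>
        ENNReal.ofReal_le_ofReal (min_le_min_left _ (by exact_mod_cast hij)))
      (ae_of_all _ fun ω => ?_)
    rw [← ofReal_norm, Real.norm_eq_abs]
    exact (ENNReal.continuous_ofReal.tendsto _).comp (tendsto_atTop_of_eventually_const
      (i₀ := ⌈|f ω|⌉₊) fun n hn => min_eq_left ((Nat.le_ceil _).trans (by exact_mod_cast hn)))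
  refine ⟨hf, (le_of_tendsto' (b := ENNReal.ofReal K) hlim fun n => ?_).trans_lt
    ENNReal.ofReal_lt_top⟩
  rw [← ofReal_integral_eq_lintegral_ofReal (hmin n) (ae_of_all _ fun ω => by positivity)]
  exact ENNReal.ofReal_le_ofReal (hK n)

theorem integral_mul_eq_integral_mul_of_ae_eq_condExp (h𝔪 : 𝔪 ≤ mΩ) {f g v : Ω → ℝ}
    (hf : StronglyMeasurable[𝔪] f) (hfg : Integrable (fun ω => f ω * g ω) P)
    (hg : Integrable g P) (hv : v =ᵐ[P] P[g|𝔪]) : ∫ ω, f ω * g ω ∂P = ∫ ω, f ω * v ω ∂P :=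
  calc ∫ ω, f ω * g ω ∂P = ∫ ω, P[f * g|𝔪] ω ∂P := (integral_condExp h𝔪).symm
    _ = ∫ ω, f ω * v ω ∂P := integral_congr_ae <| by
      filter_upwards [condExp_mul_of_stronglyMeasurable_left hf hfg hg, hv] with ω h1 h2
      rw [h1, Pi.mul_apply, h2]

theorem integral_add_mul_eq_of_ae_eq_condExp (h𝔪 : 𝔪 ≤ mΩ) {W p f₀ f₁ : Ω → ℝ} {R : ℝ}
    (hW : AEStronglyMeasurable W P) (hWR : ∀ᵐ ω ∂P, |W ω| ≤ R) (hp : p =ᵐ[P] P[W|𝔪])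
    (hf₀ : Integrable f₀ P) (hf₁ : StronglyMeasurable[𝔪] f₁) (hf₁_int : Integrable f₁ P) :
    ∫ ω, (f₀ ω + f₁ ω * W ω) ∂P = ∫ ω, (f₀ ω + f₁ ω * p ω) ∂P := by
  have hpR : ∀ᵐ ω ∂P, |p ω| ≤ R := by
    filter_upwards [hp, ae_bdd_abs_condExp_of_ae_bdd_abs (m := 𝔪) hWR] with ω h1 h2
    rwa [h1]
  have hp_meas : AEStronglyMeasurable p P :=
    (stronglyMeasurable_condExp.mono h𝔪).aestronglyMeasurable.congr hp.symm
  have hf₁W : Integrable (fun ω => f₁ ω * W ω) P :=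
    hf₁_int.mul_bdd hW (by simpa only [Real.norm_eq_abs])
  rw [integral_add hf₀ hf₁W,
    integral_add hf₀ (hf₁_int.mul_bdd hp_meas (by simpa only [Real.norm_eq_abs])),
    integral_mul_eq_integral_mul_of_ae_eq_condExp h𝔪 hf₁ hf₁W
      (.of_bound hW R (by simpa only [Real.norm_eq_abs])) hp]

end

/-- `E[H(Z, X, C) | C = c]` when `Z, X` are binary, `P(X = x | C = c) = e x c` and
`P(Z = z | X = x, C = c) = q z x c`. -/
def fdCondMean (q : ℝ → ℝ → 𝒞 → ℝ) (e : ℝ → 𝒞 → ℝ) (H : ℝ → ℝ → 𝒞 → ℝ) (c : 𝒞) : ℝ :=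
  ∑ z ∈ ({0, 1} : Finset ℝ), ∑ x ∈ ({0, 1} : Finset ℝ), H z x c * q z x c * e x c

/-- The first-order terms cancel because `ξ_x̄ · q = q(·, x̄, ·)`, `π_x̄ · e = 1{x = x̄}` and
`∑_z q(z, x, c) = 1`. -/
theorem fdCondMean_fdPhi_sub_fdPhi (m mh : ℝ → ℝ → 𝒞 → ℝ) (e eh : ℝ → 𝒞 → ℝ)
    (q qh : ℝ → ℝ → 𝒞 → ℝ) (c : 𝒞) (he0 : e 0 c = 1 - e 1 c)
    (hq0 : ∀ x, q 0 x c = 1 - q 1 x c) (he : ∀ x, (x = 0 ∨ x = 1) → e x c ≠ 0)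
    (hq : ∀ z x, (z = 0 ∨ z = 1) → (x = 0 ∨ x = 1) → q z x c ≠ 0) {xb : ℝ}
    (hxb : xb = 0 ∨ xb = 1) :
    fdCondMean q e (fun z x c => fdPhi mh eh qh xb z x c (m z x c)) c
        - fdCondMean q e (fun z x c => fdPhi m e q xb z x c (m z x c)) c
      = fdCondMean q e (fun z x c => (mh z x c - m z x c) * (fdXi q xb z x c - fdXi qh xb z x c)) c
        + fdCondMean q e (fun _ x c => (fdPi eh xb x c - fdPi e xb x c) *
            (fdNu mh q eh x c - fdNu mh qh eh x c)) c
        + (mh 0 0 c * (q 0 xb c - qh 0 xb c) * (eh 0 c - e 0 c)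
          + mh 0 1 c * (q 0 xb c - qh 0 xb c) * (eh 1 c - e 1 c)
          + mh 1 0 c * (q 1 xb c - qh 1 xb c) * (eh 0 c - e 0 c)
          + mh 1 1 c * (q 1 xb c - qh 1 xb c) * (eh 1 c - e 1 c)) := by
  have := he 0 (.inl rfl)
  have := he 1 (.inr rfl)
  have := hq 0 0 (.inl rfl) (.inl rfl)
  have := hq 0 1 (.inl rfl) (.inr rfl)
  have := hq 1 0 (.inr rfl) (.inl rfl)
  have := hq 1 1 (.inr rfl) (.inr rfl)
  rcases hxb with rfl | rfl <;>
  · simp only [fdCondMean, Finset.sum_pair (zero_ne_one' ℝ), fdPhi, fdXi, fdPi, fdR, fdNu, fdS,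
      if_pos, if_neg, one_ne_zero, zero_ne_one, not_false_eq_true]
    field_simp
    rw [he0, hq0 0, hq0 1]
    ring

section FrontDoor

variable {Ω : Type*} [MeasurableSpace Ω] {P : Measure Ω} {C : Ω → 𝒞}
  {X Z : Ω → ℝ} {m : ℝ → ℝ → 𝒞 → ℝ} {e : ℝ → 𝒞 → ℝ} {q : ℝ → ℝ → 𝒞 → ℝ} {δ xb : ℝ}

theorem integrable_fdR
    (hm : ∀ z x, (z = 0 ∨ z = 1) → (x = 0 ∨ x = 1) → Integrable (fun ω => m z x (C ω)) P)
    (he : ∀ x, (x = 0 ∨ x = 1) → MemLp (fun ω => e x (C ω)) ∞ P) {z : ℝ} (hz : z = 0 ∨ z = 1) :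
    Integrable (fun ω => fdR m e z (C ω)) P :=
  ((hm z 0 hz (.inl rfl)).mul_of_top_left (he 0 (.inl rfl))).add
    ((hm z 1 hz (.inr rfl)).mul_of_top_left (he 1 (.inr rfl)))

theorem integrable_fdNu
    (hm : ∀ z x, (z = 0 ∨ z = 1) → (x = 0 ∨ x = 1) → Integrable (fun ω => m z x (C ω)) P)
    (he : ∀ x, (x = 0 ∨ x = 1) → MemLp (fun ω => e x (C ω)) ∞ P)
    (hq : ∀ z x, (z = 0 ∨ z = 1) → (x = 0 ∨ x = 1) → MemLp (fun ω => q z x (C ω)) ∞ P)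
    {x : ℝ} (hx : x = 0 ∨ x = 1) : Integrable (fun ω => fdNu m q e x (C ω)) P :=
  ((integrable_fdR hm he (.inl rfl)).mul_of_top_left (hq 0 x (.inl rfl) hx)).add
    ((integrable_fdR hm he (.inr rfl)).mul_of_top_left (hq 1 x (.inr rfl) hx))

theorem integrable_fdS
    (hm : ∀ z x, (z = 0 ∨ z = 1) → (x = 0 ∨ x = 1) → Integrable (fun ω => m z x (C ω)) P)
    (hq : ∀ z x, (z = 0 ∨ z = 1) → (x = 0 ∨ x = 1) → MemLp (fun ω => q z x (C ω)) ∞ P)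
    (hxb : xb = 0 ∨ xb = 1) {x : ℝ} (hx : x = 0 ∨ x = 1) :
    Integrable (fun ω => fdS m q xb x (C ω)) P :=
  ((hm 0 x (.inl rfl) hx).mul_of_top_left (hq 0 xb (.inl rfl) hxb)).add
    ((hm 1 x (.inr rfl) hx).mul_of_top_left (hq 1 xb (.inr rfl) hxb))

variable [MeasurableSpace 𝒞]

theorem measurable_fdXi (hq : Measurable fun p : ℝ × ℝ × 𝒞 => q p.1 p.2.1 p.2.2) (xb : ℝ) :
    Measurable fun p : ℝ × ℝ × 𝒞 => fdXi q xb p.1 p.2.1 p.2.2 := by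
  unfold fdXi
  fun_prop

theorem measurable_fdPi (he : Measurable fun p : ℝ × 𝒞 => e p.1 p.2) (xb : ℝ) :
    Measurable fun p : ℝ × 𝒞 => fdPi e xb p.1 p.2 :=
  (measurable_const.ite (measurableSet_eq_fun measurable_fst measurable_const)
    measurable_const).div he

theorem measurable_fdNu (hm : Measurable fun p : ℝ × ℝ × 𝒞 => m p.1 p.2.1 p.2.2)
    (he : Measurable fun p : ℝ × 𝒞 => e p.1 p.2)
    (hq : Measurable fun p : ℝ × ℝ × 𝒞 => q p.1 p.2.1 p.2.2) :
    Measurable fun p : ℝ × 𝒞 => fdNu m q e p.1 p.2 := by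
  simp only [fdNu, fdR]
  fun_prop

theorem measurable_fdPhi (hm : Measurable fun p : ℝ × ℝ × 𝒞 => m p.1 p.2.1 p.2.2)
    (he : Measurable fun p : ℝ × 𝒞 => e p.1 p.2)
    (hq : Measurable fun p : ℝ × ℝ × 𝒞 => q p.1 p.2.1 p.2.2) (xb : ℝ) {y : ℝ → ℝ → 𝒞 → ℝ}
    (hy : Measurable fun p : ℝ × ℝ × 𝒞 => y p.1 p.2.1 p.2.2) :
    Measurable fun p : ℝ × ℝ × 𝒞 => fdPhi m e q xb p.1 p.2.1 p.2.2 (y p.1 p.2.1 p.2.2) := by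
  have := measurable_fdXi hq xb
  have := measurable_fdPi he xb
  have := measurable_fdNu hm he hq
  simp only [fdPhi, fdR, fdS]
  fun_prop

structure PropensityOverlap (δ : ℝ) (e : ℝ → 𝒞 → ℝ) (q : ℝ → ℝ → 𝒞 → ℝ) : Prop where
  pos : 0 < δ
  measurable_e : Measurable fun p : ℝ × 𝒞 => e p.1 p.2
  measurable_q : Measurable fun p : ℝ × ℝ × 𝒞 => q p.1 p.2.1 p.2.2
  e_mem : ∀ x c, (x = 0 ∨ x = 1) → δ ≤ e x c ∧ e x c ≤ 1 - δ
  q_mem : ∀ z x c, (z = 0 ∨ z = 1) → (x = 0 ∨ x = 1) → δ ≤ q z x c ∧ q z x c ≤ 1 - δ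

namespace PropensityOverlap

theorem abs_e_le_one (hov : PropensityOverlap δ e q) {x : ℝ} (hx : x = 0 ∨ x = 1) (c : 𝒞) :
    |e x c| ≤ 1 := by
  obtain ⟨h₁, h₂⟩ := hov.e_mem x c hx
  exact abs_le.2 ⟨by linarith [hov.pos], by linarith [hov.pos]⟩

theorem abs_q_le_one (hov : PropensityOverlap δ e q) {z x : ℝ} (hz : z = 0 ∨ z = 1)
    (hx : x = 0 ∨ x = 1) (c : 𝒞) : |q z x c| ≤ 1 := by
  obtain ⟨h₁, h₂⟩ := hov.q_mem z x c hz hx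
  exact abs_le.2 ⟨by linarith [hov.pos], by linarith [hov.pos]⟩

theorem abs_fdXi_le (hov : PropensityOverlap δ e q) (hxb : xb = 0 ∨ xb = 1) {z x : ℝ}
    (hz : z = 0 ∨ z = 1) (hx : x = 0 ∨ x = 1) (c : 𝒞) : |fdXi q xb z x c| ≤ δ⁻¹ := by
  rw [fdXi, abs_div, abs_of_pos (hov.pos.trans_le (hov.q_mem z x c hz hx).1), ← one_div]
  exact div_le_div₀ zero_le_one (hov.abs_q_le_one hz hxb c) hov.pos (hov.q_mem z x c hz hx).1

theorem abs_fdPi_le (hov : PropensityOverlap δ e q) (xb : ℝ) {x : ℝ} (hx : x = 0 ∨ x = 1)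
    (c : 𝒞) : |fdPi e xb x c| ≤ δ⁻¹ := by
  rw [fdPi, abs_div, abs_of_pos (hov.pos.trans_le (hov.e_mem x c hx).1), ← one_div]
  exact div_le_div₀ zero_le_one (by split_ifs <;> simp) hov.pos (hov.e_mem x c hx).1

theorem memLp_e (hov : PropensityOverlap δ e q) (hC : Measurable C) :
    ∀ x, (x = 0 ∨ x = 1) → MemLp (fun ω => e x (C ω)) ∞ P := fun _ hx =>
  memLp_top_of_bound (hov.measurable_e.comp (measurable_const.prodMk hC)).aestronglyMeasurable 1
    (ae_of_all _ fun ω => hov.abs_e_le_one hx (C ω))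

theorem memLp_q (hov : PropensityOverlap δ e q) (hC : Measurable C) :
    ∀ z x, (z = 0 ∨ z = 1) → (x = 0 ∨ x = 1) → MemLp (fun ω => q z x (C ω)) ∞ P :=
  fun _ _ hz hx => memLp_top_of_bound (hov.measurable_q.comp
    (measurable_const.prodMk (measurable_const.prodMk hC))).aestronglyMeasurable 1
    (ae_of_all _ fun ω => hov.abs_q_le_one hz hx (C ω))

theorem memLp_fdXi (hov : PropensityOverlap δ e q) (hC : Measurable C) (hxb : xb = 0 ∨ xb = 1)
    {z x : ℝ} (hz : z = 0 ∨ z = 1) (hx : x = 0 ∨ x = 1) :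
    MemLp (fun ω => fdXi q xb z x (C ω)) ∞ P :=
  memLp_top_of_bound ((measurable_fdXi hov.measurable_q xb).comp
    (measurable_const.prodMk (measurable_const.prodMk hC))).aestronglyMeasurable δ⁻¹
    (ae_of_all _ fun ω => hov.abs_fdXi_le hxb hz hx (C ω))

theorem memLp_fdPi (hov : PropensityOverlap δ e q) (hC : Measurable C) (xb : ℝ) {x : ℝ}
    (hx : x = 0 ∨ x = 1) : MemLp (fun ω => fdPi e xb x (C ω)) ∞ P :=
  memLp_top_of_bound ((measurable_fdPi hov.measurable_e xb).comp
    (measurable_const.prodMk hC)).aestronglyMeasurable δ⁻¹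
    (ae_of_all _ fun ω => hov.abs_fdPi_le xb hx (C ω))

theorem integrable_fdPhi (hov : PropensityOverlap δ e q) (hC : Measurable C)
    (hm : ∀ z x, (z = 0 ∨ z = 1) → (x = 0 ∨ x = 1) → Integrable (fun ω => m z x (C ω)) P)
    (hxb : xb = 0 ∨ xb = 1) {z x : ℝ} (hz : z = 0 ∨ z = 1) (hx : x = 0 ∨ x = 1) {y : 𝒞 → ℝ}
    (hy : Integrable (fun ω => y (C ω)) P) :
    Integrable (fun ω => fdPhi m e q xb z x (C ω) (y (C ω))) P :=
  (((hy.sub (hm z x hz hx)).mul_of_top_right (hov.memLp_fdXi hC hxb hz hx)).add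
    (((integrable_fdR hm (hov.memLp_e hC) hz).sub
      (integrable_fdNu hm (hov.memLp_e hC) (hov.memLp_q hC) hx)).mul_of_top_right
        (hov.memLp_fdPi hC xb hx))).add (integrable_fdS hm (hov.memLp_q hC) hxb hx)

theorem integrable_fdCondMean (hov : PropensityOverlap δ e q) (hC : Measurable C)
    {H : ℝ → ℝ → 𝒞 → ℝ}
    (hH : ∀ z x, (z = 0 ∨ z = 1) → (x = 0 ∨ x = 1) → Integrable (fun ω => H z x (C ω)) P) :
    Integrable (fun ω => fdCondMean q e H (C ω)) P := by
  refine integrable_finsetSum _ fun z hz => integrable_finsetSum _ fun x hx => ?_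
  simp only [Finset.mem_insert, Finset.mem_singleton] at hz hx
  exact ((hH z x hz hx).mul_of_top_left (hov.memLp_q hC z x hz hx)).mul_of_top_left
    (hov.memLp_e hC x hx)

end PropensityOverlap

structure FrontDoorModel_s2 (P : Measure Ω) (C : Ω → 𝒞) (X Z : Ω → ℝ) (e : ℝ → 𝒞 → ℝ)
    (q : ℝ → ℝ → 𝒞 → ℝ) (δ : ℝ) : Prop extends PropensityOverlap δ e q where
  measurable_C : Measurable C
  measurable_X : Measurable X
  measurable_Z : Measurable Z
  binary_X : ∀ ω, X ω = 0 ∨ X ω = 1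
  binary_Z : ∀ ω, Z ω = 0 ∨ Z ω = 1
  e_ae_eq_condExp : (fun ω => e 1 (C ω)) =ᵐ[P] P[X | MeasurableSpace.comap C inferInstance]
  e_zero : ∀ c, e 0 c = 1 - e 1 c
  q_ae_eq_condExp : (fun ω => q 1 (X ω) (C ω))
    =ᵐ[P] P[Z | MeasurableSpace.comap (fun ω => (X ω, C ω)) inferInstance]
  q_zero : ∀ x c, q 0 x c = 1 - q 1 x c

namespace FrontDoorModel_s2

theorem integrable_comp (hM : FrontDoorModel_s2 P C X Z e q δ) {H : ℝ → ℝ → 𝒞 → ℝ}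
    (hH : Measurable fun p : ℝ × ℝ × 𝒞 => H p.1 p.2.1 p.2.2)
    (hH_int : ∀ z x, (z = 0 ∨ z = 1) → (x = 0 ∨ x = 1) → Integrable (fun ω => H z x (C ω)) P) :
    Integrable (fun ω => H (Z ω) (X ω) (C ω)) P := by
  have hC := hM.measurable_C
  have hX := hM.measurable_X
  have hZ := hM.measurable_Z
  have hHX : ∀ z, (z = 0 ∨ z = 1) → Integrable (fun ω => H z (X ω) (C ω)) P := fun z hz =>
    integrable_comp_of_binary_s2 hM.binary_X (G := fun x ω => H z x (C ω))
      (by fun_prop : Measurable fun ω => H z (X ω) (C ω)).aestronglyMeasurable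
      (hH_int z 0 hz (.inl rfl)) (hH_int z 1 hz (.inr rfl))
  exact integrable_comp_of_binary_s2 hM.binary_Z (G := fun z ω => H z (X ω) (C ω))
    (by fun_prop : Measurable fun ω => H (Z ω) (X ω) (C ω)).aestronglyMeasurable
    (hHX 0 (.inl rfl)) (hHX 1 (.inr rfl))

theorem integral_comp [IsFiniteMeasure P] (hM : FrontDoorModel_s2 P C X Z e q δ)
    {H : ℝ → ℝ → 𝒞 → ℝ} (hH : Measurable fun p : ℝ × ℝ × 𝒞 => H p.1 p.2.1 p.2.2)
    (hH_int : ∀ z x, (z = 0 ∨ z = 1) → (x = 0 ∨ x = 1) → Integrable (fun ω => H z x (C ω)) P) :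
    ∫ ω, H (Z ω) (X ω) (C ω) ∂P = ∫ ω, fdCondMean q e H (C ω) ∂P := by
  have hC := hM.measurable_C
  have hX := hM.measurable_X
  have hq := hM.measurable_q
  have hbin : ∀ {W : Ω → ℝ}, (∀ ω, W ω = 0 ∨ W ω = 1) → ∀ᵐ ω ∂P, |W ω| ≤ 1 := fun hW =>
    ae_of_all _ fun ω => by rcases hW ω with h | h <;> simp [h]
  set G : ℝ → 𝒞 → ℝ := fun x c => H 0 x c + (H 1 x c - H 0 x c) * q 1 x c with hG
  have hG_int : ∀ x, (x = 0 ∨ x = 1) → Integrable (fun ω => G x (C ω)) P := fun x hx =>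
    (hH_int 0 x (.inl rfl) hx).add (((hH_int 1 x (.inr rfl) hx).sub
      (hH_int 0 x (.inl rfl) hx)).mul_of_top_left (hM.memLp_q hC 1 x (.inr rfl) hx))
  have hZ_step := integral_add_mul_eq_of_ae_eq_condExp (hX.prodMk hC).comap_le
    hM.measurable_Z.aestronglyMeasurable (hbin hM.binary_Z) hM.q_ae_eq_condExp
    (hM.integrable_comp (H := fun _ x c => H 0 x c) (by fun_prop)
      fun _ x _ hx => hH_int 0 x (.inl rfl) hx)
    (((by fun_prop : Measurable fun p : ℝ × 𝒞 => H 1 p.1 p.2 - H 0 p.1 p.2).comp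
      (comap_measurable _)).stronglyMeasurable)
    (hM.integrable_comp (H := fun _ x c => H 1 x c - H 0 x c) (by fun_prop)
      fun _ x _ hx => (hH_int 1 x (.inr rfl) hx).sub (hH_int 0 x (.inl rfl) hx))
  have hX_step := integral_add_mul_eq_of_ae_eq_condExp hC.comap_le
    hX.aestronglyMeasurable (hbin hM.binary_X) hM.e_ae_eq_condExp (hG_int 0 (.inl rfl))
    (((by fun_prop : Measurable fun c => G 1 c - G 0 c).comp
      (comap_measurable _)).stronglyMeasurable)
    ((hG_int 1 (.inr rfl)).sub (hG_int 0 (.inl rfl)))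
  calc ∫ ω, H (Z ω) (X ω) (C ω) ∂P
      = ∫ ω, (H 0 (X ω) (C ω) + (H 1 (X ω) (C ω) - H 0 (X ω) (C ω)) * Z ω) ∂P :=
        integral_congr_ae <| ae_of_all _ fun ω => by
          rcases hM.binary_Z ω with h | h <;> simp [h]
    _ = ∫ ω, (H 0 (X ω) (C ω) + (H 1 (X ω) (C ω) - H 0 (X ω) (C ω)) * q 1 (X ω) (C ω)) ∂P :=
        hZ_step
    _ = ∫ ω, (G 0 (C ω) + (G 1 (C ω) - G 0 (C ω)) * X ω) ∂P :=
        integral_congr_ae <| ae_of_all _ fun ω => by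
          rcases hM.binary_X ω with h | h <;> simp [h, hG]
    _ = ∫ ω, (G 0 (C ω) + (G 1 (C ω) - G 0 (C ω)) * e 1 (C ω)) ∂P := hX_step
    _ = ∫ ω, fdCondMean q e H (C ω) ∂P := by
        refine integral_congr_ae <| ae_of_all _ fun ω => ?_
        simp only [fdCondMean, Finset.sum_pair (zero_ne_one' ℝ), hG, hM.e_zero, hM.q_zero]
        ring

/-- `E|m(z, x, C)| ≤ E|m(Z, X, C)| / δ²`, argued on the truncations `min |m| n` since the
tower property needs integrable slices. -/
theorem integrable_slice [IsFiniteMeasure P] (hM : FrontDoorModel_s2 P C X Z e q δ)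
    (hm : Measurable fun p : ℝ × ℝ × 𝒞 => m p.1 p.2.1 p.2.2)
    (hm_int : Integrable (fun ω => m (Z ω) (X ω) (C ω)) P) :
    ∀ z x, (z = 0 ∨ z = 1) → (x = 0 ∨ x = 1) → Integrable (fun ω => m z x (C ω)) P := by
  intro z x hz hx
  have hC := hM.measurable_C
  have he := hM.measurable_e
  have hq := hM.measurable_q
  have hδ := hM.pos
  have hqe : ∀ z x c, (z = 0 ∨ z = 1) → (x = 0 ∨ x = 1) → δ * δ ≤ q z x c * e x c :=
    fun z x c hz hx => mul_le_mul (hM.q_mem z x c hz hx).1 (hM.e_mem x c hx).1 hδ.le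
      (hδ.le.trans (hM.q_mem z x c hz hx).1)
  set T : ℕ → ℝ → ℝ → 𝒞 → ℝ := fun n z x c => min |m z x c| n / (q z x c * e x c) with hT
  have hT_meas : ∀ n, Measurable fun p : ℝ × ℝ × 𝒞 => T n p.1 p.2.1 p.2.2 := fun n => by
    simp only [hT]
    fun_prop
  have hT_int : ∀ n z x, (z = 0 ∨ z = 1) → (x = 0 ∨ x = 1) →
      Integrable (fun ω => T n z x (C ω)) P := fun n z x hz hx =>
    .of_bound (((hT_meas n).comp (measurable_const.prodMk
      (measurable_const.prodMk hC))).aestronglyMeasurable) (n / (δ * δ)) <| ae_of_all _ fun ω => by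
        have hpos := (mul_pos hδ hδ).trans_le (hqe z x (C ω) hz hx)
        rw [Real.norm_eq_abs, abs_div, abs_of_pos hpos,
          abs_of_nonneg (le_min (abs_nonneg _) n.cast_nonneg)]
        exact div_le_div₀ (by positivity) (min_le_right _ _) (by positivity) (hqe z x (C ω) hz hx)
  have hmean : ∀ n c, fdCondMean q e (T n) c
      = ∑ z ∈ ({0, 1} : Finset ℝ), ∑ x ∈ ({0, 1} : Finset ℝ), min |m z x c| n := fun n c =>
    Finset.sum_congr rfl fun z hz => Finset.sum_congr rfl fun x hx => by
      simp only [Finset.mem_insert, Finset.mem_singleton] at hz hx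
      rw [hT, mul_assoc, div_mul_cancel₀ _ (by linarith [hqe z x c hz hx, mul_pos hδ hδ])]
  refine integrable_of_integral_min_abs_le (hm.comp (measurable_const.prodMk
    (measurable_const.prodMk hC))).aestronglyMeasurable
    ((∫ ω, |m (Z ω) (X ω) (C ω)| ∂P) / (δ * δ)) fun n => ?_
  calc ∫ ω, min |m z x (C ω)| n ∂P ≤ ∫ ω, fdCondMean q e (T n) (C ω) ∂P := by
        refine integral_mono_of_nonneg (ae_of_all _ fun ω => by positivity)
          (hM.integrable_fdCondMean hC (hT_int n)) (ae_of_all _ fun ω => ?_)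
        dsimp only
        rw [hmean n (C ω)]
        have hz' : z ∈ ({0, 1} : Finset ℝ) := by simpa using hz
        have hx' : x ∈ ({0, 1} : Finset ℝ) := by simpa using hx
        exact (Finset.single_le_sum (f := fun x => min |m z x (C ω)| n)
          (fun _ _ => by positivity) hx').trans (Finset.single_le_sum
            (f := fun z => ∑ x ∈ ({0, 1} : Finset ℝ), min |m z x (C ω)| n)
            (fun _ _ => Finset.sum_nonneg fun _ _ => by positivity) hz')
    _ = ∫ ω, T n (Z ω) (X ω) (C ω) ∂P := (hM.integral_comp (hT_meas n) (hT_int n)).symm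
    _ ≤ ∫ ω, |m (Z ω) (X ω) (C ω)| / (δ * δ) ∂P :=
        integral_mono (hM.integrable_comp (hT_meas n) (hT_int n)) (hm_int.abs.div_const _)
          fun ω => div_le_div₀ (abs_nonneg _) (min_le_left _ _) (by positivity)
            (hqe _ _ _ (hM.binary_Z ω) (hM.binary_X ω))
    _ = (∫ ω, |m (Z ω) (X ω) (C ω)| ∂P) / (δ * δ) := integral_div _ _

theorem integral_fdPhi_eq [IsFiniteMeasure P] (hM : FrontDoorModel_s2 P C X Z e q δ)
    {Y : Ω → ℝ} (hY : Integrable Y P)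
    (hm : (fun ω => m (Z ω) (X ω) (C ω))
      =ᵐ[P] P[Y | MeasurableSpace.comap (fun ω => (Z ω, X ω, C ω)) inferInstance])
    {m' : ℝ → ℝ → 𝒞 → ℝ} {e' : ℝ → 𝒞 → ℝ} {q' : ℝ → ℝ → 𝒞 → ℝ} {δ' : ℝ}
    (hov : PropensityOverlap δ' e' q') (hm' : Measurable fun p : ℝ × ℝ × 𝒞 => m' p.1 p.2.1 p.2.2)
    (hm'_int : ∀ z x, (z = 0 ∨ z = 1) → (x = 0 ∨ x = 1) → Integrable (fun ω => m' z x (C ω)) P)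
    (hm_meas : Measurable fun p : ℝ × ℝ × 𝒞 => m p.1 p.2.1 p.2.2)
    (hm_int : ∀ z x, (z = 0 ∨ z = 1) → (x = 0 ∨ x = 1) → Integrable (fun ω => m z x (C ω)) P)
    (hxb : xb = 0 ∨ xb = 1) :
    ∫ ω, fdPhi m' e' q' xb (Z ω) (X ω) (C ω) (Y ω) ∂P
      = ∫ ω, fdPhi m' e' q' xb (Z ω) (X ω) (C ω) (m (Z ω) (X ω) (C ω)) ∂P := by
  have hint := hM.integrable_comp (H := fun z x c => fdPhi m' e' q' xb z x c (m z x c))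
    (measurable_fdPhi hm' hov.measurable_e hov.measurable_q xb hm_meas) fun z x hz hx =>
      hov.integrable_fdPhi hM.measurable_C hm'_int hxb hz hx (hm_int z x hz hx)
  have hZXC : Measurable fun ω => (Z ω, X ω, C ω) :=
    hM.measurable_Z.prodMk (hM.measurable_X.prodMk hM.measurable_C)
  have hξ : StronglyMeasurable[MeasurableSpace.comap (fun ω => (Z ω, X ω, C ω)) inferInstance]
      fun ω => fdXi q' xb (Z ω) (X ω) (C ω) :=
    ((measurable_fdXi hov.measurable_q xb).comp (comap_measurable _)).stronglyMeasurable
  have hξ_bdd : ∀ᵐ ω ∂P, ‖fdXi q' xb (Z ω) (X ω) (C ω)‖ ≤ δ'⁻¹ :=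
    ae_of_all _ fun ω => hov.abs_fdXi_le hxb (hM.binary_Z ω) (hM.binary_X ω) _
  have hξY := hY.bdd_mul (hξ.mono hZXC.comap_le).aestronglyMeasurable hξ_bdd
  have hξm := (integrable_condExp.congr hm.symm).bdd_mul
    (hξ.mono hZXC.comap_le).aestronglyMeasurable hξ_bdd
  calc ∫ ω, fdPhi m' e' q' xb (Z ω) (X ω) (C ω) (Y ω) ∂P
      = ∫ ω, (fdPhi m' e' q' xb (Z ω) (X ω) (C ω) (m (Z ω) (X ω) (C ω))
          + (fdXi q' xb (Z ω) (X ω) (C ω) * Y ω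
            - fdXi q' xb (Z ω) (X ω) (C ω) * m (Z ω) (X ω) (C ω))) ∂P :=
        integral_congr_ae <| ae_of_all _ fun ω => by simp only [fdPhi]; ring
    _ = ∫ ω, fdPhi m' e' q' xb (Z ω) (X ω) (C ω) (m (Z ω) (X ω) (C ω)) ∂P := by
        rw [integral_add hint, integral_sub hξY hξm,
          integral_mul_eq_integral_mul_of_ae_eq_condExp hZXC.comap_le hξ hξY hY hm,
          sub_self, add_zero]
        exact hξY.sub hξm

theorem integral_fdPhi_sub_fdPhi_eq_integral [IsFiniteMeasure P]
    (hM : FrontDoorModel_s2 P C X Z e q δ)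
    {mh : ℝ → ℝ → 𝒞 → ℝ} {eh : ℝ → 𝒞 → ℝ} {qh : ℝ → ℝ → 𝒞 → ℝ} {δ' : ℝ}
    (hovh : PropensityOverlap δ' eh qh)
    (hm : Measurable fun p : ℝ × ℝ × 𝒞 => m p.1 p.2.1 p.2.2)
    (hm_int : ∀ z x, (z = 0 ∨ z = 1) → (x = 0 ∨ x = 1) → Integrable (fun ω => m z x (C ω)) P)
    (hmh : Measurable fun p : ℝ × ℝ × 𝒞 => mh p.1 p.2.1 p.2.2)
    (hmh_int : ∀ z x, (z = 0 ∨ z = 1) → (x = 0 ∨ x = 1) → Integrable (fun ω => mh z x (C ω)) P)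
    (hxb : xb = 0 ∨ xb = 1) :
    (∫ ω, fdPhi mh eh qh xb (Z ω) (X ω) (C ω) (m (Z ω) (X ω) (C ω)) ∂P)
        - (∫ ω, fdPhi m e q xb (Z ω) (X ω) (C ω) (m (Z ω) (X ω) (C ω)) ∂P)
      = ∫ ω, (fdCondMean q e (fun z x c => (mh z x c - m z x c) *
            (fdXi q xb z x c - fdXi qh xb z x c)) (C ω)
          + fdCondMean q e (fun _ x c => (fdPi eh xb x c - fdPi e xb x c) *
            (fdNu mh q eh x c - fdNu mh qh eh x c)) (C ω)
          + (mh 0 0 (C ω) * (q 0 xb (C ω) - qh 0 xb (C ω)) * (eh 0 (C ω) - e 0 (C ω))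
            + mh 0 1 (C ω) * (q 0 xb (C ω) - qh 0 xb (C ω)) * (eh 1 (C ω) - e 1 (C ω))
            + mh 1 0 (C ω) * (q 1 xb (C ω) - qh 1 xb (C ω)) * (eh 0 (C ω) - e 0 (C ω))
            + mh 1 1 (C ω) * (q 1 xb (C ω) - qh 1 xb (C ω)) * (eh 1 (C ω) - e 1 (C ω)))) ∂P := by
  have hC := hM.measurable_C
  have hov := hM.toPropensityOverlap
  have hφh_int : ∀ z x, (z = 0 ∨ z = 1) → (x = 0 ∨ x = 1) →
      Integrable (fun ω => fdPhi mh eh qh xb z x (C ω) (m z x (C ω))) P := fun z x hz hx =>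
    hovh.integrable_fdPhi hC hmh_int hxb hz hx (hm_int z x hz hx)
  have hφ_int : ∀ z x, (z = 0 ∨ z = 1) → (x = 0 ∨ x = 1) →
      Integrable (fun ω => fdPhi m e q xb z x (C ω) (m z x (C ω))) P := fun z x hz hx =>
    hov.integrable_fdPhi hC hm_int hxb hz hx (hm_int z x hz hx)
  rw [hM.integral_comp (H := fun z x c => fdPhi mh eh qh xb z x c (m z x c))
      (measurable_fdPhi hmh hovh.measurable_e hovh.measurable_q xb hm) hφh_int,
    hM.integral_comp (H := fun z x c => fdPhi m e q xb z x c (m z x c))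
      (measurable_fdPhi hm hov.measurable_e hov.measurable_q xb hm) hφ_int,
    ← integral_sub (hov.integrable_fdCondMean hC hφh_int) (hov.integrable_fdCondMean hC hφ_int)]
  exact integral_congr_ae <| ae_of_all _ fun ω =>
    fdCondMean_fdPhi_sub_fdPhi m mh e eh q qh (C ω) (hM.e_zero _) (fun x => hM.q_zero x _)
      (fun x hx => (hov.pos.trans_le (hov.e_mem x _ hx).1).ne')
      (fun z x hz hx => (hov.pos.trans_le (hov.q_mem z x _ hz hx).1).ne') hxb

theorem integral_fdPhi_sub_fdPhi [IsFiniteMeasure P] (hM : FrontDoorModel_s2 P C X Z e q δ)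
    {mh : ℝ → ℝ → 𝒞 → ℝ} {eh : ℝ → 𝒞 → ℝ} {qh : ℝ → ℝ → 𝒞 → ℝ} {δ' : ℝ}
    (hovh : PropensityOverlap δ' eh qh)
    (hm : Measurable fun p : ℝ × ℝ × 𝒞 => m p.1 p.2.1 p.2.2)
    (hm_int : ∀ z x, (z = 0 ∨ z = 1) → (x = 0 ∨ x = 1) → Integrable (fun ω => m z x (C ω)) P)
    (hmh : Measurable fun p : ℝ × ℝ × 𝒞 => mh p.1 p.2.1 p.2.2)
    (hmh_int : ∀ z x, (z = 0 ∨ z = 1) → (x = 0 ∨ x = 1) → Integrable (fun ω => mh z x (C ω)) P)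
    (hxb : xb = 0 ∨ xb = 1) :
    (∫ ω, fdPhi mh eh qh xb (Z ω) (X ω) (C ω) (m (Z ω) (X ω) (C ω)) ∂P)
        - (∫ ω, fdPhi m e q xb (Z ω) (X ω) (C ω) (m (Z ω) (X ω) (C ω)) ∂P)
      = (∫ ω, (mh (Z ω) (X ω) (C ω) - m (Z ω) (X ω) (C ω)) *
            (fdXi q xb (Z ω) (X ω) (C ω) - fdXi qh xb (Z ω) (X ω) (C ω)) ∂P)
        + (∫ ω, (fdPi eh xb (X ω) (C ω) - fdPi e xb (X ω) (C ω)) *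
            (fdNu mh q eh (X ω) (C ω) - fdNu mh qh eh (X ω) (C ω)) ∂P)
        + ((∫ ω, mh 0 0 (C ω) * (q 0 xb (C ω) - qh 0 xb (C ω)) * (eh 0 (C ω) - e 0 (C ω)) ∂P)
          + (∫ ω, mh 0 1 (C ω) * (q 0 xb (C ω) - qh 0 xb (C ω)) * (eh 1 (C ω) - e 1 (C ω)) ∂P)
          + (∫ ω, mh 1 0 (C ω) * (q 1 xb (C ω) - qh 1 xb (C ω)) * (eh 0 (C ω) - e 0 (C ω)) ∂P)
          + (∫ ω, mh 1 1 (C ω) * (q 1 xb (C ω) - qh 1 xb (C ω)) * (eh 1 (C ω) - e 1 (C ω)) ∂P))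
    := by
  have hC := hM.measurable_C
  have hov := hM.toPropensityOverlap
  set H₁ : ℝ → ℝ → 𝒞 → ℝ :=
    fun z x c => (mh z x c - m z x c) * (fdXi q xb z x c - fdXi qh xb z x c) with hH₁
  set H₂ : ℝ → ℝ → 𝒞 → ℝ := fun _ x c =>
    (fdPi eh xb x c - fdPi e xb x c) * (fdNu mh q eh x c - fdNu mh qh eh x c) with hH₂
  have hH₁_meas : Measurable fun p : ℝ × ℝ × 𝒞 => H₁ p.1 p.2.1 p.2.2 := by
    have := measurable_fdXi hov.measurable_q xb
    have := measurable_fdXi hovh.measurable_q xb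
    simp only [hH₁]
    fun_prop
  have hH₂_meas : Measurable fun p : ℝ × ℝ × 𝒞 => H₂ p.1 p.2.1 p.2.2 := by
    have := measurable_fdPi hov.measurable_e xb
    have := measurable_fdPi hovh.measurable_e xb
    have := measurable_fdNu hmh hovh.measurable_e hov.measurable_q
    have := measurable_fdNu hmh hovh.measurable_e hovh.measurable_q
    simp only [hH₂]
    fun_prop
  have hH₁_int : ∀ z x, (z = 0 ∨ z = 1) → (x = 0 ∨ x = 1) →
      Integrable (fun ω => H₁ z x (C ω)) P := fun z x hz hx =>
    ((hmh_int z x hz hx).sub (hm_int z x hz hx)).mul_of_top_left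
      ((hov.memLp_fdXi hC hxb hz hx).sub (hovh.memLp_fdXi hC hxb hz hx))
  have hH₂_int : ∀ z x, (z = 0 ∨ z = 1) → (x = 0 ∨ x = 1) →
      Integrable (fun ω => H₂ z x (C ω)) P := fun _ x _ hx =>
    ((integrable_fdNu hmh_int (hovh.memLp_e hC) (hov.memLp_q hC) hx).sub
      (integrable_fdNu hmh_int (hovh.memLp_e hC) (hovh.memLp_q hC) hx)).mul_of_top_right
        ((hovh.memLp_fdPi hC xb hx).sub (hov.memLp_fdPi hC xb hx))
  have ht : ∀ z x, (z = 0 ∨ z = 1) → (x = 0 ∨ x = 1) → Integrable (fun ω =>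
      mh z x (C ω) * (q z xb (C ω) - qh z xb (C ω)) * (eh x (C ω) - e x (C ω))) P :=
    fun z x hz hx => ((hmh_int z x hz hx).mul_of_top_left ((hov.memLp_q hC z xb hz hxb).sub
      (hovh.memLp_q hC z xb hz hxb))).mul_of_top_left
        ((hovh.memLp_e hC x hx).sub (hov.memLp_e hC x hx))
  have := hov.integrable_fdCondMean hC hH₁_int
  have := hov.integrable_fdCondMean hC hH₂_int
  have := ht 0 0 (.inl rfl) (.inl rfl)
  have := ht 0 1 (.inl rfl) (.inr rfl)
  have := ht 1 0 (.inr rfl) (.inl rfl)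
  have := ht 1 1 (.inr rfl) (.inr rfl)
  rw [hM.integral_fdPhi_sub_fdPhi_eq_integral hovh hm hm_int hmh hmh_int hxb,
    hM.integral_comp hH₁_meas hH₁_int, hM.integral_comp hH₂_meas hH₂_int]
  rw [integral_add, integral_add, integral_add, integral_add, integral_add] <;>
    (repeat' apply Integrable.add) <;> assumption

end FrontDoorModel_s2

end FrontDoor

theorem fd_pseudo_outcome_double_robustness_general
    {Ω : Type*} [MeasurableSpace Ω] [MeasurableSpace 𝒞]
    (P : Measure Ω) [IsProbabilityMeasure P]
    (C : Ω → 𝒞) (X Z Y : Ω → ℝ)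
    (hC : Measurable C) (hX : Measurable X) (hZ : Measurable Z)
    (hX01 : ∀ ω, X ω = 0 ∨ X ω = 1) (hZ01 : ∀ ω, Z ω = 0 ∨ Z ω = 1)
    (hY2 : MemLp Y 2 P)
    (m : ℝ → ℝ → 𝒞 → ℝ) (e : ℝ → 𝒞 → ℝ) (q : ℝ → ℝ → 𝒞 → ℝ)
    (hm_meas : Measurable fun p : ℝ × ℝ × 𝒞 => m p.1 p.2.1 p.2.2)
    (he_meas : Measurable fun p : ℝ × 𝒞 => e p.1 p.2)
    (hq_meas : Measurable fun p : ℝ × ℝ × 𝒞 => q p.1 p.2.1 p.2.2)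
    (hm : (fun ω => m (Z ω) (X ω) (C ω))
        =ᵐ[P] P[Y | MeasurableSpace.comap (fun ω => (Z ω, X ω, C ω)) inferInstance])
    (he1 : (fun ω => e 1 (C ω)) =ᵐ[P] P[X | MeasurableSpace.comap C inferInstance])
    (he0 : ∀ c, e 0 c = 1 - e 1 c)
    (hq1 : (fun ω => q 1 (X ω) (C ω))
        =ᵐ[P] P[Z | MeasurableSpace.comap (fun ω => (X ω, C ω)) inferInstance])
    (hq0 : ∀ x c, q 0 x c = 1 - q 1 x c)
    (δ : ℝ) (hδ0 : 0 < δ)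
    (he_pos : ∀ x c, (x = 0 ∨ x = 1) → δ ≤ e x c ∧ e x c ≤ 1 - δ)
    (hq_pos : ∀ z x c, (z = 0 ∨ z = 1) → (x = 0 ∨ x = 1) → δ ≤ q z x c ∧ q z x c ≤ 1 - δ)
    -- arbitrary bounded measurable estimates (m̂,ê,q̂)
    (mh : ℝ → ℝ → 𝒞 → ℝ) (eh : ℝ → 𝒞 → ℝ) (qh : ℝ → ℝ → 𝒞 → ℝ)
    (hmh_meas : Measurable fun p : ℝ × ℝ × 𝒞 => mh p.1 p.2.1 p.2.2)
    (heh_meas : Measurable fun p : ℝ × 𝒞 => eh p.1 p.2)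
    (hqh_meas : Measurable fun p : ℝ × ℝ × 𝒞 => qh p.1 p.2.1 p.2.2)
    (Bm : ℝ) (hmh_bdd : ∀ z x c, |mh z x c| ≤ Bm)
    (heh_pos : ∀ x c, (x = 0 ∨ x = 1) → δ ≤ eh x c ∧ eh x c ≤ 1 - δ)
    (hqh_pos : ∀ z x c, (z = 0 ∨ z = 1) → (x = 0 ∨ x = 1) → δ ≤ qh z x c ∧ qh z x c ≤ 1 - δ)
    (xb : ℝ) (hxb : xb = 0 ∨ xb = 1) :
    (∫ ω, fdPhi mh eh qh xb (Z ω) (X ω) (C ω) (Y ω) ∂P)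
        - (∫ ω, fdPhi m e q xb (Z ω) (X ω) (C ω) (Y ω) ∂P)
      = (∫ ω, (mh (Z ω) (X ω) (C ω) - m (Z ω) (X ω) (C ω)) *
            (fdXi q xb (Z ω) (X ω) (C ω) - fdXi qh xb (Z ω) (X ω) (C ω)) ∂P)
        + (∫ ω, (fdPi eh xb (X ω) (C ω) - fdPi e xb (X ω) (C ω)) *
            (fdNu mh q eh (X ω) (C ω) - fdNu mh qh eh (X ω) (C ω)) ∂P)
        + ((∫ ω, mh 0 0 (C ω) * (q 0 xb (C ω) - qh 0 xb (C ω)) * (eh 0 (C ω) - e 0 (C ω)) ∂P)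
          + (∫ ω, mh 0 1 (C ω) * (q 0 xb (C ω) - qh 0 xb (C ω)) * (eh 1 (C ω) - e 1 (C ω)) ∂P)
          + (∫ ω, mh 1 0 (C ω) * (q 1 xb (C ω) - qh 1 xb (C ω)) * (eh 0 (C ω) - e 0 (C ω)) ∂P)
          + (∫ ω, mh 1 1 (C ω) * (q 1 xb (C ω) - qh 1 xb (C ω)) * (eh 1 (C ω) - e 1 (C ω)) ∂P)) := by
  have hM : FrontDoorModel_s2 P C X Z e q δ :=
    { pos := hδ0, measurable_e := he_meas, measurable_q := hq_meas, e_mem := he_pos,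
      q_mem := hq_pos, measurable_C := hC, measurable_X := hX, measurable_Z := hZ,
      binary_X := hX01, binary_Z := hZ01, e_ae_eq_condExp := he1, e_zero := he0,
      q_ae_eq_condExp := hq1, q_zero := hq0 }
  have hovh : PropensityOverlap δ eh qh := ⟨hδ0, heh_meas, hqh_meas, heh_pos, hqh_pos⟩
  have hY : Integrable Y P := hY2.integrable one_le_two
  have hm_int := hM.integrable_slice hm_meas (integrable_condExp.congr hm.symm)
  have hmh_int : ∀ z x, (z = 0 ∨ z = 1) → (x = 0 ∨ x = 1) →
      Integrable (fun ω => mh z x (C ω)) P := fun z x _ _ =>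
    .of_bound (hmh_meas.comp (measurable_const.prodMk
      (measurable_const.prodMk hC))).aestronglyMeasurable Bm (ae_of_all _ fun ω => hmh_bdd z x _)
  rw [hM.integral_fdPhi_eq hY hm hovh hmh_meas hmh_int hm_meas hm_int hxb,
    hM.integral_fdPhi_eq hY hm hM.toPropensityOverlap hm_meas hm_int hm_meas hm_int hxb]
  exact hM.integral_fdPhi_sub_fdPhi hovh hm_meas hm_int hmh_meas hmh_int hxb

/-- **FDPO double robustness.** For arbitrary bounded measurable estimates
(m̂,ê,q̂) with δ ≤ ê, q̂ ≤ 1−δ, the bias of the front-door pseudo-outcome decomposes exactly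
into second-order products of nuisance errors. -/
theorem fd_pseudo_outcome_double_robustness
    {Ω : Type*} [MeasurableSpace Ω] [MeasurableSpace 𝒞]
    (P : Measure Ω) [IsProbabilityMeasure P]
    (C : Ω → 𝒞) (X Z Y : Ω → ℝ)
    (hC : Measurable C) (hX : Measurable X) (hZ : Measurable Z) (hY : Measurable Y)
    (hX01 : ∀ ω, X ω = 0 ∨ X ω = 1) (hZ01 : ∀ ω, Z ω = 0 ∨ Z ω = 1)
    (hY2 : MemLp Y 2 P)
    (m : ℝ → ℝ → 𝒞 → ℝ) (e : ℝ → 𝒞 → ℝ) (q : ℝ → ℝ → 𝒞 → ℝ)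
    (hm_meas : Measurable fun p : ℝ × ℝ × 𝒞 => m p.1 p.2.1 p.2.2)
    (he_meas : Measurable fun p : ℝ × 𝒞 => e p.1 p.2)
    (hq_meas : Measurable fun p : ℝ × ℝ × 𝒞 => q p.1 p.2.1 p.2.2)
    (hm : (fun ω => m (Z ω) (X ω) (C ω))
        =ᵐ[P] P[Y | MeasurableSpace.comap (fun ω => (Z ω, X ω, C ω)) inferInstance])
    (he1 : (fun ω => e 1 (C ω)) =ᵐ[P] P[X | MeasurableSpace.comap C inferInstance])
    (he0 : ∀ c, e 0 c = 1 - e 1 c)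
    (hq1 : (fun ω => q 1 (X ω) (C ω))
        =ᵐ[P] P[Z | MeasurableSpace.comap (fun ω => (X ω, C ω)) inferInstance])
    (hq0 : ∀ x c, q 0 x c = 1 - q 1 x c)
    (δ : ℝ) (hδ0 : 0 < δ) (hδ2 : δ < 1 / 2)
    (he_pos : ∀ x c, (x = 0 ∨ x = 1) → δ ≤ e x c ∧ e x c ≤ 1 - δ)
    (hq_pos : ∀ z x c, (z = 0 ∨ z = 1) → (x = 0 ∨ x = 1) → δ ≤ q z x c ∧ q z x c ≤ 1 - δ)
    -- arbitrary bounded measurable estimates (m̂,ê,q̂)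
    (mh : ℝ → ℝ → 𝒞 → ℝ) (eh : ℝ → 𝒞 → ℝ) (qh : ℝ → ℝ → 𝒞 → ℝ)
    (hmh_meas : Measurable fun p : ℝ × ℝ × 𝒞 => mh p.1 p.2.1 p.2.2)
    (heh_meas : Measurable fun p : ℝ × 𝒞 => eh p.1 p.2)
    (hqh_meas : Measurable fun p : ℝ × ℝ × 𝒞 => qh p.1 p.2.1 p.2.2)
    (Bm : ℝ) (hmh_bdd : ∀ z x c, |mh z x c| ≤ Bm)
    (heh_pos : ∀ x c, (x = 0 ∨ x = 1) → δ ≤ eh x c ∧ eh x c ≤ 1 - δ)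
    (hqh_pos : ∀ z x c, (z = 0 ∨ z = 1) → (x = 0 ∨ x = 1) → δ ≤ qh z x c ∧ qh z x c ≤ 1 - δ)
    (xb : ℝ) (hxb : xb = 0 ∨ xb = 1) :
    (∫ ω, fdPhi mh eh qh xb (Z ω) (X ω) (C ω) (Y ω) ∂P)
        - (∫ ω, fdPhi m e q xb (Z ω) (X ω) (C ω) (Y ω) ∂P)
      = (∫ ω, (mh (Z ω) (X ω) (C ω) - m (Z ω) (X ω) (C ω)) *
            (fdXi q xb (Z ω) (X ω) (C ω) - fdXi qh xb (Z ω) (X ω) (C ω)) ∂P)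
        + (∫ ω, (fdPi eh xb (X ω) (C ω) - fdPi e xb (X ω) (C ω)) *
            (fdNu mh q eh (X ω) (C ω) - fdNu mh qh eh (X ω) (C ω)) ∂P)
        + ((∫ ω, mh 0 0 (C ω) * (q 0 xb (C ω) - qh 0 xb (C ω)) * (eh 0 (C ω) - e 0 (C ω)) ∂P)
          + (∫ ω, mh 0 1 (C ω) * (q 0 xb (C ω) - qh 0 xb (C ω)) * (eh 1 (C ω) - e 1 (C ω)) ∂P)
          + (∫ ω, mh 1 0 (C ω) * (q 1 xb (C ω) - qh 1 xb (C ω)) * (eh 0 (C ω) - e 0 (C ω)) ∂P)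
          + (∫ ω, mh 1 1 (C ω) * (q 1 xb (C ω) - qh 1 xb (C ω)) * (eh 1 (C ω) - e 1 (C ω)) ∂P)) :=
  fd_pseudo_outcome_double_robustness_general P C X Z Y hC hX hZ hX01 hZ01 hY2 m e q hm_meas he_meas
    hq_meas hm he1 he0 hq1 hq0 δ hδ0 he_pos hq_pos mh eh qh hmh_meas heh_meas hqh_meas Bm hmh_bdd
    heh_pos hqh_pos xb hxb
end
end

section
/- Define a(c) = q(1,0,c), b(c) = q(1,1,c) − q(1,0,c), f(x,c) = m(0,x,c), g(x,c) = m(1,x,c) − m(0,x,c), and γ_g(c) = Σ_{x∈{0,1}} g(x,c)e(x,c). Then the conditional front-door contrast factorizes as τ(c) := τ₁(c) − τ₀(c) = b(c)·γ_g(c) for every c, where τ_x̄(c) = Σ_{z,x∈{0,1}} m(z,x,c)q(z,x̄,c)e(x,c). -/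
noncomputable section

variable {𝒞 : Type*}

theorem fdTau_eq_add_mul (m q : ℝ → ℝ → 𝒞 → ℝ) (e : ℝ → 𝒞 → ℝ) (xb : ℝ) (c : 𝒞)
    (hq : q 0 xb c = 1 - q 1 xb c) :
    fdTau m q e xb c
      = (m 0 0 c * e 0 c + m 0 1 c * e 1 c) +
          q 1 xb c * ((m 1 0 c - m 0 0 c) * e 0 c + (m 1 1 c - m 0 1 c) * e 1 c) := by
  rw [fdTau, hq]
  ring

theorem fd_hte_factorization_general
    (m q : ℝ → ℝ → 𝒞 → ℝ) (e : ℝ → 𝒞 → ℝ)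
    (hq0 : ∀ x c, (x = 0 ∨ x = 1) → q 0 x c = 1 - q 1 x c)
    (c : 𝒞) :
    fdTau m q e 1 c - fdTau m q e 0 c
      = (q 1 1 c - q 1 0 c) *
          ((m 1 0 c - m 0 0 c) * e 0 c + (m 1 1 c - m 0 1 c) * e 1 c) := by
  rw [fdTau_eq_add_mul m q e 1 c (hq0 1 c (Or.inr rfl)),
    fdTau_eq_add_mul m q e 0 c (hq0 0 c (Or.inl rfl))]
  ring

/-- With b(c) = q(1,1,c) − q(1,0,c), g(x,c) = m(1,x,c) − m(0,x,c) and
γ_g(c) = Σ_{x∈{0,1}} g(x,c)·e(x,c), the conditional front-door contrast factorizes as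
τ₁(c) − τ₀(c) = b(c)·γ_g(c) for every c. -/
theorem fd_hte_factorization
    (m q : ℝ → ℝ → 𝒞 → ℝ) (e : ℝ → 𝒞 → ℝ)
    (he0 : ∀ c, e 0 c = 1 - e 1 c)
    (hq0 : ∀ x c, (x = 0 ∨ x = 1) → q 0 x c = 1 - q 1 x c)
    (c : 𝒞) :
    fdTau m q e 1 c - fdTau m q e 0 c
      = (q 1 1 c - q 1 0 c) *
          ((m 1 0 c - m 0 0 c) * e 0 c + (m 1 1 c - m 0 1 c) * e 1 c) :=
  fd_hte_factorization_general m q e hq0 c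
end
end

section
/- Let ê_X:𝒞→ℝ and ĝ:{0,1}×𝒞→ℝ be arbitrary bounded measurable estimates, and let ζ_{ê,ĝ}(x,c) = (1 − ê_X(c))·ĝ(0,c) + ê_X(c)·ĝ(1,c) + (x − ê_X(c))·(ĝ(1,c) − ĝ(0,c)). Then almost surely E[ζ_{ê,ĝ}(X,C) | σ(C)] − γ_g(C) = e_X(C)·(ĝ(1,C) − g(1,C)) + (1 − e_X(C))·(ĝ(0,C) − g(0,C)); in particular the error of the pseudo-g regression target does not depend on the error of ê_X. -/
open MeasureTheory

/- The pseudo-g target is affine in `X` with `σ(C)`-measurable coefficients,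
`ζ = ĝ(0,C) + (ĝ(1,C) - ĝ(0,C)) X`, the estimate `ê_X` cancelling identically. Pulling the bounded
coefficients out of the conditional expectation then replaces `X` by `E[X | σ(C)] = e_X(C)`. -/

theorem pseudoG_eq_add_mul (e x a b : ℝ) :
    (1 - e) * a + e * b + (x - e) * (b - a) = a + (b - a) * x := by
  ring

theorem condExp_add_mul_of_bound {Ω : Type*} {m m0 : MeasurableSpace Ω} {μ : Measure Ω}
    [IsFiniteMeasure μ] (hm : m ≤ m0) {a d X : Ω → ℝ} (ha : StronglyMeasurable[m] a)
    (ha_int : Integrable a μ) (hd : StronglyMeasurable[m] d) (c : ℝ)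
    (hd_bound : ∀ᵐ ω ∂μ, ‖d ω‖ ≤ c) (hX : Integrable X μ) :
    μ[a + d * X | m] =ᵐ[μ] a + d * μ[X | m] := by
  have hdX : Integrable (d * X) μ := hX.bdd_mul (hd.mono hm).aestronglyMeasurable hd_bound
  calc μ[a + d * X | m] =ᵐ[μ] μ[a | m] + μ[d * X | m] := condExp_add ha_int hdX m
    _ =ᵐ[μ] a + d * μ[X | m] := by
      rw [condExp_of_stronglyMeasurable hm ha ha_int]
      exact Filter.EventuallyEq.rfl.add
        (condExp_stronglyMeasurable_mul_of_bound hm hd hX c hd_bound)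

theorem pseudo_g_error_correction_general
    {Ω 𝒞 : Type*} [MeasurableSpace Ω] [MeasurableSpace 𝒞]
    (P : Measure Ω) [IsProbabilityMeasure P]
    (C : Ω → 𝒞) (X : Ω → ℝ)
    (hC : Measurable C) (hX : Measurable X) (hX01 : ∀ ω, X ω = 0 ∨ X ω = 1)
    (eX : 𝒞 → ℝ)
    (heX : (fun ω => eX (C ω)) =ᵐ[P] P[X | MeasurableSpace.comap C inferInstance])
    (g : ℝ → 𝒞 → ℝ)
    -- arbitrary bounded measurable estimates
    (eXh : 𝒞 → ℝ)
    (gh : ℝ → 𝒞 → ℝ) (hgh_meas : Measurable fun p : ℝ × 𝒞 => gh p.1 p.2)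
    (B : ℝ) (hgh_bdd : ∀ x c, |gh x c| ≤ B) :
    (fun ω =>
        (P[(fun ω' => (1 - eXh (C ω')) * gh 0 (C ω') + eXh (C ω') * gh 1 (C ω')
              + (X ω' - eXh (C ω')) * (gh 1 (C ω') - gh 0 (C ω')))
            | MeasurableSpace.comap C inferInstance]) ω
          - (eX (C ω) * g 1 (C ω) + (1 - eX (C ω)) * g 0 (C ω)))
      =ᵐ[P] fun ω => eX (C ω) * (gh 1 (C ω) - g 1 (C ω))
          + (1 - eX (C ω)) * (gh 0 (C ω) - g 0 (C ω)) := by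
  have hm : MeasurableSpace.comap C inferInstance ≤ ‹MeasurableSpace Ω› := hC.comap_le
  have hgh : ∀ x, StronglyMeasurable[MeasurableSpace.comap C inferInstance] (gh x ∘ C) :=
    fun x => ((hgh_meas.comp (measurable_const.prodMk measurable_id)).comp
      (comap_measurable C)).stronglyMeasurable
  have hgh0_int : Integrable (gh 0 ∘ C) P :=
    .of_bound ((hgh 0).mono hm).aestronglyMeasurable B (ae_of_all _ fun ω => hgh_bdd 0 (C ω))
  have hgh_sub_bound : ∀ᵐ ω ∂P, ‖(gh 1 ∘ C - gh 0 ∘ C) ω‖ ≤ B + B :=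
    ae_of_all _ fun ω => (abs_sub _ _).trans (add_le_add (hgh_bdd 1 (C ω)) (hgh_bdd 0 (C ω)))
  have hX_int : Integrable X P :=
    .of_mem_Icc 0 1 hX.aemeasurable (ae_of_all _ fun ω => by rcases hX01 ω with h | h <;> simp [h])
  have hζ : P[(fun ω' => (1 - eXh (C ω')) * gh 0 (C ω') + eXh (C ω') * gh 1 (C ω')
        + (X ω' - eXh (C ω')) * (gh 1 (C ω') - gh 0 (C ω')))
        | MeasurableSpace.comap C inferInstance]
      =ᵐ[P] gh 0 ∘ C + (gh 1 ∘ C - gh 0 ∘ C) * P[X | MeasurableSpace.comap C inferInstance] := by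
    simp_rw [pseudoG_eq_add_mul]
    exact condExp_add_mul_of_bound hm (hgh 0) hgh0_int ((hgh 1).sub (hgh 0)) (B + B)
      hgh_sub_bound hX_int
  filter_upwards [hζ, heX] with ω hζω heXω
  simp only [hζω, Pi.add_apply, Pi.mul_apply, Pi.sub_apply, Function.comp_apply, ← heXω]
  ring

/-- **Error correction of the pseudo-g function.** For arbitrary bounded
measurable estimates ê_X, ĝ and the pseudo-g ζ_{ê,ĝ}, almost surely
E[ζ_{ê,ĝ}(X,C) | σ(C)] − γ_g(C)
  = e_X(C)·(ĝ(1,C) − g(1,C)) + (1 − e_X(C))·(ĝ(0,C) − g(0,C)):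
the error does not depend on the error of ê_X. -/
theorem pseudo_g_error_correction
    {Ω 𝒞 : Type*} [MeasurableSpace Ω] [MeasurableSpace 𝒞]
    (P : Measure Ω) [IsProbabilityMeasure P]
    (C : Ω → 𝒞) (X : Ω → ℝ)
    (hC : Measurable C) (hX : Measurable X) (hX01 : ∀ ω, X ω = 0 ∨ X ω = 1)
    (eX : 𝒞 → ℝ) (heX_meas : Measurable eX)
    (heX : (fun ω => eX (C ω)) =ᵐ[P] P[X | MeasurableSpace.comap C inferInstance])
    (g : ℝ → 𝒞 → ℝ) (hg_meas : Measurable fun p : ℝ × 𝒞 => g p.1 p.2)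
    (Bg : ℝ) (hg_bdd : ∀ x c, |g x c| ≤ Bg)
    -- arbitrary bounded measurable estimates
    (eXh : 𝒞 → ℝ) (heXh_meas : Measurable eXh)
    (gh : ℝ → 𝒞 → ℝ) (hgh_meas : Measurable fun p : ℝ × 𝒞 => gh p.1 p.2)
    (B : ℝ) (heXh_bdd : ∀ c, |eXh c| ≤ B) (hgh_bdd : ∀ x c, |gh x c| ≤ B) :
    (fun ω =>
        (P[(fun ω' => (1 - eXh (C ω')) * gh 0 (C ω') + eXh (C ω') * gh 1 (C ω')
              + (X ω' - eXh (C ω')) * (gh 1 (C ω') - gh 0 (C ω')))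
            | MeasurableSpace.comap C inferInstance]) ω
          - (eX (C ω) * g 1 (C ω) + (1 - eX (C ω)) * g 0 (C ω)))
      =ᵐ[P] fun ω => eX (C ω) * (gh 1 (C ω) - g 1 (C ω))
          + (1 - eX (C ω)) * (gh 0 (C ω) - g 0 (C ω)) :=
  pseudo_g_error_correction_general P C X hC hX hX01 eX heX g eXh gh hgh_meas B hgh_bdd
end

section
/- Let h = τ̂ − τ₀ and suppose: (a) ψ(t) := L(τ₀ + t·h, η₀) is differentiable at t = 0 with ψ′(0) ≥ 0 (first-order optimality); (b) φ(t) := L(τ₀ + t·h, η̂) is twice differentiable on [0,1] with φ″(t) ≥ λ‖h‖²_𝒯 − κ‖η̂ − η₀‖^{4/(1+r)}_𝓗 for all t ∈ (0,1) (strong convexity); (c) φ(1) − φ(0) = L(τ̂, η̂) − L(τ₀, η̂) ≤ R (excess-risk bound). Then ‖τ̂ − τ₀‖²_𝒯 ≤ (2/λ)·R + (2/λ)·(ψ′(0) − φ′(0)) + (κ/λ)·‖η̂ − η₀‖^{4/(1+r)}_𝓗. -/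
/-! Along the segment `t ↦ τ₀ + t • (τ̂ - τ₀)`, the curvature bound `φ'' ≥ c` gives the Taylor
estimate `φ 1 - φ 0 ≥ φ' 0 + c / 2`. With the excess-risk bound and `ψ'(0) ≥ 0` this yields
`c ≤ 2 (R - φ' 0) ≤ 2 R + 2 (ψ'(0) - φ' 0)`, and `c = λ‖τ̂ - τ₀‖² - κ‖η̂ - η₀‖^{4/(1+r)}`. -/

open Set

theorem mul_sub_le_sub_of_hasDerivAt_Icc {f f' : ℝ → ℝ} {a b C : ℝ} (hab : a ≤ b)
    (hf : ∀ t ∈ Icc a b, HasDerivAt f (f' t) t) (hC : ∀ t ∈ Ioo a b, C ≤ f' t) :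
    C * (b - a) ≤ f b - f a := by
  refine (convex_Icc a b).mul_sub_le_image_sub_of_le_deriv
    (fun t ht => (hf t ht).continuousAt.continuousWithinAt) (fun t ht => ?_) (fun t ht => ?_)
    a (left_mem_Icc.2 hab) b (right_mem_Icc.2 hab) hab
  all_goals rw [interior_Icc] at ht
  · exact (hf t (Ioo_subset_Icc_self ht)).differentiableAt.differentiableWithinAt
  · rw [(hf t (Ioo_subset_Icc_self ht)).deriv]
    exact hC t ht

theorem add_mul_sub_add_sq_le_sub_of_hasDerivAt_Icc {f f' f'' : ℝ → ℝ} {a b C : ℝ}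
    (hab : a ≤ b) (hf : ∀ t ∈ Icc a b, HasDerivAt f (f' t) t)
    (hf' : ∀ t ∈ Icc a b, HasDerivAt f' (f'' t) t) (hC : ∀ t ∈ Ioo a b, C ≤ f'' t) :
    f' a * (b - a) + C / 2 * (b - a) ^ 2 ≤ f b - f a := by
  set g : ℝ → ℝ := fun t => f t - f' a * t - C / 2 * (t - a) ^ 2
  have hg : ∀ t ∈ Icc a b, HasDerivAt g (f' t - f' a - C * (t - a)) t := by
    intro t ht
    refine (((hf t ht).sub ((hasDerivAt_id t).const_mul (f' a))).sub
      (((hasDerivAt_id t).sub_const a).pow 2 |>.const_mul (C / 2))).congr_deriv ?_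
    simp only [id, Nat.cast_ofNat]
    ring
  have hg_deriv_nonneg : ∀ t ∈ Ioo a b, 0 ≤ f' t - f' a - C * (t - a) := by
    intro t ht
    have hf'_incr := mul_sub_le_sub_of_hasDerivAt_Icc ht.1.le
      (fun s hs => hf' s (Icc_subset_Icc_right ht.2.le hs))
      (fun s hs => hC s (Ioo_subset_Ioo_right ht.2.le hs))
    linarith
  have hg_mono := mul_sub_le_sub_of_hasDerivAt_Icc hab hg hg_deriv_nonneg
  simp only [g] at hg_mono
  linarith

theorem fast_rate_convergence_general
    {𝒯 𝓗 : Type*} [NormedAddCommGroup 𝒯] [NormedSpace ℝ 𝒯] [NormedAddCommGroup 𝓗]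
    (L : 𝒯 → 𝓗 → ℝ) (τ₀ τh : 𝒯) (η₀ ηh : 𝓗)
    (lam κ r R : ℝ) (hlam : 0 < lam)
    (ψd : ℝ) (φ' φ'' : ℝ → ℝ)
    -- (a) first-order optimality at the truth
    (hψd : 0 ≤ ψd)
    -- (b) twice differentiability on [0,1] and strong convexity on (0,1)
    (hφ1 : ∀ t ∈ Set.Icc (0 : ℝ) 1,
      HasDerivAt (fun s : ℝ => L (τ₀ + s • (τh - τ₀)) ηh) (φ' t) t)
    (hφ2 : ∀ t ∈ Set.Icc (0 : ℝ) 1, HasDerivAt φ' (φ'' t) t)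
    (hconv : ∀ t ∈ Set.Ioo (0 : ℝ) 1,
      lam * ‖τh - τ₀‖ ^ 2 - κ * ‖ηh - η₀‖ ^ ((4 : ℝ) / (1 + r)) ≤ φ'' t)
    -- (c) excess-risk bound
    (hexc : L τh ηh - L τ₀ ηh ≤ R) :
    ‖τh - τ₀‖ ^ 2
      ≤ (2 / lam) * R + (2 / lam) * (ψd - φ' 0)
        + (κ / lam) * ‖ηh - η₀‖ ^ ((4 : ℝ) / (1 + r)) := by
  have htaylor := add_mul_sub_add_sq_le_sub_of_hasDerivAt_Icc zero_le_one hφ1 hφ2 hconv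
  simp only [sub_zero, one_pow, mul_one, one_smul, zero_smul, add_zero,
    add_sub_cancel] at htaylor
  have hbound : lam * ‖τh - τ₀‖ ^ 2
      ≤ 2 * R + 2 * (ψd - φ' 0) + κ * ‖ηh - η₀‖ ^ ((4 : ℝ) / (1 + r)) := by
    linarith
  calc ‖τh - τ₀‖ ^ 2
      ≤ (2 * R + 2 * (ψd - φ' 0) + κ * ‖ηh - η₀‖ ^ ((4 : ℝ) / (1 + r))) / lam := by
        rwa [le_div_iff₀' hlam]
    _ = _ := by ring

/-- **Fast rate convergence, abstract orthogonal statistical learning.**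
Let h = τ̂ − τ₀. If ψ(t) = L(τ₀ + t·h, η₀) is differentiable at 0 with ψ′(0) ≥ 0, if
φ(t) = L(τ₀ + t·h, η̂) is twice differentiable on [0,1] with
φ″(t) ≥ λ‖h‖² − κ‖η̂−η₀‖^{4/(1+r)} on (0,1), and if φ(1) − φ(0) ≤ R, then
‖τ̂ − τ₀‖² ≤ (2/λ)·R + (2/λ)·(ψ′(0) − φ′(0)) + (κ/λ)·‖η̂−η₀‖^{4/(1+r)}. -/
theorem fast_rate_convergence
    {𝒯 𝓗 : Type*} [NormedAddCommGroup 𝒯] [NormedSpace ℝ 𝒯] [NormedAddCommGroup 𝓗]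
    (L : 𝒯 → 𝓗 → ℝ) (τ₀ τh : 𝒯) (η₀ ηh : 𝓗)
    (lam κ r R : ℝ) (hlam : 0 < lam) (hκ : 0 ≤ κ) (hr0 : 0 ≤ r) (hr1 : r < 1) (hR : 0 ≤ R)
    (ψd : ℝ) (φ' φ'' : ℝ → ℝ)
    -- (a) first-order optimality at the truth
    (hψ : HasDerivAt (fun t : ℝ => L (τ₀ + t • (τh - τ₀)) η₀) ψd 0)
    (hψd : 0 ≤ ψd)
    -- (b) twice differentiability on [0,1] and strong convexity on (0,1)
    (hφ1 : ∀ t ∈ Set.Icc (0 : ℝ) 1,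
      HasDerivAt (fun s : ℝ => L (τ₀ + s • (τh - τ₀)) ηh) (φ' t) t)
    (hφ2 : ∀ t ∈ Set.Icc (0 : ℝ) 1, HasDerivAt φ' (φ'' t) t)
    (hconv : ∀ t ∈ Set.Ioo (0 : ℝ) 1,
      lam * ‖τh - τ₀‖ ^ 2 - κ * ‖ηh - η₀‖ ^ ((4 : ℝ) / (1 + r)) ≤ φ'' t)
    -- (c) excess-risk bound
    (hexc : L τh ηh - L τ₀ ηh ≤ R) :
    ‖τh - τ₀‖ ^ 2
      ≤ (2 / lam) * R + (2 / lam) * (ψd - φ' 0)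
        + (κ / lam) * ‖ηh - η₀‖ ^ ((4 : ℝ) / (1 + r)) :=
  fast_rate_convergence_general L τ₀ τh η₀ ηh lam κ r R hlam ψd φ' φ'' hψd hφ1 hφ2 hconv hexc
end

section
/- Suppose the estimate τ̂ satisfies the excess-risk bound L_DR(τ̂, (μ̂,ω̂)) − L_DR(τ₀, (μ̂,ω̂)) ≤ R for some R ≥ 0, where τ₀(X) = μ₀(1,X) − μ₀(0,X). Then ‖τ̂ − τ₀‖²₂ ≤ 2R + 8·‖ω̂(T,X) − ω₀(T,X)‖²₄·‖μ̂(T,X) − μ₀(T,X)‖²₄, where all norms are L^p(P) norms. -/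
open MeasureTheory
open scoped ENNReal

noncomputable section

/-!
With `g = τ̂ − τ₀` and `D = φ − τ₀`, expanding the square writes the excess DR loss as
`‖g‖₂² − 2 E[D g]`. At `(T, X)`,
`D = ω̂ (Y − μ₀) − (ω̂ − ω₀)(μ̂ − μ₀) − ω₀ (μ̂ − μ₀) + (μ̂ − μ₀)(1, X) − (μ̂ − μ₀)(0, X)`.
The first term is orthogonal to the `σ(T, X)`-measurable `g`, and inverse-propensity weighting,
`E[ω₀(T, X) u(T, X) | X] = u(1, X) − u(0, X)`, makes the last three terms cancel against `g`.
So the excess loss is `‖g‖₂² + 2 E[(ω̂ − ω₀)(μ̂ − μ₀) g]`; Cauchy–Schwarz gives `a² ≤ R + 2Aa`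
for `a = ‖g‖₂` and `A = ‖(ω̂ − ω₀)(μ̂ − μ₀)‖₂`, hence `a² ≤ 2R + 4A²`, and Hölder bounds `A` by
the product of the two `L⁴` norms.

Overlap also makes `μ₀(t, X)` square integrable for both `t`: on `{T = t}` it agrees with
`μ₀(T, X) ∈ L²`, and that event has conditional probability at least `c` given `X`.
-/

namespace DRLearner

section Lp

variable {α : Type*} {m m0 : MeasurableSpace α} {μ : Measure α}

theorem integral_mul_eq_integral_mul_condExp (hm : m ≤ m0) [SigmaFinite (μ.trim hm)]
    {f g : α → ℝ} (hf : StronglyMeasurable[m] f) (hfg : Integrable (fun x => f x * g x) μ)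
    (hg : Integrable g μ) :
    ∫ x, f x * g x ∂μ = ∫ x, f x * μ[g|m] x ∂μ :=
  calc ∫ x, f x * g x ∂μ = ∫ x, μ[f * g|m] x ∂μ := (integral_condExp hm).symm
    _ = ∫ x, f x * μ[g|m] x ∂μ :=
      integral_congr_ae (condExp_mul_of_stronglyMeasurable_left hf hfg hg)

theorem integral_mul_sub_condExp_eq_zero (hm : m ≤ m0) [IsFiniteMeasure μ] {f g : α → ℝ}
    (hf : StronglyMeasurable[m] f) (hf2 : MemLp f 2 μ) (hg2 : MemLp g 2 μ) :
    ∫ x, f x * (g x - μ[g|m] x) ∂μ = 0 := by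
  have hfg : Integrable (fun x => f x * g x) μ := hf2.integrable_mul hg2
  have hfg' : Integrable (fun x => f x * μ[g|m] x) μ :=
    hf2.integrable_mul (hg2.condExp one_le_two (m := m))
  simp only [mul_sub]
  rw [integral_sub hfg hfg',
    integral_mul_eq_integral_mul_condExp hm hf hfg (hg2.integrable one_le_two), sub_self]

theorem integral_mul_eq_of_condExp_ae_eq (hm : m ≤ m0) [IsFiniteMeasure μ] {f e p : α → ℝ}
    {C : ℝ} (hf : StronglyMeasurable[m] f) (hf_int : Integrable f μ)
    (he : AEStronglyMeasurable e μ) (he_bdd : ∀ᵐ x ∂μ, ‖e x‖ ≤ C) (hp : μ[e|m] =ᵐ[μ] p) :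
    ∫ x, f x * e x ∂μ = ∫ x, f x * p x ∂μ := by
  have he_int : Integrable e μ := (memLp_top_of_bound he C he_bdd).integrable le_top
  rw [integral_mul_eq_integral_mul_condExp hm hf (hf_int.mul_bdd he he_bdd) he_int]
  exact integral_congr_ae (hp.mono fun x hx => by dsimp only; rw [hx])

theorem condExp_one_sub_ae_eq (hm : m ≤ m0) [IsFiniteMeasure μ] {e p : α → ℝ}
    (he : Integrable e μ) (hp : μ[e|m] =ᵐ[μ] p) :
    μ[fun x => 1 - e x|m] =ᵐ[μ] fun x => 1 - p x := by
  filter_upwards [condExp_sub (integrable_const 1) he m (μ := μ), hp] with x hsub hx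
  rw [show (fun x => 1 - e x) = (fun _ => (1 : ℝ)) - e from rfl, hsub, Pi.sub_apply,
    condExp_const hm, hx]

theorem lintegral_mul_ofReal_condExp (hm : m ≤ m0) [IsFiniteMeasure μ] {h : α → ℝ≥0∞}
    {e : α → ℝ} (hh : Measurable[m] h) (he : Measurable e) (he_int : Integrable e μ)
    (he0 : 0 ≤ e) :
    ∫⁻ x, h x * ENNReal.ofReal (μ[e|m] x) ∂μ = ∫⁻ x, h x * ENNReal.ofReal (e x) ∂μ := by
  have hce : Measurable (μ[e|m]) := stronglyMeasurable_condExp.measurable.mono hm le_rfl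
  have hh0 : Measurable h := hh.mono hm le_rfl
  -- the two densities define measures that agree on `m`, where `h` lives
  have htrim : (μ.withDensity fun x => ENNReal.ofReal (μ[e|m] x)).trim hm
      = (μ.withDensity fun x => ENNReal.ofReal (e x)).trim hm := by
    refine @Measure.ext _ m _ _ fun s hs => ?_
    rw [trim_measurableSet_eq hm hs, trim_measurableSet_eq hm hs,
      withDensity_apply _ (hm s hs), withDensity_apply _ (hm s hs),
      ← ofReal_integral_eq_lintegral_ofReal he_int.integrableOn (.of_forall he0),
      ← ofReal_integral_eq_lintegral_ofReal integrable_condExp.integrableOn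
        (ae_restrict_of_ae (condExp_nonneg (.of_forall he0))),
      setIntegral_condExp hm he_int hs]
  calc ∫⁻ x, h x * ENNReal.ofReal (μ[e|m] x) ∂μ
      = ∫⁻ x, h x ∂(μ.withDensity fun x => ENNReal.ofReal (μ[e|m] x)) := by
        rw [lintegral_withDensity_eq_lintegral_mul _ hce.ennreal_ofReal hh0]
        simp only [Pi.mul_apply, mul_comm]
    _ = ∫⁻ x, h x ∂(μ.withDensity fun x => ENNReal.ofReal (e x)) := by
        rw [← lintegral_trim hm hh, htrim, lintegral_trim hm hh]
    _ = ∫⁻ x, h x * ENNReal.ofReal (e x) ∂μ := by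
        rw [lintegral_withDensity_eq_lintegral_mul _ he.ennreal_ofReal hh0]
        simp only [Pi.mul_apply, mul_comm]

theorem memLp_two_of_le_condExp (hm : m ≤ m0) [IsFiniteMeasure μ] {e h q : α → ℝ} {c : ℝ}
    (he : Measurable e) (he_int : Integrable e μ) (he0 : 0 ≤ e) (hc : 0 < c)
    (hce : ∀ᵐ x ∂μ, c ≤ μ[e|m] x) (hh : Measurable[m] h) (hq : MemLp q 2 μ)
    (hhq : ∀ x, e x * h x ^ 2 ≤ q x ^ 2) : MemLp h 2 μ := by
  have hh0 : Measurable h := hh.mono hm le_rfl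
  refine (memLp_two_iff_integrable_sq hh0.aestronglyMeasurable).2
    ⟨(hh0.pow_const 2).aestronglyMeasurable, ?_⟩
  rw [hasFiniteIntegral_iff_ofReal (.of_forall fun x => sq_nonneg _)]
  have hle : ENNReal.ofReal c * ∫⁻ x, ENNReal.ofReal (h x ^ 2) ∂μ
      ≤ ∫⁻ x, ENNReal.ofReal (q x ^ 2) ∂μ :=
    calc ENNReal.ofReal c * ∫⁻ x, ENNReal.ofReal (h x ^ 2) ∂μ
        = ∫⁻ x, ENNReal.ofReal (h x ^ 2) * ENNReal.ofReal c ∂μ := by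
          rw [lintegral_mul_const _ (hh0.pow_const 2).ennreal_ofReal, mul_comm]
      _ ≤ ∫⁻ x, ENNReal.ofReal (h x ^ 2) * ENNReal.ofReal (μ[e|m] x) ∂μ :=
          lintegral_mono_ae (hce.mono fun x hx => by gcongr)
      _ = ∫⁻ x, ENNReal.ofReal (h x ^ 2) * ENNReal.ofReal (e x) ∂μ :=
          lintegral_mul_ofReal_condExp hm (hh.pow_const 2).ennreal_ofReal he he_int he0
      _ ≤ ∫⁻ x, ENNReal.ofReal (q x ^ 2) ∂μ := lintegral_mono fun x => by
          rw [← ENNReal.ofReal_mul (sq_nonneg _), mul_comm]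
          exact ENNReal.ofReal_le_ofReal (hhq x)
  have hq_fin : ∫⁻ x, ENNReal.ofReal (q x ^ 2) ∂μ < ⊤ :=
    (hasFiniteIntegral_iff_ofReal (.of_forall fun x => sq_nonneg _)).1 hq.integrable_sq.2
  exact ENNReal.lt_top_of_mul_ne_top_right (hle.trans_lt hq_fin).ne (by simp [hc])

theorem eLpNorm_two_sq_eq_ofReal_integral_sq {f : α → ℝ} (hf : MemLp f 2 μ) :
    eLpNorm f 2 μ ^ 2 = ENNReal.ofReal (∫ x, f x ^ 2 ∂μ) := by
  rw [ofReal_integral_eq_lintegral_ofReal hf.integrable_sq (.of_forall fun x => sq_nonneg _)]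
  have hpow := eLpNorm_nnreal_pow_eq_lintegral (f := f) (μ := μ) (p := 2) two_ne_zero
  simp only [ENNReal.coe_ofNat, NNReal.coe_ofNat, ENNReal.rpow_ofNat] at hpow
  rw [hpow]
  refine lintegral_congr fun x => ?_
  rw [Real.enorm_eq_ofReal_abs, ← ENNReal.ofReal_pow (abs_nonneg _), sq_abs]

theorem integral_sub_sq_sub_integral_sq {f g : α → ℝ} (hf : MemLp f 2 μ) (hg : MemLp g 2 μ) :
    ∫ x, (f x - g x) ^ 2 ∂μ - ∫ x, f x ^ 2 ∂μ
      = ∫ x, g x ^ 2 ∂μ - 2 * ∫ x, f x * g x ∂μ := by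
  have hfg : Integrable (fun x => 2 * (f x * g x)) μ := (hf.integrable_mul hg).const_mul 2
  have hrest : Integrable (fun x => g x ^ 2 - 2 * (f x * g x)) μ := hg.integrable_sq.sub hfg
  rw [integral_congr_ae (.of_forall fun x =>
      (by ring : (f x - g x) ^ 2 = f x ^ 2 + (g x ^ 2 - 2 * (f x * g x)))),
    integral_add hf.integrable_sq hrest, integral_sub hg.integrable_sq hfg, integral_const_mul]
  ring

theorem ofReal_abs_integral_mul_le {f g : α → ℝ} (hf : AEStronglyMeasurable f μ)
    (hg : AEStronglyMeasurable g μ) :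
    ENNReal.ofReal |∫ x, f x * g x ∂μ| ≤ eLpNorm f 2 μ * eLpNorm g 2 μ := by
  have hholder := eLpNorm_smul_le_mul_eLpNorm (p := 2) (q := 2) (r := 1) hg hf
  simp only [smul_eq_mul] at hholder
  calc ENNReal.ofReal |∫ x, f x * g x ∂μ| = ‖∫ x, f x * g x ∂μ‖ₑ :=
        (Real.enorm_eq_ofReal_abs _).symm
    _ ≤ ∫⁻ x, ‖f x * g x‖ₑ ∂μ := enorm_integral_le_lintegral_enorm _
    _ = eLpNorm (f * g) 1 μ := eLpNorm_one_eq_lintegral_enorm.symm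
    _ ≤ eLpNorm f 2 μ * eLpNorm g 2 μ := hholder

instance : ENNReal.HolderTriple 4 4 2 := ⟨by
  rw [← two_mul, show (4 : ℝ≥0∞) = 2 * 2 by norm_num, ENNReal.mul_inv (by simp) (by simp),
    ← mul_assoc, ENNReal.mul_inv_cancel (by norm_num) (by norm_num), one_mul]⟩

theorem eLpNorm_two_mul_le {f g : α → ℝ} (hf : AEStronglyMeasurable f μ)
    (hg : AEStronglyMeasurable g μ) :
    eLpNorm (fun x => f x * g x) 2 μ ≤ eLpNorm f 4 μ * eLpNorm g 4 μ := by
  have hholder := eLpNorm_smul_le_mul_eLpNorm (p := 4) (q := 4) (r := 2) hg hf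
  simp only [smul_eq_mul] at hholder
  exact hholder

theorem ENNReal.sq_le_two_mul_add_four_mul_sq {a A R : ℝ≥0∞} (ha : a ≠ ⊤)
    (h : a ^ 2 ≤ R + 2 * A * a) : a ^ 2 ≤ 2 * R + 4 * A ^ 2 := by
  rcases eq_or_ne A ⊤ with rfl | hA
  · simp [ENNReal.top_pow]
  rcases eq_or_ne R ⊤ with rfl | hR
  · simp
  lift a to NNReal using ha
  lift A to NNReal using hA
  lift R to NNReal using hR
  norm_cast at h ⊢
  rw [← NNReal.coe_le_coe] at h ⊢
  push_cast at h ⊢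
  nlinarith [sq_nonneg ((a : ℝ) - 2 * A)]

theorem eLpNorm_sq_le_of_integral_sq_add_two_mul_le {f e : α → ℝ} {R : ℝ} (hf : MemLp f 2 μ)
    (he : AEStronglyMeasurable e μ) (h : ∫ x, f x ^ 2 ∂μ + 2 * ∫ x, e x * f x ∂μ ≤ R) :
    eLpNorm f 2 μ ^ 2 ≤ 2 * ENNReal.ofReal R + 4 * eLpNorm e 2 μ ^ 2 := by
  refine ENNReal.sq_le_two_mul_add_four_mul_sq hf.eLpNorm_ne_top ?_
  rw [eLpNorm_two_sq_eq_ofReal_integral_sq hf, mul_assoc]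
  calc _ ≤ ENNReal.ofReal (R + 2 * |∫ x, e x * f x ∂μ|) :=
        ENNReal.ofReal_le_ofReal (by linarith [neg_abs_le (∫ x, e x * f x ∂μ)])
    _ ≤ _ := by
        grw [ENNReal.ofReal_add_le, ENNReal.ofReal_mul zero_le_two,
          ofReal_abs_integral_mul_le he hf.1]
        simp

end Lp

theorem norm_le_one_of_eq_zero_or_one {a : ℝ} (ha : a = 0 ∨ a = 1) : ‖a‖ ≤ 1 := by
  rcases ha with rfl | rfl <;> simp

theorem one_sub_eq_zero_or_one {a : ℝ} (ha : a = 0 ∨ a = 1) : 1 - a = 0 ∨ 1 - a = 1 := by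
  rcases ha with rfl | rfl <;> norm_num

section InversePropensity

variable {𝒳 : Type*} {c : ℝ}

def ipWeight (π : 𝒳 → ℝ) (t : ℝ) (x : 𝒳) : ℝ :=
  (2 * t - 1) / (t * π x + (1 - t) * (1 - π x))

theorem ipWeight_one (π : 𝒳 → ℝ) (x : 𝒳) : ipWeight π 1 x = (π x)⁻¹ := by
  norm_num [ipWeight]

theorem ipWeight_zero (π : 𝒳 → ℝ) (x : 𝒳) : ipWeight π 0 x = -(1 - π x)⁻¹ := by
  simp [ipWeight, div_eq_mul_inv, neg_inv]

theorem abs_ipWeight_le {π : 𝒳 → ℝ} (hc0 : 0 < c) (hc : ∀ x, c ≤ π x ∧ π x ≤ 1 - c)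
    {t : ℝ} (ht : t = 0 ∨ t = 1) (x : 𝒳) : |ipWeight π t x| ≤ c⁻¹ := by
  rcases ht with rfl | rfl
  · rw [ipWeight_zero, abs_neg, abs_inv, abs_of_pos (by linarith [(hc x).2] : 0 < 1 - π x)]
    exact inv_anti₀ hc0 (by linarith [(hc x).2])
  · rw [ipWeight_one, abs_inv, abs_of_pos (hc0.trans_le (hc x).1)]
    exact inv_anti₀ hc0 (hc x).1

theorem measurable_ipWeight [MeasurableSpace 𝒳] {π : 𝒳 → ℝ} (hπ : Measurable π) :
    Measurable fun p : ℝ × 𝒳 => ipWeight π p.1 p.2 := by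
  unfold ipWeight
  fun_prop

end InversePropensity

section Setting

variable {Ω 𝒳 : Type*} [MeasurableSpace Ω] [MeasurableSpace 𝒳] {P : Measure Ω} {X : Ω → 𝒳}
  {c : ℝ}

def drPseudoOutcome (X : Ω → 𝒳) (T Y : Ω → ℝ) (μ w : ℝ → 𝒳 → ℝ) (ω : Ω) : ℝ :=
  w (T ω) (X ω) * (Y ω - μ (T ω) (X ω)) + μ 1 (X ω) - μ 0 (X ω)

def drLoss (P : Measure Ω) (X : Ω → 𝒳) (T Y : Ω → ℝ) (μ w : ℝ → 𝒳 → ℝ) (τ : 𝒳 → ℝ) : ℝ :=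
  ∫ ω, (drPseudoOutcome X T Y μ w ω - τ (X ω)) ^ 2 ∂P

theorem integrable_div_of_le {b p : 𝒳 → ℝ} (hX : Measurable X)
    (hbi : Integrable (fun ω => b (X ω)) P) (hp : Measurable p) (hc0 : 0 < c)
    (hpc : ∀ x, c ≤ p x) : Integrable (fun ω => b (X ω) / p (X ω)) P := by
  have hp_inv : ∀ ω, ‖(p (X ω))⁻¹‖ ≤ c⁻¹ := fun ω => by
    rw [norm_inv, Real.norm_of_nonneg (hc0.trans_le (hpc _)).le]
    exact inv_anti₀ hc0 (hpc _)
  simp_rw [div_eq_mul_inv]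
  exact hbi.mul_bdd (hp.comp hX).inv.aestronglyMeasurable (.of_forall hp_inv)

theorem memLp_top_of_abs_le {T : Ω → ℝ} {f : ℝ → 𝒳 → ℝ} {B : ℝ} (hX : Measurable X)
    (hT : Measurable T) (hf : Measurable fun p : ℝ × 𝒳 => f p.1 p.2)
    (hB : ∀ t x, |f t x| ≤ B) : MemLp (fun ω => f (T ω) (X ω)) ∞ P :=
  memLp_top_of_bound (hf.comp (hT.prodMk hX)).aestronglyMeasurable B
    (.of_forall fun _ => hB _ _)

variable [IsFiniteMeasure P]

theorem integrable_of_eq_zero_or_one {e : Ω → ℝ} (he : Measurable e)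
    (he01 : ∀ ω, e ω = 0 ∨ e ω = 1) : Integrable e P :=
  (MemLp.of_bound he.aestronglyMeasurable 1
    (.of_forall fun ω => norm_le_one_of_eq_zero_or_one (he01 ω))).integrable le_rfl

theorem integral_div_mul_eq_of_condExp_ae_eq (hX : Measurable X) {b p : 𝒳 → ℝ} {e : Ω → ℝ}
    (hb : Measurable b) (hbi : Integrable (fun ω => b (X ω)) P) (hp : Measurable p)
    (hc0 : 0 < c) (hpc : ∀ x, c ≤ p x) (he : Measurable e) (he01 : ∀ ω, e ω = 0 ∨ e ω = 1)
    (hep : P[e|MeasurableSpace.comap X inferInstance] =ᵐ[P] fun ω => p (X ω)) :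
    ∫ ω, b (X ω) / p (X ω) * e ω ∂P = ∫ ω, b (X ω) ∂P := by
  have hXm : Measurable[MeasurableSpace.comap X inferInstance] X := comap_measurable X
  rw [integral_mul_eq_of_condExp_ae_eq hX.comap_le (f := fun ω => b (X ω) / p (X ω))
    ((hb.comp hXm).div (hp.comp hXm)).stronglyMeasurable (integrable_div_of_le hX hbi hp hc0 hpc)
    he.aestronglyMeasurable (.of_forall fun ω => norm_le_one_of_eq_zero_or_one (he01 ω)) hep]
  exact integral_congr_ae (.of_forall fun ω => div_mul_cancel₀ _ (hc0.trans_le (hpc _)).ne')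

theorem memLp_two_comp_of_eq_on_treated (hX : Measurable X) {e q : Ω → ℝ} {p b : 𝒳 → ℝ}
    (he : Measurable e) (he01 : ∀ ω, e ω = 0 ∨ e ω = 1)
    (hep : P[e|MeasurableSpace.comap X inferInstance] =ᵐ[P] fun ω => p (X ω))
    (hc0 : 0 < c) (hpc : ∀ x, c ≤ p x) (hb : Measurable b) (hq : MemLp q 2 P)
    (hbq : ∀ ω, e ω = 1 → b (X ω) = q ω) : MemLp (fun ω => b (X ω)) 2 P :=
  memLp_two_of_le_condExp hX.comap_le he (integrable_of_eq_zero_or_one he he01)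
    (fun ω => by rcases he01 ω with h | h <;> simp [h]) hc0
    (hep.mono fun ω h => h ▸ hpc _) (hb.comp (comap_measurable X)) hq
    (fun ω => by rcases he01 ω with h | h <;> simp [h, hbq, sq_nonneg])

variable {T Y : Ω → ℝ} {π₀ : 𝒳 → ℝ}

theorem integral_ipWeight_mul_eq (hX : Measurable X) (hT : Measurable T)
    (hT01 : ∀ ω, T ω = 0 ∨ T ω = 1) (hπ₀_meas : Measurable π₀)
    (hπ₀ : (fun ω => π₀ (X ω)) =ᵐ[P] P[T | MeasurableSpace.comap X inferInstance])
    (hc0 : 0 < c) (hc : ∀ x, c ≤ π₀ x ∧ π₀ x ≤ 1 - c) {u : ℝ → 𝒳 → ℝ}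
    (hu1 : Measurable (u 1)) (hu0 : Measurable (u 0))
    (hu1i : Integrable (fun ω => u 1 (X ω)) P) (hu0i : Integrable (fun ω => u 0 (X ω)) P) :
    ∫ ω, ipWeight π₀ (T ω) (X ω) * u (T ω) (X ω) ∂P = ∫ ω, (u 1 (X ω) - u 0 (X ω)) ∂P := by
  have hπ₀c : ∀ x, c ≤ 1 - π₀ x := fun x => by linarith [(hc x).2]
  have hπ₀' : Measurable fun x => 1 - π₀ x := measurable_const.sub hπ₀_meas
  have hT' : Measurable fun ω => 1 - T ω := measurable_const.sub hT
  have htreated := integral_div_mul_eq_of_condExp_ae_eq hX hu1 hu1i hπ₀_meas hc0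
    (fun x => (hc x).1) hT hT01 hπ₀.symm
  have hcontrol := integral_div_mul_eq_of_condExp_ae_eq hX hu0 hu0i hπ₀' hc0 hπ₀c hT'
    (fun ω => one_sub_eq_zero_or_one (hT01 ω))
    (condExp_one_sub_ae_eq hX.comap_le (integrable_of_eq_zero_or_one hT hT01) hπ₀.symm)
  have hT1 := fun ω => norm_le_one_of_eq_zero_or_one (hT01 ω)
  have hT0 := fun ω => norm_le_one_of_eq_zero_or_one (one_sub_eq_zero_or_one (hT01 ω))
  calc ∫ ω, ipWeight π₀ (T ω) (X ω) * u (T ω) (X ω) ∂P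
      = ∫ ω, (u 1 (X ω) / π₀ (X ω) * T ω - u 0 (X ω) / (1 - π₀ (X ω)) * (1 - T ω)) ∂P := by
        refine integral_congr_ae (.of_forall fun ω => ?_)
        rcases hT01 ω with h | h <;>
          simp [h, ipWeight_zero, ipWeight_one, div_eq_mul_inv, mul_comm]
    _ = ∫ ω, (u 1 (X ω) - u 0 (X ω)) ∂P := by
        rw [integral_sub
          ((integrable_div_of_le hX hu1i hπ₀_meas hc0 fun x => (hc x).1).mul_bdd
            hT.aestronglyMeasurable (.of_forall hT1))
          ((integrable_div_of_le hX hu0i hπ₀' hc0 hπ₀c).mul_bdd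
            hT'.aestronglyMeasurable (.of_forall hT0)), htreated, hcontrol,
          integral_sub hu1i hu0i]

theorem memLp_two_regression_apply (hX : Measurable X) (hT : Measurable T)
    (hT01 : ∀ ω, T ω = 0 ∨ T ω = 1) (hY2 : MemLp Y 2 P) {μ₀ : ℝ → 𝒳 → ℝ}
    (hμ₀_meas : Measurable fun p : ℝ × 𝒳 => μ₀ p.1 p.2)
    (hμ₀ : (fun ω => μ₀ (T ω) (X ω))
        =ᵐ[P] P[Y | MeasurableSpace.comap (fun ω => (T ω, X ω)) inferInstance])
    (hπ₀ : (fun ω => π₀ (X ω)) =ᵐ[P] P[T | MeasurableSpace.comap X inferInstance])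
    (hc0 : 0 < c) (hc : ∀ x, c ≤ π₀ x ∧ π₀ x ≤ 1 - c) {t : ℝ} (ht : t = 0 ∨ t = 1) :
    MemLp (fun ω => μ₀ t (X ω)) 2 P := by
  have hq : MemLp (fun ω => μ₀ (T ω) (X ω)) 2 P := (hY2.condExp one_le_two).ae_eq hμ₀.symm
  have hb : Measurable (μ₀ t) := hμ₀_meas.of_uncurry_left
  rcases ht with rfl | rfl
  · have hT' : Measurable fun ω => 1 - T ω := measurable_const.sub hT
    exact memLp_two_comp_of_eq_on_treated hX hT' (fun ω => one_sub_eq_zero_or_one (hT01 ω))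
      (p := fun x => 1 - π₀ x)
      (condExp_one_sub_ae_eq hX.comap_le (integrable_of_eq_zero_or_one hT hT01) hπ₀.symm) hc0
      (fun x => by linarith [(hc x).2]) hb hq (fun ω h => by rw [show T ω = 0 by linarith])
  · exact memLp_two_comp_of_eq_on_treated hX hT hT01 hπ₀.symm hc0 (fun x => (hc x).1) hb hq
      (fun ω h => by rw [h])

theorem integral_mul_sub_regression_eq_zero (hX : Measurable X) (hT : Measurable T)
    (hY2 : MemLp Y 2 P) {μ₀ : ℝ → 𝒳 → ℝ}
    (hμ₀ : (fun ω => μ₀ (T ω) (X ω))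
        =ᵐ[P] P[Y | MeasurableSpace.comap (fun ω => (T ω, X ω)) inferInstance])
    {v : ℝ → 𝒳 → ℝ} (hv : Measurable fun p : ℝ × 𝒳 => v p.1 p.2)
    (hv2 : MemLp (fun ω => v (T ω) (X ω)) 2 P) :
    ∫ ω, v (T ω) (X ω) * (Y ω - μ₀ (T ω) (X ω)) ∂P = 0 := by
  refine (integral_congr_ae (hμ₀.mono fun ω h => ?_)).trans
    (integral_mul_sub_condExp_eq_zero (hT.prodMk hX).comap_le
      (hv.comp (comap_measurable _)).stronglyMeasurable hv2 hY2)
  simp only [h]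
  rfl

theorem integral_drPseudoOutcome_sub_mul_eq (hX : Measurable X) (hT : Measurable T)
    (hT01 : ∀ ω, T ω = 0 ∨ T ω = 1) (hY2 : MemLp Y 2 P) {μ₀ : ℝ → 𝒳 → ℝ}
    (hμ₀_meas : Measurable fun p : ℝ × 𝒳 => μ₀ p.1 p.2)
    (hμ₀ : (fun ω => μ₀ (T ω) (X ω))
        =ᵐ[P] P[Y | MeasurableSpace.comap (fun ω => (T ω, X ω)) inferInstance])
    (hπ₀_meas : Measurable π₀)
    (hπ₀ : (fun ω => π₀ (X ω)) =ᵐ[P] P[T | MeasurableSpace.comap X inferInstance])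
    (hc0 : 0 < c) (hc : ∀ x, c ≤ π₀ x ∧ π₀ x ≤ 1 - c) {μh wh : ℝ → 𝒳 → ℝ}
    (hμh_meas : Measurable fun p : ℝ × 𝒳 => μh p.1 p.2)
    (hwh_meas : Measurable fun p : ℝ × 𝒳 => wh p.1 p.2)
    (hwhT : MemLp (fun ω => wh (T ω) (X ω)) ∞ P) (hμhT : MemLp (fun ω => μh (T ω) (X ω)) 2 P)
    (hμh1 : MemLp (fun ω => μh 1 (X ω)) 2 P) (hμh0 : MemLp (fun ω => μh 0 (X ω)) 2 P)
    (hμ₀1 : MemLp (fun ω => μ₀ 1 (X ω)) 2 P) (hμ₀0 : MemLp (fun ω => μ₀ 0 (X ω)) 2 P)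
    {g : 𝒳 → ℝ} (hg : Measurable g) (hg2 : MemLp (fun ω => g (X ω)) 2 P) :
    ∫ ω, (drPseudoOutcome X T Y μh wh ω - (μ₀ 1 (X ω) - μ₀ 0 (X ω))) * g (X ω) ∂P
      = -∫ ω, (wh (T ω) (X ω) - ipWeight π₀ (T ω) (X ω))
          * (μh (T ω) (X ω) - μ₀ (T ω) (X ω)) * g (X ω) ∂P := by
  have hμ₀T : MemLp (fun ω => μ₀ (T ω) (X ω)) 2 P := (hY2.condExp one_le_two).ae_eq hμ₀.symm
  have hδT : MemLp (fun ω => μh (T ω) (X ω) - μ₀ (T ω) (X ω)) 2 P := hμhT.sub hμ₀T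
  have hw₀T : MemLp (fun ω => ipWeight π₀ (T ω) (X ω)) ∞ P :=
    memLp_top_of_bound ((measurable_ipWeight hπ₀_meas).comp (hT.prodMk hX)).aestronglyMeasurable
      c⁻¹ (.of_forall fun ω => abs_ipWeight_le hc0 hc (hT01 ω) _)
  have horth := integral_mul_sub_regression_eq_zero hX hT hY2 hμ₀
    (v := fun t x => wh t x * g x) (hwh_meas.mul (hg.comp measurable_snd)) (hg2.mul' hwhT)
  have hδ1g := (hμh1.sub hμ₀1).integrable_mul hg2
  have hδ0g := (hμh0.sub hμ₀0).integrable_mul hg2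
  have hipw := integral_ipWeight_mul_eq hX hT hT01 hπ₀_meas hπ₀ hc0 hc
    (u := fun t x => (μh t x - μ₀ t x) * g x)
    ((hμh_meas.of_uncurry_left.sub hμ₀_meas.of_uncurry_left).mul hg)
    ((hμh_meas.of_uncurry_left.sub hμ₀_meas.of_uncurry_left).mul hg) hδ1g hδ0g
  have hres : Integrable (fun ω => wh (T ω) (X ω) * g (X ω) * (Y ω - μ₀ (T ω) (X ω))) P :=
    (hg2.mul' (r := 2) hwhT).integrable_mul (hY2.sub hμ₀T)
  have hipwg : Integrable
      (fun ω => ipWeight π₀ (T ω) (X ω) * ((μh (T ω) (X ω) - μ₀ (T ω) (X ω)) * g (X ω))) P :=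
    (hδT.integrable_mul hg2).mul_of_top_right hw₀T
  have herr : Integrable (fun ω => (wh (T ω) (X ω) - ipWeight π₀ (T ω) (X ω))
      * (μh (T ω) (X ω) - μ₀ (T ω) (X ω)) * g (X ω)) P :=
    (hδT.mul' (r := 2) (hwhT.sub hw₀T)).integrable_mul hg2
  calc _ = ∫ ω, (wh (T ω) (X ω) * g (X ω) * (Y ω - μ₀ (T ω) (X ω))
          - ipWeight π₀ (T ω) (X ω) * ((μh (T ω) (X ω) - μ₀ (T ω) (X ω)) * g (X ω))
          + ((μh 1 (X ω) - μ₀ 1 (X ω)) * g (X ω) - (μh 0 (X ω) - μ₀ 0 (X ω)) * g (X ω))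
          - (wh (T ω) (X ω) - ipWeight π₀ (T ω) (X ω))
            * (μh (T ω) (X ω) - μ₀ (T ω) (X ω)) * g (X ω)) ∂P :=
        integral_congr_ae (.of_forall fun ω => by unfold drPseudoOutcome; ring)
    _ = _ := by
        rw [integral_sub, integral_add, integral_sub, horth, hipw]
        · ring
        exacts [hres, hipwg, hres.sub hipwg, hδ1g.sub hδ0g, (hres.sub hipwg).add (hδ1g.sub hδ0g),
          herr]

theorem drLoss_sub_drLoss_eq (hX : Measurable X) (hT : Measurable T)
    (hT01 : ∀ ω, T ω = 0 ∨ T ω = 1) (hY2 : MemLp Y 2 P) {μ₀ : ℝ → 𝒳 → ℝ}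
    (hμ₀_meas : Measurable fun p : ℝ × 𝒳 => μ₀ p.1 p.2)
    (hμ₀ : (fun ω => μ₀ (T ω) (X ω))
        =ᵐ[P] P[Y | MeasurableSpace.comap (fun ω => (T ω, X ω)) inferInstance])
    (hπ₀_meas : Measurable π₀)
    (hπ₀ : (fun ω => π₀ (X ω)) =ᵐ[P] P[T | MeasurableSpace.comap X inferInstance])
    (hc0 : 0 < c) (hc : ∀ x, c ≤ π₀ x ∧ π₀ x ≤ 1 - c) {μh wh : ℝ → 𝒳 → ℝ}
    (hμh_meas : Measurable fun p : ℝ × 𝒳 => μh p.1 p.2)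
    (hwh_meas : Measurable fun p : ℝ × 𝒳 => wh p.1 p.2)
    {B : ℝ} (hμh_bdd : ∀ t x, |μh t x| ≤ B) (hwh_bdd : ∀ t x, |wh t x| ≤ B)
    (hμ₀1 : MemLp (fun ω => μ₀ 1 (X ω)) 2 P) (hμ₀0 : MemLp (fun ω => μ₀ 0 (X ω)) 2 P)
    {τh : 𝒳 → ℝ} (hτh_meas : Measurable τh) (hτh2 : MemLp (fun ω => τh (X ω)) 2 P) :
    drLoss P X T Y μh wh τh - drLoss P X T Y μh wh (fun x => μ₀ 1 x - μ₀ 0 x)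
      = ∫ ω, (τh (X ω) - (μ₀ 1 (X ω) - μ₀ 0 (X ω))) ^ 2 ∂P
        + 2 * ∫ ω, (wh (T ω) (X ω) - ipWeight π₀ (T ω) (X ω))
          * (μh (T ω) (X ω) - μ₀ (T ω) (X ω)) * (τh (X ω) - (μ₀ 1 (X ω) - μ₀ 0 (X ω))) ∂P := by
  have hμhX : ∀ t, MemLp (fun ω => μh t (X ω)) 2 P := fun t =>
    (memLp_top_of_abs_le (T := fun _ => t) hX measurable_const hμh_meas hμh_bdd).mono_exponent
      le_top
  have hμhT : MemLp (fun ω => μh (T ω) (X ω)) 2 P :=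
    (memLp_top_of_abs_le hX hT hμh_meas hμh_bdd).mono_exponent le_top
  have hwhT : MemLp (fun ω => wh (T ω) (X ω)) ∞ P := memLp_top_of_abs_le hX hT hwh_meas hwh_bdd
  have hD2 : MemLp (fun ω => drPseudoOutcome X T Y μh wh ω - (μ₀ 1 (X ω) - μ₀ 0 (X ω))) 2 P :=
    ((((hY2.sub hμhT).mul' (r := 2) hwhT).add (hμhX 1)).sub (hμhX 0)).sub (hμ₀1.sub hμ₀0)
  have hg2 : MemLp (fun ω => τh (X ω) - (μ₀ 1 (X ω) - μ₀ 0 (X ω))) 2 P :=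
    hτh2.sub (hμ₀1.sub hμ₀0)
  have hbias := integral_drPseudoOutcome_sub_mul_eq hX hT hT01 hY2 hμ₀_meas hμ₀ hπ₀_meas hπ₀
    hc0 hc hμh_meas hwh_meas hwhT hμhT (hμhX 1) (hμhX 0) hμ₀1 hμ₀0
    (g := fun x => τh x - (μ₀ 1 x - μ₀ 0 x))
    (hτh_meas.sub (hμ₀_meas.of_uncurry_left.sub hμ₀_meas.of_uncurry_left)) hg2
  have hsplit : ∫ ω, (drPseudoOutcome X T Y μh wh ω - τh (X ω)) ^ 2 ∂P
      = ∫ ω, ((drPseudoOutcome X T Y μh wh ω - (μ₀ 1 (X ω) - μ₀ 0 (X ω)))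
          - (τh (X ω) - (μ₀ 1 (X ω) - μ₀ 0 (X ω)))) ^ 2 ∂P :=
    integral_congr_ae (.of_forall fun ω => by ring)
  unfold drLoss
  beta_reduce
  rw [hsplit, integral_sub_sq_sub_integral_sq hD2 hg2, hbias]
  ring

end Setting

end DRLearner

open DRLearner

theorem dr_learner_error_general
    {Ω 𝒳 : Type*} [MeasurableSpace Ω] [MeasurableSpace 𝒳]
    (P : Measure Ω) [IsProbabilityMeasure P]
    (X : Ω → 𝒳) (T Y : Ω → ℝ)
    (hX : Measurable X) (hT : Measurable T)
    (hT01 : ∀ ω, T ω = 0 ∨ T ω = 1) (hY2 : MemLp Y 2 P)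
    (μ₀ : ℝ → 𝒳 → ℝ) (hμ₀_meas : Measurable fun p : ℝ × 𝒳 => μ₀ p.1 p.2)
    (hμ₀ : (fun ω => μ₀ (T ω) (X ω))
        =ᵐ[P] P[Y | MeasurableSpace.comap (fun ω => (T ω, X ω)) inferInstance])
    (π₀ : 𝒳 → ℝ) (hπ₀_meas : Measurable π₀)
    (hπ₀ : (fun ω => π₀ (X ω)) =ᵐ[P] P[T | MeasurableSpace.comap X inferInstance])
    (c : ℝ) (hc0 : 0 < c)
    (hc : ∀ x, c ≤ π₀ x ∧ π₀ x ≤ 1 - c)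
    -- the true inverse-propensity weight ω₀(t,x) = (2t−1)/(t·π₀(x) + (1−t)(1−π₀(x)))
    (w₀ : ℝ → 𝒳 → ℝ)
    (hw₀ : ∀ t x, w₀ t x = (2 * t - 1) / (t * π₀ x + (1 - t) * (1 - π₀ x)))
    -- bounded measurable estimates and a square-integrable candidate τ̂
    (μh wh : ℝ → 𝒳 → ℝ)
    (hμh_meas : Measurable fun p : ℝ × 𝒳 => μh p.1 p.2)
    (hwh_meas : Measurable fun p : ℝ × 𝒳 => wh p.1 p.2)
    (B : ℝ) (hμh_bdd : ∀ t x, |μh t x| ≤ B) (hwh_bdd : ∀ t x, |wh t x| ≤ B)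
    (τh : 𝒳 → ℝ) (hτh_meas : Measurable τh) (hτh2 : MemLp (fun ω => τh (X ω)) 2 P)
    -- the excess-risk bound for the DR loss
    (R : ℝ)
    (hexc : (∫ ω, (wh (T ω) (X ω) * (Y ω - μh (T ω) (X ω))
            + μh 1 (X ω) - μh 0 (X ω) - τh (X ω)) ^ 2 ∂P)
        - (∫ ω, (wh (T ω) (X ω) * (Y ω - μh (T ω) (X ω))
            + μh 1 (X ω) - μh 0 (X ω) - (μ₀ 1 (X ω) - μ₀ 0 (X ω))) ^ 2 ∂P) ≤ R) :
    eLpNorm (fun ω => τh (X ω) - (μ₀ 1 (X ω) - μ₀ 0 (X ω))) 2 P ^ 2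
      ≤ 2 * ENNReal.ofReal R
        + 8 * eLpNorm (fun ω => wh (T ω) (X ω) - w₀ (T ω) (X ω)) 4 P ^ 2 *
            eLpNorm (fun ω => μh (T ω) (X ω) - μ₀ (T ω) (X ω)) 4 P ^ 2 := by
  obtain rfl : w₀ = ipWeight π₀ := funext fun t => funext (hw₀ t)
  have hμ₀1 := memLp_two_regression_apply hX hT hT01 hY2 hμ₀_meas hμ₀ hπ₀ hc0 hc
    (t := 1) (.inr rfl)
  have hμ₀0 := memLp_two_regression_apply hX hT hT01 hY2 hμ₀_meas hμ₀ hπ₀ hc0 hc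
    (t := 0) (.inl rfl)
  change drLoss P X T Y μh wh τh - drLoss P X T Y μh wh (fun x => μ₀ 1 x - μ₀ 0 x) ≤ R at hexc
  rw [drLoss_sub_drLoss_eq hX hT hT01 hY2 hμ₀_meas hμ₀ hπ₀_meas hπ₀ hc0 hc hμh_meas hwh_meas
    hμh_bdd hwh_bdd hμ₀1 hμ₀0 hτh_meas hτh2] at hexc
  have hW : AEStronglyMeasurable (fun ω => wh (T ω) (X ω) - ipWeight π₀ (T ω) (X ω)) P :=
    ((hwh_meas.comp (hT.prodMk hX)).sub
      ((measurable_ipWeight hπ₀_meas).comp (hT.prodMk hX))).aestronglyMeasurable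
  have hδ : AEStronglyMeasurable (fun ω => μh (T ω) (X ω) - μ₀ (T ω) (X ω)) P :=
    ((hμh_meas.comp (hT.prodMk hX)).sub (hμ₀_meas.comp (hT.prodMk hX))).aestronglyMeasurable
  calc _ ≤ 2 * ENNReal.ofReal R
        + 4 * eLpNorm (fun ω => (wh (T ω) (X ω) - ipWeight π₀ (T ω) (X ω))
          * (μh (T ω) (X ω) - μ₀ (T ω) (X ω))) 2 P ^ 2 :=
        eLpNorm_sq_le_of_integral_sq_add_two_mul_le (hτh2.sub (hμ₀1.sub hμ₀0)) (hW.mul hδ) hexc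
    _ ≤ _ := by
        grw [eLpNorm_two_mul_le hW hδ]
        rw [mul_pow, ← mul_assoc]
        gcongr
        norm_num

/-- **Error analysis of the DR-learner.** If
L_DR(τ̂,(μ̂,ω̂)) − L_DR(τ₀,(μ̂,ω̂)) ≤ R with τ₀(X) = μ₀(1,X) − μ₀(0,X), then
‖τ̂ − τ₀‖²₂ ≤ 2R + 8‖ω̂(T,X) − ω₀(T,X)‖²₄·‖μ̂(T,X) − μ₀(T,X)‖²₄. -/
theorem dr_learner_error
    {Ω 𝒳 : Type*} [MeasurableSpace Ω] [MeasurableSpace 𝒳]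
    (P : Measure Ω) [IsProbabilityMeasure P]
    (X : Ω → 𝒳) (T Y : Ω → ℝ)
    (hX : Measurable X) (hT : Measurable T) (hY : Measurable Y)
    (hT01 : ∀ ω, T ω = 0 ∨ T ω = 1) (hY2 : MemLp Y 2 P)
    (μ₀ : ℝ → 𝒳 → ℝ) (hμ₀_meas : Measurable fun p : ℝ × 𝒳 => μ₀ p.1 p.2)
    (hμ₀ : (fun ω => μ₀ (T ω) (X ω))
        =ᵐ[P] P[Y | MeasurableSpace.comap (fun ω => (T ω, X ω)) inferInstance])
    (π₀ : 𝒳 → ℝ) (hπ₀_meas : Measurable π₀)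
    (hπ₀ : (fun ω => π₀ (X ω)) =ᵐ[P] P[T | MeasurableSpace.comap X inferInstance])
    (c : ℝ) (hc0 : 0 < c) (hc2 : c < 1 / 2)
    (hc : ∀ x, c ≤ π₀ x ∧ π₀ x ≤ 1 - c)
    -- the true inverse-propensity weight ω₀(t,x) = (2t−1)/(t·π₀(x) + (1−t)(1−π₀(x)))
    (w₀ : ℝ → 𝒳 → ℝ)
    (hw₀ : ∀ t x, w₀ t x = (2 * t - 1) / (t * π₀ x + (1 - t) * (1 - π₀ x)))
    -- bounded measurable estimates and a square-integrable candidate τ̂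
    (μh wh : ℝ → 𝒳 → ℝ)
    (hμh_meas : Measurable fun p : ℝ × 𝒳 => μh p.1 p.2)
    (hwh_meas : Measurable fun p : ℝ × 𝒳 => wh p.1 p.2)
    (B : ℝ) (hμh_bdd : ∀ t x, |μh t x| ≤ B) (hwh_bdd : ∀ t x, |wh t x| ≤ B)
    (τh : 𝒳 → ℝ) (hτh_meas : Measurable τh) (hτh2 : MemLp (fun ω => τh (X ω)) 2 P)
    -- the excess-risk bound for the DR loss
    (R : ℝ) (hR : 0 ≤ R)
    (hexc : (∫ ω, (wh (T ω) (X ω) * (Y ω - μh (T ω) (X ω))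
            + μh 1 (X ω) - μh 0 (X ω) - τh (X ω)) ^ 2 ∂P)
        - (∫ ω, (wh (T ω) (X ω) * (Y ω - μh (T ω) (X ω))
            + μh 1 (X ω) - μh 0 (X ω) - (μ₀ 1 (X ω) - μ₀ 0 (X ω))) ^ 2 ∂P) ≤ R) :
    eLpNorm (fun ω => τh (X ω) - (μ₀ 1 (X ω) - μ₀ 0 (X ω))) 2 P ^ 2
      ≤ 2 * ENNReal.ofReal R
        + 8 * eLpNorm (fun ω => wh (T ω) (X ω) - w₀ (T ω) (X ω)) 4 P ^ 2 *
            eLpNorm (fun ω => μh (T ω) (X ω) - μ₀ (T ω) (X ω)) 4 P ^ 2 :=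
  dr_learner_error_general P X T Y hX hT hT01 hY2 μ₀ hμ₀_meas hμ₀ π₀ hπ₀_meas hπ₀ c hc0 hc w₀ hw₀ μh
    wh hμh_meas hwh_meas B hμh_bdd hwh_bdd τh hτh_meas hτh2 R hexc
end
end

section
/- The DR pseudo-outcome at the true nuisances is conditionally unbiased for the CATE: E[φ(V;(μ₀,ω₀)) | σ(X)] = μ₀(1,X) − μ₀(0,X) almost surely, where φ(V;(μ₀,ω₀)) = ω₀(T,X)·(Y − μ₀(T,X)) + μ₀(1,X) − μ₀(0,X). -/
/-!
Split the pseudo-outcome as `w₀(T,X)(Y - μ₀(T,X)) + (μ₀(1,X) - μ₀(0,X))`. The weight is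
`σ(T,X)`-measurable and bounded by `1/c`, so it pulls out of `E[· | σ(T,X)]`, leaving
`E[Y | σ(T,X)] - μ₀(T,X) = 0`; by the tower property the residual term vanishes given `σ(X)`.
The second term is `σ(X)`-measurable, so it only remains to see that it is integrable (else the
conditional expectation of the sum is the junk value `0`). This is overlap:
`T · μ₀(1,X) = T · μ₀(T,X)` is integrable and `E[T | X] ≥ c`, which forces
`c · E|μ₀(1,X)| ≤ E[T |μ₀(1,X)|] < ∞`; symmetrically for `1 - T` and `μ₀(0,X)`.
-/

open MeasureTheory
open scoped ENNReal

section CondExp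

variable {Ω : Type*} {m m₀ : MeasurableSpace Ω} {μ : Measure Ω}

theorem lintegral_ofReal_condExp_mul (hm : m ≤ m₀) [SigmaFinite (μ.trim hm)] {f : Ω → ℝ}
    (hf : Integrable f μ) (hf0 : 0 ≤ᵐ[μ] f) {g : Ω → ℝ≥0∞} (hg : Measurable[m] g) :
    ∫⁻ ω, ENNReal.ofReal (μ[f | m] ω) * g ω ∂μ = ∫⁻ ω, ENNReal.ofReal (f ω) * g ω ∂μ := by
  -- the densities `μ[f | m]` and `f` define measures that agree on `m`
  have hdens : (μ.withDensity fun ω => ENNReal.ofReal (μ[f | m] ω)).trim hm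
      = (μ.withDensity fun ω => ENNReal.ofReal (f ω)).trim hm := by
    refine @Measure.ext _ m _ _ fun s hs => ?_
    rw [trim_measurableSet_eq hm hs, trim_measurableSet_eq hm hs,
      withDensity_apply _ (hm s hs), withDensity_apply _ (hm s hs),
      ← ofReal_integral_eq_lintegral_ofReal integrable_condExp.integrableOn
        (ae_restrict_of_ae (condExp_nonneg hf0)),
      ← ofReal_integral_eq_lintegral_ofReal hf.integrableOn (ae_restrict_of_ae hf0),
      setIntegral_condExp hm hf hs]
  calc ∫⁻ ω, ENNReal.ofReal (μ[f | m] ω) * g ω ∂μ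
      = ∫⁻ ω, g ω ∂(μ.withDensity fun ω => ENNReal.ofReal (μ[f | m] ω)) :=
        (lintegral_withDensity_eq_lintegral_mul₀ (by fun_prop)
          (hg.mono hm le_rfl).aemeasurable).symm
    _ = ∫⁻ ω, g ω ∂(μ.withDensity fun ω => ENNReal.ofReal (f ω)) := by
        rw [← lintegral_trim hm hg, ← lintegral_trim hm hg, hdens]
    _ = ∫⁻ ω, ENNReal.ofReal (f ω) * g ω ∂μ :=
        lintegral_withDensity_eq_lintegral_mul₀ (by fun_prop) (hg.mono hm le_rfl).aemeasurable

theorem integrable_of_integrable_mul_of_le_condExp_s15 (hm : m ≤ m₀) [SigmaFinite (μ.trim hm)]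
    {S g : Ω → ℝ} {c : ℝ} (hS : Integrable S μ) (hS0 : 0 ≤ᵐ[μ] S) (hc : 0 < c)
    (hcS : ∀ᵐ ω ∂μ, c ≤ μ[S | m] ω) (hg : StronglyMeasurable[m] g)
    (hSg : Integrable (fun ω => S ω * g ω) μ) :
    Integrable g μ := by
  refine ⟨(hg.mono hm).aestronglyMeasurable, ?_⟩
  have hbound : ENNReal.ofReal c * ∫⁻ ω, ‖g ω‖ₑ ∂μ ≤ ∫⁻ ω, ‖S ω * g ω‖ₑ ∂μ :=
    calc ENNReal.ofReal c * ∫⁻ ω, ‖g ω‖ₑ ∂μ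
        = ∫⁻ ω, ENNReal.ofReal c * ‖g ω‖ₑ ∂μ :=
          (lintegral_const_mul' _ _ ENNReal.ofReal_ne_top).symm
      _ ≤ ∫⁻ ω, ENNReal.ofReal (μ[S | m] ω) * ‖g ω‖ₑ ∂μ := by
        refine lintegral_mono_ae ?_
        filter_upwards [hcS] with ω hω
        gcongr
      _ = ∫⁻ ω, ENNReal.ofReal (S ω) * ‖g ω‖ₑ ∂μ :=
        lintegral_ofReal_condExp_mul hm hS hS0 (measurable_enorm.comp hg.measurable)
      _ = ∫⁻ ω, ‖S ω * g ω‖ₑ ∂μ := by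
        refine lintegral_congr_ae ?_
        filter_upwards [hS0] with ω hω
        rw [enorm_mul, Real.enorm_eq_ofReal hω]
  exact ENNReal.lt_top_of_mul_ne_top_right (hbound.trans_lt hSg.2).ne
    (ENNReal.ofReal_pos.2 hc).ne'

theorem integrable_of_le_condExp_of_eq_where_one [IsFiniteMeasure μ] (hm : m ≤ m₀)
    {S g h : Ω → ℝ} {c : ℝ} (hS : Measurable S) (hS01 : ∀ ω, S ω = 0 ∨ S ω = 1) (hc : 0 < c)
    (hcS : ∀ᵐ ω ∂μ, c ≤ μ[S | m] ω) (hg : StronglyMeasurable[m] g) (hh : Integrable h μ)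
    (hgh : ∀ ω, S ω = 1 → g ω = h ω) :
    Integrable g μ := by
  have hS_le : ∀ ω, ‖S ω‖ ≤ 1 := fun ω => by rcases hS01 ω with hω | hω <;> simp [hω]
  refine integrable_of_integrable_mul_of_le_condExp_s15 hm
    (.of_bound hS.aestronglyMeasurable 1 (ae_of_all _ hS_le))
    (ae_of_all _ fun ω => by rcases hS01 ω with hω | hω <;> simp [hω]) hc hcS hg ?_
  refine (hh.bdd_mul hS.aestronglyMeasurable (ae_of_all _ hS_le)).congr (ae_of_all _ fun ω => ?_)
  rcases hS01 ω with hω | hω <;> simp [hω, hgh]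

theorem condExp_one_sub [IsFiniteMeasure μ] (hm : m ≤ m₀) {f : Ω → ℝ} (hf : Integrable f μ) :
    μ[fun ω => 1 - f ω | m] =ᵐ[μ] fun ω => 1 - μ[f | m] ω := by
  filter_upwards [condExp_sub (integrable_const 1) hf m] with ω hω
  refine hω.trans ?_
  rw [Pi.sub_apply, condExp_const hm]

theorem condExp_mul_sub_eq_zero_of_le {m₁ : MeasurableSpace Ω} (h₁₂ : m₁ ≤ m) (hm : m ≤ m₀)
    [SigmaFinite (μ.trim hm)] [SigmaFinite (μ.trim (h₁₂.trans hm))] {w Y Z : Ω → ℝ}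
    (hw : StronglyMeasurable[m] w) (hY : Integrable Y μ) (hZ : Z =ᵐ[μ] μ[Y | m])
    (hwYZ : Integrable (fun ω => w ω * (Y ω - Z ω)) μ) :
    μ[fun ω => w ω * (Y ω - Z ω) | m₁] =ᵐ[μ] 0 := by
  have hZ_int : Integrable Z μ := integrable_condExp.congr hZ.symm
  have hresid : μ[fun ω => Y ω - Z ω | m] =ᵐ[μ] 0 := by
    filter_upwards [condExp_sub hY hZ_int m, condExp_congr_ae (m := m) hZ,
      condExp_condExp_of_le (μ := μ) (f := Y) le_rfl hm, hZ] with ω h₁ h₂ h₃ h₄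
    change μ[Y - Z | m] ω = 0
    rw [h₁, Pi.sub_apply, h₂, h₃, ← h₄, sub_self]
  have hpull : μ[fun ω => w ω * (Y ω - Z ω) | m] =ᵐ[μ] 0 := by
    filter_upwards [condExp_mul_of_stronglyMeasurable_left hw hwYZ (hY.sub hZ_int), hresid]
      with ω h₁ h₂
    exact h₁.trans (by simp [h₂])
  calc μ[fun ω => w ω * (Y ω - Z ω) | m₁]
      =ᵐ[μ] μ[μ[fun ω => w ω * (Y ω - Z ω) | m] | m₁] := (condExp_condExp_of_le h₁₂ hm).symm
    _ =ᵐ[μ] μ[0 | m₁] := condExp_congr_ae hpull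
    _ = 0 := condExp_zero

end CondExp

theorem abs_ipw_weight_le {t p c : ℝ} (ht : t = 0 ∨ t = 1) (hcp : c ≤ p) (hpc : p ≤ 1 - c)
    (hc : 0 < c) : |(2 * t - 1) / (t * p + (1 - t) * (1 - p))| ≤ c⁻¹ := by
  rcases ht with rfl | rfl
  · rw [show (2 * 0 - 1) / (0 * p + (1 - 0) * (1 - p)) = -(1 - p)⁻¹ by ring, abs_neg,
      abs_of_pos (inv_pos.2 (by linarith))]
    exact inv_anti₀ hc (by linarith)
  · rw [show (2 * 1 - 1) / (1 * p + (1 - 1) * (1 - p)) = p⁻¹ by ring,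
      abs_of_pos (inv_pos.2 (by linarith))]
    exact inv_anti₀ hc hcp

theorem dr_pseudo_outcome_consistency_general
    {Ω 𝒳 : Type*} [MeasurableSpace Ω] [MeasurableSpace 𝒳]
    (P : Measure Ω) [IsProbabilityMeasure P]
    (X : Ω → 𝒳) (T Y : Ω → ℝ)
    (hX : Measurable X) (hT : Measurable T)
    (hT01 : ∀ ω, T ω = 0 ∨ T ω = 1) (hY1 : Integrable Y P)
    (μ₀ : ℝ → 𝒳 → ℝ) (hμ₀_meas : Measurable fun p : ℝ × 𝒳 => μ₀ p.1 p.2)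
    (hμ₀ : (fun ω => μ₀ (T ω) (X ω))
        =ᵐ[P] P[Y | MeasurableSpace.comap (fun ω => (T ω, X ω)) inferInstance])
    (π₀ : 𝒳 → ℝ) (hπ₀_meas : Measurable π₀)
    (hπ₀ : (fun ω => π₀ (X ω)) =ᵐ[P] P[T | MeasurableSpace.comap X inferInstance])
    (c : ℝ) (hc0 : 0 < c)
    (hc : ∀ x, c ≤ π₀ x ∧ π₀ x ≤ 1 - c)
    (w₀ : ℝ → 𝒳 → ℝ)
    (hw₀ : ∀ t x, w₀ t x = (2 * t - 1) / (t * π₀ x + (1 - t) * (1 - π₀ x))) :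
    P[(fun ω => w₀ (T ω) (X ω) * (Y ω - μ₀ (T ω) (X ω)) + μ₀ 1 (X ω) - μ₀ 0 (X ω))
        | MeasurableSpace.comap X inferInstance]
      =ᵐ[P] fun ω => μ₀ 1 (X ω) - μ₀ 0 (X ω) := by
  set mX := MeasurableSpace.comap X ‹MeasurableSpace 𝒳›
  set mTX := MeasurableSpace.comap (fun ω => (T ω, X ω)) (inferInstance : MeasurableSpace (ℝ × 𝒳))
  have hmX : mX ≤ _ := hX.comap_le
  have hmXTX : mX ≤ mTX :=
    (measurable_snd.comp (comap_measurable (fun ω => (T ω, X ω))) : Measurable[mTX] X).comap_le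
  have hμ₀_sm (t : ℝ) : StronglyMeasurable[mX] fun ω => μ₀ t (X ω) :=
    (hμ₀_meas.comp (measurable_const.prodMk (comap_measurable X))).stronglyMeasurable
  have hw_meas : Measurable fun p : ℝ × 𝒳 => w₀ p.1 p.2 := by
    simp_rw [hw₀]
    fun_prop
  have hw_sm : StronglyMeasurable[mTX] fun ω => w₀ (T ω) (X ω) :=
    (hw_meas.comp (comap_measurable _)).stronglyMeasurable
  have hμTX_int : Integrable (fun ω => μ₀ (T ω) (X ω)) P := integrable_condExp.congr hμ₀.symm
  have hR_int : Integrable (fun ω => w₀ (T ω) (X ω) * (Y ω - μ₀ (T ω) (X ω))) P :=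
    (hY1.sub hμTX_int).bdd_mul (hw_sm.mono (hT.prodMk hX).comap_le).aestronglyMeasurable
      (ae_of_all _ fun ω => by
        rw [hw₀, Real.norm_eq_abs]; exact abs_ipw_weight_le (hT01 ω) (hc _).1 (hc _).2 hc0)
  have hR : P[fun ω => w₀ (T ω) (X ω) * (Y ω - μ₀ (T ω) (X ω)) | mX] =ᵐ[P] 0 :=
    condExp_mul_sub_eq_zero_of_le hmXTX (hT.prodMk hX).comap_le hw_sm hY1 hμ₀ hR_int
  have hT_int : Integrable T P := .of_bound hT.aestronglyMeasurable 1 (ae_of_all _ fun ω => by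
    rcases hT01 ω with h | h <;> simp [h])
  have hμ₁_int : Integrable (fun ω => μ₀ 1 (X ω)) P :=
    integrable_of_le_condExp_of_eq_where_one hmX hT hT01 hc0
      (by filter_upwards [hπ₀] with ω hω; exact hω ▸ (hc _).1) (hμ₀_sm 1) hμTX_int
      fun ω h => by rw [h]
  have hμ₀_int : Integrable (fun ω => μ₀ 0 (X ω)) P :=
    integrable_of_le_condExp_of_eq_where_one (S := fun ω => 1 - T ω) hmX (hT.const_sub 1)
      (fun ω => by rcases hT01 ω with h | h <;> simp [h]) hc0
      (by
        filter_upwards [hπ₀, condExp_one_sub hmX hT_int] with ω hω h1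
        rw [h1, ← hω]
        linarith [(hc (X ω)).2])
      (hμ₀_sm 0) hμTX_int fun ω h => by rw [show T ω = 0 by linarith]
  have hG_int := hμ₁_int.sub hμ₀_int
  calc P[fun ω => w₀ (T ω) (X ω) * (Y ω - μ₀ (T ω) (X ω)) + μ₀ 1 (X ω) - μ₀ 0 (X ω) | mX]
      = P[(fun ω => w₀ (T ω) (X ω) * (Y ω - μ₀ (T ω) (X ω)))
          + fun ω => μ₀ 1 (X ω) - μ₀ 0 (X ω) | mX] := by
        congr 1; ext ω; simp only [Pi.add_apply]; ring
    _ =ᵐ[P] 0 + fun ω => μ₀ 1 (X ω) - μ₀ 0 (X ω) :=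
        (condExp_add hR_int hG_int mX).trans (hR.add
          (condExp_of_stronglyMeasurable hmX ((hμ₀_sm 1).sub (hμ₀_sm 0)) hG_int).eventuallyEq)
    _ = fun ω => μ₀ 1 (X ω) - μ₀ 0 (X ω) := zero_add _

/-- **Conditional unbiasedness of the DR pseudo-outcome.** At the true
nuisances, E[φ(V;(μ₀,ω₀)) | σ(X)] = μ₀(1,X) − μ₀(0,X) almost surely. -/
theorem dr_pseudo_outcome_consistency
    {Ω 𝒳 : Type*} [MeasurableSpace Ω] [MeasurableSpace 𝒳]
    (P : Measure Ω) [IsProbabilityMeasure P]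
    (X : Ω → 𝒳) (T Y : Ω → ℝ)
    (hX : Measurable X) (hT : Measurable T) (hY : Measurable Y)
    (hT01 : ∀ ω, T ω = 0 ∨ T ω = 1) (hY1 : Integrable Y P)
    (μ₀ : ℝ → 𝒳 → ℝ) (hμ₀_meas : Measurable fun p : ℝ × 𝒳 => μ₀ p.1 p.2)
    (hμ₀ : (fun ω => μ₀ (T ω) (X ω))
        =ᵐ[P] P[Y | MeasurableSpace.comap (fun ω => (T ω, X ω)) inferInstance])
    (π₀ : 𝒳 → ℝ) (hπ₀_meas : Measurable π₀)
    (hπ₀ : (fun ω => π₀ (X ω)) =ᵐ[P] P[T | MeasurableSpace.comap X inferInstance])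
    (c : ℝ) (hc0 : 0 < c) (hc2 : c < 1 / 2)
    (hc : ∀ x, c ≤ π₀ x ∧ π₀ x ≤ 1 - c)
    (w₀ : ℝ → 𝒳 → ℝ)
    (hw₀ : ∀ t x, w₀ t x = (2 * t - 1) / (t * π₀ x + (1 - t) * (1 - π₀ x))) :
    P[(fun ω => w₀ (T ω) (X ω) * (Y ω - μ₀ (T ω) (X ω)) + μ₀ 1 (X ω) - μ₀ 0 (X ω))
        | MeasurableSpace.comap X inferInstance]
      =ᵐ[P] fun ω => μ₀ 1 (X ω) - μ₀ 0 (X ω) :=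
  dr_pseudo_outcome_consistency_general P X T Y hX hT hT01 hY1 μ₀ hμ₀_meas hμ₀ π₀ hπ₀_meas hπ₀ c hc0
    hc w₀ hw₀
end
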